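/- arXiv:0906.5308 — 12 statements merged into one kernel-verified Lean document; each statement's English description precedes it below -/
import Mathlib

section
/- Let w:(0,∞)→(0,∞) be nonincreasing, right-continuous and integrable, and let h(t)=∫_t^∞ w(s) ds and g(s)=inf_{t>0} max(t, s·h(t)). Then for every s>0 there exists a unique t>0 with t = s·h(t); the infimum defining g(s) is attained exactly at this t, so that g(s)=t=s·h(t). Consequently g is a continuous increasing bijection of (0,∞) onto (0,∞) and h(t)/t = 1/g⁻¹(t) for every t>0, where g⁻¹ denotes the inverse function of g. -/
open MeasureTheory Set

/-!
The tail integral `h` of a positive integrable function is continuous and strictly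
decreasing on `(0, ∞)`. Hence `t ↦ s·h(t) - t` crosses zero exactly once, at some `tₛ`,
and for `t ≠ tₛ` one of `t`, `s·h(t)` exceeds `tₛ`, so the infimum `g(s)` is attained
only at `tₛ`. Since `s = tₛ / h(tₛ)`, `g` is the inverse of the increasing bijection
`t ↦ t / h(t)` of `(0, ∞)`.
-/

section TailIntegral

variable {f : ℝ → ℝ} {a : ℝ}

theorem strictAntiOn_integral_Ioi (hf : IntegrableOn f (Ioi a)) (hpos : ∀ t ∈ Ioi a, 0 < f t) :
    StrictAntiOn (fun b ↦ ∫ s in Ioi b, f s) (Ici a) := by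
  intro b hb c _ hbc
  have hfb : IntegrableOn f (Ioi b) := hf.mono_set (Ioi_subset_Ioi hb)
  rw [← sub_pos, intervalIntegral.integral_Ioi_sub_Ioi hfb hbc.le]
  refine intervalIntegral.intervalIntegral_pos_of_pos_on ?_ (fun t ht ↦ ?_) hbc
  · exact (intervalIntegrable_iff_integrableOn_Ioc_of_le hbc.le).2
      (hfb.mono_set Ioc_subset_Ioi_self)
  · exact hpos t (lt_of_le_of_lt hb ht.1)

theorem integral_Ioi_pos (hf : IntegrableOn f (Ioi a)) (hpos : ∀ t ∈ Ioi a, 0 < f t) :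
    0 < ∫ s in Ioi a, f s := by
  have hnonneg : 0 ≤ ∫ s in Ioi (a + 1), f s :=
    setIntegral_nonneg measurableSet_Ioi fun t ht ↦ (hpos t ((lt_add_one a).trans ht)).le
  exact hnonneg.trans_lt <|
    strictAntiOn_integral_Ioi hf hpos (mem_Ici.2 le_rfl) (mem_Ici.2 (by linarith)) (by linarith)

end TailIntegral

section FixedPoint

variable {h : ℝ → ℝ} {s t : ℝ}

theorem exists_pos_eq_mul (hcont : ContinuousOn h (Ioi 0)) (hanti : AntitoneOn h (Ioi 0))
    (hpos : 0 < h 1) (hs : 0 < s) : ∃ t > 0, t = s * h t := by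
  have hc : 0 < s * h 1 := mul_pos hs hpos
  set t₀ := min 1 (s * h 1 / 2)
  set T := 1 + s * h 1
  have ht₀ : 0 < t₀ := lt_min one_pos (half_pos hc)
  have ht₀T : t₀ ≤ T := (min_le_left _ _).trans (by linarith)
  have hsub : Icc t₀ T ⊆ Ioi 0 := fun t ht ↦ ht₀.trans_le ht.1
  have hleft : 0 ≤ s * h t₀ - t₀ := by
    have : h 1 ≤ h t₀ := hanti ht₀ (mem_Ioi.2 one_pos) (min_le_left _ _)
    nlinarith [min_le_right 1 (s * h 1 / 2)]
  have hright : s * h T - T ≤ 0 := by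
    have : h T ≤ h 1 := hanti (mem_Ioi.2 one_pos) (hsub ⟨ht₀T, le_rfl⟩) (by linarith)
    nlinarith
  obtain ⟨t, ht, hzero⟩ := intermediate_value_Icc' ht₀T
    ((continuousOn_const.mul (hcont.mono hsub)).sub continuousOn_id) ⟨hright, hleft⟩
  exact ⟨t, hsub ht, by linarith [show s * h t - t = 0 from hzero]⟩

theorem eq_of_eq_mul_of_eq_mul (hanti : StrictAntiOn h (Ioi 0)) (hs : 0 < s) {t' : ℝ}
    (ht : 0 < t) (ht' : 0 < t') (hst : t = s * h t) (hst' : t' = s * h t') : t' = t := by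
  by_contra hne
  rcases lt_or_gt_of_ne hne with hlt | hlt
  · nlinarith [hanti ht' ht hlt]
  · nlinarith [hanti ht ht' hlt]

theorem lt_max_of_eq_mul (hanti : StrictAntiOn h (Ioi 0)) (hs : 0 < s) {t' : ℝ}
    (ht' : 0 < t') (hst : t = s * h t) (hne : t' ≠ t) : t < max t' (s * h t') := by
  rcases lt_or_gt_of_ne hne with hlt | hlt
  · exact lt_max_of_lt_right (by nlinarith [hanti ht' (ht'.trans hlt) hlt])
  · exact lt_max_of_lt_left hlt

noncomputable def infMax (h : ℝ → ℝ) (s : ℝ) : ℝ :=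
  ⨅ t : Ioi (0:ℝ), max (t : ℝ) (s * h t)

theorem infMax_eq_of_eq_mul (hanti : StrictAntiOn h (Ioi 0)) (hs : 0 < s) (ht : 0 < t)
    (hst : t = s * h t) : infMax h s = t := by
  have hle : ∀ t' : Ioi (0:ℝ), t ≤ max (t' : ℝ) (s * h t') := fun ⟨t', ht'⟩ ↦ by
    rcases eq_or_ne t' t with rfl | hne
    · exact le_max_left _ _
    · exact (lt_max_of_eq_mul hanti hs ht' hst hne).le
  refine le_antisymm ?_ (le_ciInf hle)
  exact ciInf_le_of_le ⟨t, forall_mem_range.2 hle⟩ ⟨t, ht⟩ (by simp [← hst])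

theorem infMax_div_self (hanti : StrictAntiOn h (Ioi 0)) (hpos : ∀ t ∈ Ioi 0, 0 < h t)
    (ht : 0 < t) : infMax h (t / h t) = t :=
  infMax_eq_of_eq_mul hanti (div_pos ht (hpos t ht)) ht (div_mul_cancel₀ t (hpos t ht).ne').symm

theorem exists_infMax_eq_mul (hcont : ContinuousOn h (Ioi 0)) (hanti : StrictAntiOn h (Ioi 0))
    (hpos : ∀ t ∈ Ioi 0, 0 < h t) (hs : 0 < s) : ∃ t > 0, t = s * h t ∧ infMax h s = t := by
  obtain ⟨t, ht, hst⟩ :=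
    exists_pos_eq_mul hcont hanti.antitoneOn (hpos 1 (mem_Ioi.2 one_pos)) hs
  exact ⟨t, ht, hst, infMax_eq_of_eq_mul hanti hs ht hst⟩

theorem strictMonoOn_infMax (hcont : ContinuousOn h (Ioi 0)) (hanti : StrictAntiOn h (Ioi 0))
    (hpos : ∀ t ∈ Ioi 0, 0 < h t) : StrictMonoOn (infMax h) (Ioi 0) := by
  intro s₁ hs₁ s₂ hs₂ hlt
  obtain ⟨t₁, ht₁, hst₁, hg₁⟩ := exists_infMax_eq_mul hcont hanti hpos hs₁
  obtain ⟨t₂, ht₂, hst₂, hg₂⟩ := exists_infMax_eq_mul hcont hanti hpos hs₂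
  rw [hg₁, hg₂]
  by_contra! hle
  have hs₁ : 0 < s₁ := hs₁
  refine hle.not_gt ?_
  calc t₁ = s₁ * h t₁ := hst₁
    _ ≤ s₁ * h t₂ := mul_le_mul_of_nonneg_left (hanti.antitoneOn ht₂ ht₁ hle) hs₁.le
    _ < s₂ * h t₂ := mul_lt_mul_of_pos_right hlt (hpos t₂ ht₂)
    _ = t₂ := hst₂.symm

theorem bijOn_infMax (hcont : ContinuousOn h (Ioi 0)) (hanti : StrictAntiOn h (Ioi 0))
    (hpos : ∀ t ∈ Ioi 0, 0 < h t) : BijOn (infMax h) (Ioi 0) (Ioi 0) := by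
  refine ⟨fun s hs ↦ ?_, (strictMonoOn_infMax hcont hanti hpos).injOn, fun t ht ↦
    ⟨t / h t, div_pos ht (hpos t ht), infMax_div_self hanti hpos ht⟩⟩
  obtain ⟨t, ht, -, hgs⟩ := exists_infMax_eq_mul hcont hanti hpos hs
  rwa [mem_Ioi, hgs]

theorem continuousOn_infMax (hcont : ContinuousOn h (Ioi 0)) (hanti : StrictAntiOn h (Ioi 0))
    (hpos : ∀ t ∈ Ioi 0, 0 < h t) : ContinuousOn (infMax h) (Ioi 0) := fun s hs ↦ by
  refine ((strictMonoOn_infMax hcont hanti hpos).continuousAt_of_image_mem_nhds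
    (isOpen_Ioi.mem_nhds hs) ?_).continuousWithinAt
  rw [(bijOn_infMax hcont hanti hpos).image_eq]
  exact isOpen_Ioi.mem_nhds ((bijOn_infMax hcont hanti hpos).mapsTo hs)

end FixedPoint

theorem stmt_1_general
    (w h g : ℝ → ℝ)
    (hw_pos : ∀ t ∈ Ioi (0:ℝ), 0 < w t)
    (hw_int : IntegrableOn w (Ioi 0))
    (hh : ∀ t, h t = ∫ s in Ioi t, w s)
    (hg : ∀ s, g s = ⨅ t : Ioi (0:ℝ), max (t : ℝ) (s * h (t : ℝ))) :
    (∀ s ∈ Ioi (0:ℝ), ∃ t ∈ Ioi (0:ℝ),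
        t = s * h t ∧
        (∀ t' ∈ Ioi (0:ℝ), t' = s * h t' → t' = t) ∧
        g s = max t (s * h t) ∧
        (∀ t' ∈ Ioi (0:ℝ), t' ≠ t → g s < max t' (s * h t'))) ∧
    StrictMonoOn g (Ioi 0) ∧ ContinuousOn g (Ioi 0) ∧ BijOn g (Ioi 0) (Ioi 0) ∧
    (∀ ginv : ℝ → ℝ, (∀ s ∈ Ioi (0:ℝ), ginv (g s) = s) →
        ∀ t ∈ Ioi (0:ℝ), h t / t = 1 / ginv t) := by
  obtain rfl : g = infMax h := funext hg
  obtain rfl : h = fun t ↦ ∫ s in Ioi t, w s := funext hh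
  have hcont := hw_int.continuousOn_Ici_primitive_Ioi.mono (Ioi_subset_Ici_self (a := 0))
  have hanti := (strictAntiOn_integral_Ioi hw_int hw_pos).mono (Ioi_subset_Ici_self (a := 0))
  have hpos : ∀ t ∈ Ioi (0:ℝ), 0 < ∫ s in Ioi t, w s := fun t ht ↦
    integral_Ioi_pos (hw_int.mono_set (Ioi_subset_Ioi (le_of_lt ht)))
      fun x hx ↦ hw_pos x (mem_Ioi.2 (ht.trans hx))
  refine ⟨fun s hs ↦ ?_, strictMonoOn_infMax hcont hanti hpos,
    continuousOn_infMax hcont hanti hpos, bijOn_infMax hcont hanti hpos,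
    fun ginv hginv t ht ↦ ?_⟩
  · obtain ⟨t, ht, hst, hgs⟩ := exists_infMax_eq_mul hcont hanti hpos hs
    refine ⟨t, ht, hst, fun t' ht' hst' ↦ eq_of_eq_mul_of_eq_mul hanti hs ht ht' hst hst', ?_,
      fun t' ht' hne ↦ hgs ▸ lt_max_of_eq_mul hanti hs ht' hst hne⟩
    rw [hgs, ← hst, max_self]
  · have := hginv _ (div_pos ht (hpos t ht))
    rw [infMax_div_self hanti hpos ht] at this
    rw [this, one_div_div]

/-- Lemma 3.3 (iii) and identity (3.3): for every `s > 0` there is a unique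
`t > 0` with `t = s·h(t)`; the infimum defining `g(s)` is attained exactly
there, `g` is a continuous increasing bijection of `(0,∞)` onto itself, and
`h(t)/t = 1/g⁻¹(t)` for every `t > 0`. -/
theorem stmt_1
    (w h g : ℝ → ℝ)
    (hw_pos : ∀ t ∈ Ioi (0:ℝ), 0 < w t)
    (hw_anti : AntitoneOn w (Ioi 0))
    (hw_rc : ∀ t ∈ Ioi (0:ℝ), ContinuousWithinAt w (Ici t) t)
    (hw_int : IntegrableOn w (Ioi 0))
    (hh : ∀ t, h t = ∫ s in Ioi t, w s)
    (hg : ∀ s, g s = ⨅ t : Ioi (0:ℝ), max (t : ℝ) (s * h (t : ℝ))) :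
    (∀ s ∈ Ioi (0:ℝ), ∃ t ∈ Ioi (0:ℝ),
        t = s * h t ∧
        (∀ t' ∈ Ioi (0:ℝ), t' = s * h t' → t' = t) ∧
        g s = max t (s * h t) ∧
        (∀ t' ∈ Ioi (0:ℝ), t' ≠ t → g s < max t' (s * h t'))) ∧
    StrictMonoOn g (Ioi 0) ∧ ContinuousOn g (Ioi 0) ∧ BijOn g (Ioi 0) (Ioi 0) ∧
    (∀ ginv : ℝ → ℝ, (∀ s ∈ Ioi (0:ℝ), ginv (g s) = s) →
        ∀ t ∈ Ioi (0:ℝ), h t / t = 1 / ginv t) :=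
  stmt_1_general w h g hw_pos hw_int hh hg
end

section
/- Let w:(0,∞)→(0,∞) be nonincreasing, right-continuous and integrable, with h(t)=∫_t^∞ w(s) ds. Assume w satisfies condition (3.6) with constants c₁,d₁>0 and α₁>1. Then d₁⁻¹·t·w(t) ≤ h(t) ≤ (c₁(α₁−1))⁻¹·t·w(t) for all t ≥ 1, and consequently h satisfies condition (3.7) with constants c₂,d₂,α₂>0 depending only on c₁,d₁,α₁ (one may take α₂ = α₁−1). -/
/-!
Since `w` is nonincreasing, `h t ≥ ∫_t^{2t} w ≥ t w(2t) ≥ d₁⁻¹ t w(t)`. Conversely, (3.6) gives the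
power decay `w s ≤ c₁⁻¹ w(t) (s/t)^{-α₁}` for `s ≥ t`, and integrating it over `(t, ∞)` yields
`h t ≤ (c₁(α₁-1))⁻¹ t w(t)`. Thus `h t` is comparable to `t w(t)`, and both halves of (3.7) for `h`
follow from the corresponding halves of (3.6) for `w`, the extra factor `s/t` lowering the
exponent from `α₁` to `α₁ - 1`.
-/

open MeasureTheory Set

lemma mul_le_setIntegral_Ioi_of_antitoneOn {w : ℝ → ℝ} {a b : ℝ} (hab : a < b)
    (hanti : AntitoneOn w (Ioc a b)) (hint : IntegrableOn w (Ioi a))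
    (hnonneg : ∀ s ∈ Ioi a, 0 ≤ w s) :
    (b - a) * w b ≤ ∫ s in Ioi a, w s :=
  calc (b - a) * w b = ∫ _ in Ioc a b, w b := by
        rw [setIntegral_const, measureReal_def, Real.volume_Ioc,
          ENNReal.toReal_ofReal (sub_nonneg.2 hab.le), smul_eq_mul]
    _ ≤ ∫ s in Ioc a b, w s :=
        setIntegral_mono_on (integrableOn_const measure_Ioc_lt_top.ne)
          (hint.mono_set Ioc_subset_Ioi_self) measurableSet_Ioc
          fun _ hs => hanti hs (right_mem_Ioc.2 hab) hs.2
    _ ≤ ∫ s in Ioi a, w s :=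
        setIntegral_mono_set hint
          ((ae_restrict_iff' measurableSet_Ioi).2 (Filter.Eventually.of_forall hnonneg))
          Ioc_subset_Ioi_self.eventuallyLE

lemma inv_mul_le_setIntegral_Ioi_of_doubling {w : ℝ → ℝ} {d t : ℝ} (ht : 0 < t) (hd : 0 < d)
    (hanti : AntitoneOn w (Ioc t (2 * t))) (hint : IntegrableOn w (Ioi t))
    (hpos : ∀ s ∈ Ioi t, 0 < w s) (hdouble : w t / w (2 * t) ≤ d) :
    d⁻¹ * (t * w t) ≤ ∫ s in Ioi t, w s := by
  have hw2t : 0 < w (2 * t) := hpos _ (by rw [mem_Ioi]; linarith)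
  have hdouble' : d⁻¹ * w t ≤ w (2 * t) := by
    rw [inv_mul_le_iff₀ hd]
    exact (div_le_iff₀ hw2t).1 hdouble
  calc d⁻¹ * (t * w t) = t * (d⁻¹ * w t) := by ring
    _ ≤ t * w (2 * t) := mul_le_mul_of_nonneg_left hdouble' ht.le
    _ = (2 * t - t) * w (2 * t) := by ring
    _ ≤ ∫ s in Ioi t, w s :=
        mul_le_setIntegral_Ioi_of_antitoneOn (by linarith) hanti hint fun s hs => (hpos s hs).le

lemma setIntegral_Ioi_le_of_le_mul_rpow_neg {w : ℝ → ℝ} {C α t : ℝ} (ht : 0 < t) (hα : 1 < α)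
    (hint : IntegrableOn w (Ioi t)) (hle : ∀ s ∈ Ioi t, w s ≤ C * s ^ (-α)) :
    ∫ s in Ioi t, w s ≤ C * t ^ (1 - α) / (α - 1) :=
  calc ∫ s in Ioi t, w s ≤ ∫ s in Ioi t, C * s ^ (-α) :=
        setIntegral_mono_on hint
          ((integrableOn_Ioi_rpow_of_lt (by linarith) ht).const_mul C) measurableSet_Ioi hle
    _ = C * t ^ (1 - α) / (α - 1) := by
        rw [integral_const_mul, integral_Ioi_rpow_of_lt (by linarith) ht,
          show -α + 1 = 1 - α by ring, neg_div, ← div_neg, neg_sub]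
        ring

lemma setIntegral_Ioi_le_of_rpow_decay {w : ℝ → ℝ} {c α t : ℝ} (ht : 0 < t) (hc : 0 < c)
    (hα : 1 < α) (hint : IntegrableOn w (Ioi t)) (hpos : ∀ s ∈ Ioi t, 0 < w s)
    (hdecay : ∀ s ∈ Ioi t, c * (s / t) ^ α ≤ w t / w s) :
    ∫ s in Ioi t, w s ≤ (c * (α - 1))⁻¹ * (t * w t) := by
  have hle : ∀ s ∈ Ioi t, w s ≤ w t * t ^ α / c * s ^ (-α) := by
    intro s hs
    have hs0 : 0 < s := ht.trans hs
    calc w s ≤ w t / (c * (s / t) ^ α) := by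
          rw [le_div_iff₀ (by positivity), mul_comm]
          exact (le_div_iff₀ (hpos s hs)).1 (hdecay s hs)
      _ = w t * t ^ α / c * s ^ (-α) := by
          rw [Real.rpow_neg hs0.le, Real.div_rpow hs0.le ht.le]
          field_simp
  have hpow : t ^ α * t ^ (1 - α) = t := by
    rw [← Real.rpow_add ht, add_sub_cancel, Real.rpow_one]
  calc ∫ s in Ioi t, w s ≤ w t * t ^ α / c * t ^ (1 - α) / (α - 1) :=
        setIntegral_Ioi_le_of_le_mul_rpow_neg ht hα hint hle
    _ = w t / c * (t ^ α * t ^ (1 - α)) / (α - 1) := by ring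
    _ = (c * (α - 1))⁻¹ * (t * w t) := by
        rw [hpow]
        field_simp

section Comparable

variable {w h : ℝ → ℝ} {a b : ℝ}

lemma mul_rpow_sub_one_le_div_of_comparable {c α s t : ℝ} (ha : 0 < a) (hb : 0 < b)
    (hs : 0 < s) (hst : s ≤ t) (hws : 0 < w s) (hwt : 0 < w t)
    (hlow : a * (s * w s) ≤ h s) (hup : h t ≤ b * (t * w t)) (hht : 0 < h t)
    (hdecay : c * (t / s) ^ α ≤ w s / w t) :
    c * a / b * (t / s) ^ (α - 1) ≤ h s / h t := by
  have ht : 0 < t := hs.trans_le hst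
  have hsplit : (t / s) ^ α = (t / s) ^ (α - 1) * (t / s) := by
    rw [← Real.rpow_add_one (by positivity), sub_add_cancel]
  have hdecay' : c * (t / s) ^ α * w t ≤ w s := (le_div_iff₀ hwt).1 hdecay
  calc c * a / b * (t / s) ^ (α - 1) = a * (s * (c * (t / s) ^ α * w t)) / (b * (t * w t)) := by
        rw [hsplit]
        field_simp
    _ ≤ a * (s * w s) / (b * (t * w t)) := by gcongr
    _ ≤ h s / h t := div_le_div₀ ((by positivity : 0 ≤ a * (s * w s)).trans hlow) hlow hht hup

lemma div_two_mul_le_of_comparable {d s : ℝ} (ha : 0 < a) (hb : 0 < b) (hs : 0 < s)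
    (hws : 0 < w s) (hw2s : 0 < w (2 * s))
    (hup : h s ≤ b * (s * w s)) (hlow : a * (2 * s * w (2 * s)) ≤ h (2 * s))
    (hdouble : w s / w (2 * s) ≤ d) :
    h s / h (2 * s) ≤ b * d / (2 * a) :=
  calc h s / h (2 * s) ≤ b * (s * w s) / (a * (2 * s * w (2 * s))) :=
        div_le_div₀ (by positivity) hup (by positivity) hlow
    _ = b / (2 * a) * (w s / w (2 * s)) := by
        field_simp
    _ ≤ b * d / (2 * a) := by
        rw [mul_div_right_comm]
        gcongr

end Comparable

theorem stmt_2_general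
    (w h : ℝ → ℝ) (c₁ d₁ α₁ : ℝ)
    (hw_pos : ∀ t ∈ Ioi (0:ℝ), 0 < w t)
    (hw_anti : AntitoneOn w (Ioi 0))
    (hw_int : IntegrableOn w (Ioi 0))
    (hh : ∀ t, h t = ∫ s in Ioi t, w s)
    (hc₁ : 0 < c₁) (hd₁ : 0 < d₁) (hα₁ : 1 < α₁)
    (h36a : ∀ s t : ℝ, 1 ≤ s → s ≤ t → c₁ * (t / s) ^ α₁ ≤ w s / w t)
    (h36b : ∀ s : ℝ, 1 ≤ s → w s / w (2 * s) ≤ d₁) :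
    (∀ t : ℝ, 1 ≤ t → d₁⁻¹ * (t * w t) ≤ h t ∧ h t ≤ (c₁ * (α₁ - 1))⁻¹ * (t * w t)) ∧
    (∃ c₂ d₂ : ℝ, 0 < c₂ ∧ 0 < d₂ ∧
      (∀ s t : ℝ, 1 ≤ s → s ≤ t → c₂ * (t / s) ^ (α₁ - 1) ≤ h s / h t) ∧
      (∀ s : ℝ, 1 ≤ s → h s / h (2 * s) ≤ d₂)) := by
  have hw_pos' : ∀ t, 0 < t → ∀ s ∈ Ioi t, 0 < w s := fun t ht s hs => hw_pos s (ht.trans hs)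
  have hbounds : ∀ t : ℝ, 1 ≤ t →
      d₁⁻¹ * (t * w t) ≤ h t ∧ h t ≤ (c₁ * (α₁ - 1))⁻¹ * (t * w t) := by
    intro t ht
    have ht0 : 0 < t := by linarith
    have hint : IntegrableOn w (Ioi t) := hw_int.mono_set (Ioi_subset_Ioi ht0.le)
    rw [hh]
    exact ⟨inv_mul_le_setIntegral_Ioi_of_doubling ht0 hd₁
        (hw_anti.mono fun s hs => ht0.trans hs.1) hint (hw_pos' t ht0) (h36b t ht),
      setIntegral_Ioi_le_of_rpow_decay ht0 hc₁ hα₁ hint (hw_pos' t ht0)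
        fun s hs => h36a t s ht (le_of_lt hs)⟩
  have hw1 : ∀ t : ℝ, 1 ≤ t → 0 < w t := fun t ht => hw_pos t (by rw [mem_Ioi]; linarith)
  have hh1 : ∀ t : ℝ, 1 ≤ t → 0 < h t := fun t ht =>
    (mul_pos (inv_pos.2 hd₁) (mul_pos (by linarith) (hw1 t ht))).trans_le (hbounds t ht).1
  have hB : 0 < (c₁ * (α₁ - 1))⁻¹ := inv_pos.2 (mul_pos hc₁ (sub_pos.2 hα₁))
  refine ⟨hbounds, c₁ * d₁⁻¹ / (c₁ * (α₁ - 1))⁻¹, (c₁ * (α₁ - 1))⁻¹ * d₁ / (2 * d₁⁻¹),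
    by positivity, by positivity, fun s t hs hst => ?_, fun s hs => ?_⟩
  · have ht : 1 ≤ t := hs.trans hst
    exact mul_rpow_sub_one_le_div_of_comparable (inv_pos.2 hd₁) hB (by linarith) hst
      (hw1 s hs) (hw1 t ht) (hbounds s hs).1 (hbounds t ht).2 (hh1 t ht) (h36a s t hs hst)
  · have h2s : 1 ≤ 2 * s := by linarith
    exact div_two_mul_le_of_comparable (inv_pos.2 hd₁) hB (by linarith) (hw1 s hs) (hw1 _ h2s)
      (hbounds s hs).2 (hbounds _ h2s).1 (h36b s hs)

/-- Lemma 3.5, implication (i) ⇒ (ii) with the quantitative bounds from the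
proof: if `w` satisfies condition (3.6) with constants `c₁, d₁, α₁` (`α₁ > 1`),
then `d₁⁻¹ t w(t) ≤ h(t) ≤ (c₁(α₁-1))⁻¹ t w(t)` for `t ≥ 1`, and `h` satisfies
condition (3.7) with exponent `α₂ = α₁ - 1`. -/
theorem stmt_2
    (w h : ℝ → ℝ) (c₁ d₁ α₁ : ℝ)
    (hw_pos : ∀ t ∈ Ioi (0:ℝ), 0 < w t)
    (hw_anti : AntitoneOn w (Ioi 0))
    (hw_rc : ∀ t ∈ Ioi (0:ℝ), ContinuousWithinAt w (Ici t) t)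
    (hw_int : IntegrableOn w (Ioi 0))
    (hh : ∀ t, h t = ∫ s in Ioi t, w s)
    (hc₁ : 0 < c₁) (hd₁ : 0 < d₁) (hα₁ : 1 < α₁)
    (h36a : ∀ s t : ℝ, 1 ≤ s → s ≤ t → c₁ * (t / s) ^ α₁ ≤ w s / w t)
    (h36b : ∀ s : ℝ, 1 ≤ s → w s / w (2 * s) ≤ d₁) :
    (∀ t : ℝ, 1 ≤ t → d₁⁻¹ * (t * w t) ≤ h t ∧ h t ≤ (c₁ * (α₁ - 1))⁻¹ * (t * w t)) ∧
    (∃ c₂ d₂ : ℝ, 0 < c₂ ∧ 0 < d₂ ∧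
      (∀ s t : ℝ, 1 ≤ s → s ≤ t → c₂ * (t / s) ^ (α₁ - 1) ≤ h s / h t) ∧
      (∀ s : ℝ, 1 ≤ s → h s / h (2 * s) ≤ d₂)) :=
  stmt_2_general w h c₁ d₁ α₁ hw_pos hw_anti hw_int hh hc₁ hd₁ hα₁ h36a h36b
end

section
/- Let w:(0,∞)→(0,∞) be nonincreasing, right-continuous and integrable, and let h(t)=∫_t^∞ w(s) ds and g(s)=inf_{t>0} max(t, s·h(t)). Assume h satisfies condition (3.7) with constants c₂,d₂,α₂>0. Then there exist constants c',d'>0 depending only on c₂,d₂,α₂ such that h(t)/t ≤ d'·w(t) for all t ≥ 1 and c'·w(t) ≤ h(t)/t for all t ≥ 2; since h(t)/t = 1/g⁻¹(t), it follows that c'·w(t) ≤ 1/g⁻¹(t) ≤ d'·w(t) for all t ≥ 2. Moreover w satisfies condition (3.6) with exponent α₁ = 1+α₂ and constants depending only on c₂,d₂,α₂, for all t ≥ s ≥ 2. -/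
/-!
Write `h` for the tail integral of `w`. Comparing `w` with its values at the endpoints of an
interval gives `(b - a) w(b) ≤ h(a) - h(b) ≤ (b - a) w(a)`. The decay half of (3.7) provides a
fixed factor `L` with `h(L t) ≤ h(t) / 2`, so `h(t)` is at most `2 (L - 1) t w(t)`; the doubling
half gives `t w(t) / 2 ≤ h(t / 2) ≤ d₂ h(t)`. Hence `h(t) / t ≍ w(t)`, and both parts of (3.6)
for `w` follow from (3.7) for `h`, the extra factor `t / s` raising the exponent to `1 + α₂`.
Finally, the infimum defining `g` is attained where `t = s h(t)`, so `g⁻¹(t) = t / h(t)`.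
-/

open MeasureTheory Set Filter

noncomputable def tail (w : ℝ → ℝ) (t : ℝ) : ℝ := ∫ s in Ioi t, w s

section IntervalBounds

variable {w : ℝ → ℝ} {a b : ℝ}

theorem tail_eq_integral_Ioc_add (hint : IntegrableOn w (Ioi a)) (hab : a ≤ b) :
    tail w a = (∫ s in Ioc a b, w s) + tail w b := by
  rw [tail, tail, ← setIntegral_union (Ioc_disjoint_Ioi le_rfl) measurableSet_Ioi
    (hint.mono_set Ioc_subset_Ioi_self) (hint.mono_set (Ioi_subset_Ioi hab)),
    Ioc_union_Ioi_eq_Ioi hab]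

theorem integral_Ioc_le_of_antitoneOn (hanti : AntitoneOn w (Icc a b)) (hab : a ≤ b) :
    ∫ s in Ioc a b, w s ≤ (b - a) * w a := by
  have hint : IntegrableOn w (Ioc a b) :=
    (hanti.integrableOn_isCompact isCompact_Icc).mono_set Ioc_subset_Icc_self
  calc ∫ s in Ioc a b, w s ≤ ∫ _ in Ioc a b, w a :=
        setIntegral_mono_on hint (integrableOn_const measure_Ioc_lt_top.ne) measurableSet_Ioc
          fun x hx => hanti (left_mem_Icc.2 hab) (Ioc_subset_Icc_self hx) hx.1.le
    _ = (b - a) * w a := by simp [Measure.real, hab]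

theorem le_integral_Ioc_of_antitoneOn (hanti : AntitoneOn w (Icc a b)) (hab : a ≤ b) :
    (b - a) * w b ≤ ∫ s in Ioc a b, w s := by
  have hint : IntegrableOn w (Ioc a b) :=
    (hanti.integrableOn_isCompact isCompact_Icc).mono_set Ioc_subset_Icc_self
  calc (b - a) * w b = ∫ _ in Ioc a b, w b := by simp [Measure.real, hab]
    _ ≤ ∫ s in Ioc a b, w s :=
        setIntegral_mono_on (integrableOn_const measure_Ioc_lt_top.ne) hint measurableSet_Ioc
          fun x hx => hanti (Ioc_subset_Icc_self hx) (right_mem_Icc.2 hab) hx.2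

end IntervalBounds

section PositiveAntitone

variable {w : ℝ → ℝ} {a b t : ℝ}

theorem tail_nonneg (hpos : ∀ t ∈ Ioi (0 : ℝ), 0 < w t) (ha : 0 ≤ a) : 0 ≤ tail w a :=
  setIntegral_nonneg measurableSet_Ioi fun x hx => (hpos x (ha.trans_lt hx)).le

theorem tail_le_mul_add_tail (hanti : AntitoneOn w (Ioi 0)) (hint : IntegrableOn w (Ioi 0))
    (ha : 0 < a) (hab : a ≤ b) : tail w a ≤ (b - a) * w a + tail w b := by
  rw [tail_eq_integral_Ioc_add (hint.mono_set (Ioi_subset_Ioi ha.le)) hab]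
  gcongr
  exact integral_Ioc_le_of_antitoneOn (hanti.mono fun x hx => ha.trans_le hx.1) hab

theorem mul_add_tail_le_tail (hanti : AntitoneOn w (Ioi 0)) (hint : IntegrableOn w (Ioi 0))
    (ha : 0 < a) (hab : a ≤ b) : (b - a) * w b + tail w b ≤ tail w a := by
  rw [tail_eq_integral_Ioc_add (hint.mono_set (Ioi_subset_Ioi ha.le)) hab]
  gcongr
  exact le_integral_Ioc_of_antitoneOn (hanti.mono fun x hx => ha.trans_le hx.1) hab

theorem tail_pos (hpos : ∀ t ∈ Ioi (0 : ℝ), 0 < w t) (hanti : AntitoneOn w (Ioi 0))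
    (hint : IntegrableOn w (Ioi 0)) (ha : 0 < a) : 0 < tail w a := by
  have := mul_add_tail_le_tail hanti hint ha (le_add_of_nonneg_right zero_le_one)
  have := hpos (a + 1) (by simp only [mem_Ioi]; linarith)
  have := tail_nonneg hpos (a := a + 1) (by linarith)
  nlinarith

theorem tail_antitoneOn (hpos : ∀ t ∈ Ioi (0 : ℝ), 0 < w t) (hanti : AntitoneOn w (Ioi 0))
    (hint : IntegrableOn w (Ioi 0)) : AntitoneOn (tail w) (Ioi 0) := by
  intro a ha b _ hab
  have := mul_add_tail_le_tail hanti hint ha hab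
  have := hpos b (ha.trans_le hab)
  nlinarith

theorem tail_le_of_tail_mul_le_half {L : ℝ} (hpos : ∀ t ∈ Ioi (0 : ℝ), 0 < w t)
    (hanti : AntitoneOn w (Ioi 0)) (hint : IntegrableOn w (Ioi 0)) (ht : 0 < t) (hL : 1 ≤ L)
    (hdecay : 2 ≤ tail w t / tail w (L * t)) : tail w t ≤ 2 * L * t * w t := by
  rw [le_div_iff₀ (tail_pos hpos hanti hint (by nlinarith))] at hdecay
  have := tail_le_mul_add_tail hanti hint ht (le_mul_of_one_le_left ht.le hL)
  have := hpos t ht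
  nlinarith

theorem mul_le_tail_of_tail_half_le {d : ℝ} (hpos : ∀ t ∈ Ioi (0 : ℝ), 0 < w t)
    (hanti : AntitoneOn w (Ioi 0)) (hint : IntegrableOn w (Ioi 0)) (ht : 0 < t)
    (hdbl : tail w (t / 2) / tail w t ≤ d) : t * w t ≤ 2 * d * tail w t := by
  rw [div_le_iff₀ (tail_pos hpos hanti hint ht)] at hdbl
  have := mul_add_tail_le_tail hanti hint (half_pos ht) (half_le_self ht.le)
  have := tail_nonneg hpos ht.le
  nlinarith

end PositiveAntitone

theorem iInf_max_div_mul_eq {h : ℝ → ℝ} {t : ℝ} (hanti : AntitoneOn h (Ioi 0)) (ht : 0 < t)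
    (hht : 0 < h t) : ⨅ u : Ioi (0 : ℝ), max (u : ℝ) (t / h t * h u) = t := by
  apply le_antisymm
  · refine (ciInf_le ⟨0, ?_⟩ ⟨t, ht⟩).trans_eq ?_
    · rintro _ ⟨u, rfl⟩
      exact u.2.le.trans (le_max_left _ _)
    · simp only [div_mul_cancel₀ t hht.ne', max_self]
  · refine le_ciInf fun ⟨u, hu⟩ => ?_
    rcases le_total t u with htu | hut
    · exact htu.trans (le_max_left _ _)
    · refine le_trans ?_ (le_max_right _ _)
      calc t = t / h t * h t := (div_mul_cancel₀ t hht.ne').symm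
        _ ≤ t / h t * h u := by gcongr; exact hanti hu (mem_Ioi.2 ht) hut

section RatioBounds

variable {w h : ℝ → ℝ} {s t c C D d α : ℝ}

theorem mul_rpow_one_add_le_div (hs : 0 < s) (ht : 0 < t) (hwt : 0 < w t) (hht : 0 < h t)
    (hc : 0 ≤ c) (hC : 0 < C) (hD : 0 < D) (hup : h s ≤ D * s * w s)
    (hlow : t * w t ≤ C * h t) (hdecay : c * (t / s) ^ α ≤ h s / h t) :
    c / (C * D) * (t / s) ^ (1 + α) ≤ w s / w t := by
  have hdecay' := (le_div_iff₀ hht).1 hdecay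
  have key : c * (t / s) ^ α * (t * w t) ≤ C * D * (s * w s) :=
    calc c * (t / s) ^ α * (t * w t) ≤ c * (t / s) ^ α * (C * h t) := by gcongr
      _ = C * (c * (t / s) ^ α * h t) := by ring
      _ ≤ C * (D * s * w s) := mul_le_mul_of_nonneg_left (hdecay'.trans hup) hC.le
      _ = C * D * (s * w s) := by ring
  rw [Real.rpow_add (by positivity), Real.rpow_one, le_div_iff₀ hwt]
  calc c / (C * D) * (t / s * (t / s) ^ α) * w t
        = c * (t / s) ^ α * (t * w t) / (C * D * s) := by ring
    _ ≤ C * D * (s * w s) / (C * D * s) := by gcongr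
    _ = w s := by field_simp

theorem div_le_of_doubling (hs : 0 < s) (hw2s : 0 < w (2 * s)) (hC : 0 ≤ C) (hd : 0 ≤ d)
    (hh2s : 0 < h (2 * s)) (hup : h (2 * s) ≤ D * (2 * s) * w (2 * s))
    (hlow : s * w s ≤ C * h s) (hdbl : h s / h (2 * s) ≤ d) :
    w s / w (2 * s) ≤ 2 * C * d * D := by
  rw [div_le_iff₀ hw2s, ← mul_le_mul_iff_right₀ hs]
  calc s * w s ≤ C * h s := hlow
    _ ≤ C * (d * h (2 * s)) := by gcongr; exact (div_le_iff₀ hh2s).1 hdbl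
    _ ≤ C * (d * (D * (2 * s) * w (2 * s))) := by gcongr
    _ = s * (2 * C * d * D * w (2 * s)) := by ring

end RatioBounds

/-- Lemma 3.5, implication (ii) ⇒ (i) together with estimate (3.9): if `h`
satisfies condition (3.7) with constants `c₂, d₂, α₂`, then `h(t)/t ∼ w(t)`
(hence `w(t) ∼ 1/g⁻¹(t)`), and `w` satisfies condition (3.6) with exponent
`α₁ = 1 + α₂`, all constants depending only on `c₂, d₂, α₂`. -/
theorem stmt_3 (c₂ d₂ α₂ : ℝ) (hc₂ : 0 < c₂) (hd₂ : 0 < d₂) (hα₂ : 0 < α₂) :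
    ∃ c' d' c₁ d₁ : ℝ, 0 < c' ∧ 0 < d' ∧ 0 < c₁ ∧ 0 < d₁ ∧
      ∀ w h g : ℝ → ℝ,
        (∀ t ∈ Ioi (0:ℝ), 0 < w t) →
        AntitoneOn w (Ioi 0) →
        (∀ t ∈ Ioi (0:ℝ), ContinuousWithinAt w (Ici t) t) →
        IntegrableOn w (Ioi 0) →
        (∀ t, h t = ∫ s in Ioi t, w s) →
        (∀ s, g s = ⨅ t : Ioi (0:ℝ), max (t : ℝ) (s * h (t : ℝ))) →
        (∀ s t : ℝ, 1 ≤ s → s ≤ t → c₂ * (t / s) ^ α₂ ≤ h s / h t) →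
        (∀ s : ℝ, 1 ≤ s → h s / h (2 * s) ≤ d₂) →
        (∀ t : ℝ, 1 ≤ t → h t / t ≤ d' * w t) ∧
        (∀ t : ℝ, 2 ≤ t → c' * w t ≤ h t / t) ∧
        (∀ ginv : ℝ → ℝ,
            (∀ s ∈ Ioi (0:ℝ), ginv (g s) = s) →
            (∀ t ∈ Ioi (0:ℝ), ginv t ∈ Ioi (0:ℝ) ∧ g (ginv t) = t) →
            ∀ t : ℝ, 2 ≤ t → c' * w t ≤ 1 / ginv t ∧ 1 / ginv t ≤ d' * w t) ∧
        (∀ s t : ℝ, 2 ≤ s → s ≤ t → c₁ * (t / s) ^ (1 + α₂) ≤ w s / w t) ∧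
        (∀ s : ℝ, 2 ≤ s → w s / w (2 * s) ≤ d₁) := by
  obtain ⟨L, hL, hL1⟩ : ∃ L : ℝ, 2 ≤ c₂ * L ^ α₂ ∧ 1 ≤ L :=
    ((((tendsto_rpow_atTop hα₂).const_mul_atTop hc₂).eventually_ge_atTop 2).and
      (eventually_ge_atTop 1)).exists
  refine ⟨1 / (2 * d₂), 2 * L, c₂ / (2 * d₂ * (2 * L)), 2 * (2 * d₂) * d₂ * (2 * L),
    by positivity, by positivity, by positivity, by positivity, ?_⟩
  intro w h g hpos hanti _ hint hh hg hdecay hdbl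
  obtain rfl : h = tail w := funext hh
  have htail_pos {t : ℝ} (ht : 0 < t) : 0 < tail w t := tail_pos hpos hanti hint ht
  have hup (t : ℝ) (ht : 1 ≤ t) : tail w t ≤ 2 * L * t * w t := by
    refine tail_le_of_tail_mul_le_half hpos hanti hint (by linarith) hL1 ?_
    have := hdecay t (L * t) ht (le_mul_of_one_le_left (by linarith) hL1)
    rw [mul_div_cancel_right₀ L (by positivity)] at this
    exact hL.trans this
  have hlow (t : ℝ) (ht : 2 ≤ t) : t * w t ≤ 2 * d₂ * tail w t := by
    refine mul_le_tail_of_tail_half_le hpos hanti hint (by linarith) ?_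
    simpa only [mul_div_cancel₀ t two_ne_zero] using hdbl (t / 2) (by linarith)
  have hratio_up (t : ℝ) (ht : 1 ≤ t) : tail w t / t ≤ 2 * L * w t := by
    rw [div_le_iff₀ (by linarith)]; linarith [hup t ht]
  have hratio_low (t : ℝ) (ht : 2 ≤ t) : 1 / (2 * d₂) * w t ≤ tail w t / t := by
    rw [le_div_iff₀ (by linarith), one_div_mul_eq_div, div_mul_eq_mul_div,
      div_le_iff₀ (by positivity)]
    linarith [hlow t ht]
  refine ⟨hratio_up, hratio_low, ?_, ?_, ?_⟩
  · intro ginv hginv _ t ht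
    have ht0 : 0 < t := by linarith
    have hg_eq : g (t / tail w t) = t := by
      rw [hg, iInf_max_div_mul_eq (tail_antitoneOn hpos hanti hint) ht0 (htail_pos ht0)]
    have := hginv (t / tail w t) (div_pos ht0 (htail_pos ht0))
    rw [hg_eq] at this
    rw [this, one_div_div]
    exact ⟨hratio_low t ht, hratio_up t (by linarith)⟩
  · intro s t hs hst
    exact mul_rpow_one_add_le_div (by linarith) (by linarith)
      (hpos t (by simp only [mem_Ioi]; linarith)) (htail_pos (by linarith)) hc₂.le
      (by positivity) (by positivity) (hup s (by linarith)) (hlow t (by linarith)) (hdecay s t (by linarith) hst)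
  · intro s hs
    exact div_le_of_doubling (by linarith) (hpos _ (by simp only [mem_Ioi]; linarith))
      (by positivity) hd₂.le (htail_pos (by linarith)) (hup (2 * s) (by linarith))
      (hlow s hs) (hdbl s (by linarith))
end

section
/- Let 𝐠:[0,∞)→[0,∞) be an increasing continuous bijection satisfying condition (3.8) with constants c,d>0 and 0<β<1. Set w(t)=1/𝐠⁻¹(t) for t>0, h(t)=∫_t^∞ w(s) ds (which is finite for t ≥ 1), and g(s)=inf_{t>0} max(t, s·h(t)). Then there exist constants c',d'>0 depending only on c,d,β such that c'·g(x) ≤ 𝐠(x) ≤ d'·g(x) for all x ≥ 1. -/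
open MeasureTheory Set
open scoped ENNReal

/-! For the upper bound `𝐠(x) ≤ 2 g(x)` it suffices that `w = 1/𝐠⁻¹ ≥ 1/x` on `(0, 𝐠(x)]`:
for `t < 𝐠(x)/2` this gives `x h(t) ≥ 𝐠(x) - t ≥ 𝐠(x)/2`. For the lower bound take `t = 𝐠(x)`
in the infimum. By (3.8), `𝐠⁻¹(s) ≥ 𝐠⁻¹(u) (s/(d u))^(1/β)` for `s ≥ u ≥ 𝐠(1)`, so `w` is
dominated on `(u, ∞)` by a power `s^(-1/β)` with `1/β > 1`, whence
`h(u) ≤ K u / 𝐠⁻¹(u)` with `K = d^(1/β) / (1/β - 1)`; at `u = 𝐠(x)` this reads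
`x h(𝐠(x)) ≤ K 𝐠(x)`; as `w` is decreasing, it also makes `h` finite on `(0, ∞)`. -/

theorem StrictMonoOn.strictMonoOn_of_rightInvOn {α β : Type*} [LinearOrder α] [Preorder β]
    {f : α → β} {g : β → α} {s : Set α} {t : Set β} (hf : StrictMonoOn f s) (hg : MapsTo g t s)
    (hgf : RightInvOn g f t) : StrictMonoOn g t := by
  intro y hy z hz hyz
  by_contra! h
  have := hf.monotoneOn (hg hz) (hg hy) h
  rw [hgf hy, hgf hz] at this
  exact hyz.not_ge this

theorem inv_le_mul_rpow_neg_of_div_le_mul_rpow {x y u s d β : ℝ} (hx : 0 < x) (hy : 0 < y)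
    (hu : 0 < u) (hs : 0 < s) (hd : 0 < d) (hβ : 0 < β) (h : s / u ≤ d * (y / x) ^ β) :
    y⁻¹ ≤ (d * u) ^ β⁻¹ / x * s ^ (-β⁻¹) := by
  have hdu : 0 < d * u := mul_pos hd hu
  have hroot : (s / (d * u)) ^ β⁻¹ ≤ y / x :=
    calc (s / (d * u)) ^ β⁻¹ ≤ ((y / x) ^ β) ^ β⁻¹ := by
          gcongr
          rw [div_le_iff₀ hdu]
          rw [div_le_iff₀ hu] at h
          linarith
      _ = y / x := Real.rpow_rpow_inv (div_pos hy hx).le hβ.ne'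
  rw [Real.div_rpow hs.le hdu.le, le_div_iff₀ hx] at hroot
  calc y⁻¹ ≤ (s ^ β⁻¹ / (d * u) ^ β⁻¹ * x)⁻¹ := inv_anti₀ (by positivity) hroot
    _ = (d * u) ^ β⁻¹ / x * s ^ (-β⁻¹) := by
        rw [Real.rpow_neg hs.le]
        field_simp

theorem lintegral_Ioi_ofReal_le_of_le_mul_rpow_neg {w : ℝ → ℝ} {u C p : ℝ} (hu : 0 < u)
    (hC : 0 ≤ C) (hp : 1 < p) (hw : ∀ s ∈ Ioi u, w s ≤ C * s ^ (-p)) :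
    ∫⁻ s in Ioi u, ENNReal.ofReal (w s) ≤ ENNReal.ofReal (C * (u ^ (1 - p) / (p - 1))) := by
  have hint : IntegrableOn (fun s : ℝ ↦ C * s ^ (-p)) (Ioi u) :=
    (integrableOn_Ioi_rpow_of_lt (by linarith) hu).const_mul C
  have hnonneg : 0 ≤ᵐ[volume.restrict (Ioi u)] fun s : ℝ ↦ C * s ^ (-p) := by
    filter_upwards [ae_restrict_mem measurableSet_Ioi] with s hs
    exact mul_nonneg hC (Real.rpow_nonneg (hu.trans hs).le _)
  calc ∫⁻ s in Ioi u, ENNReal.ofReal (w s)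
      ≤ ∫⁻ s in Ioi u, ENNReal.ofReal (C * s ^ (-p)) :=
        setLIntegral_mono' measurableSet_Ioi fun s hs ↦ ENNReal.ofReal_le_ofReal (hw s hs)
    _ = ENNReal.ofReal (∫ s in Ioi u, C * s ^ (-p)) :=
        (ofReal_integral_eq_lintegral_ofReal hint hnonneg).symm
    _ = ENNReal.ofReal (C * (u ^ (1 - p) / (p - 1))) := by
        rw [integral_const_mul, integral_Ioi_rpow_of_lt (by linarith) hu, neg_add_eq_sub,
          neg_div, ← div_neg, neg_sub]

theorem AntitoneOn.setLIntegral_Ioi_ofReal_ne_top {w : ℝ → ℝ} {t a : ℝ}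
    (hw : AntitoneOn w (Ioi 0)) (ht : 0 < t) (ha : ∫⁻ s in Ioi a, ENNReal.ofReal (w s) ≠ ∞) :
    ∫⁻ s in Ioi t, ENNReal.ofReal (w s) ≠ ∞ := by
  have hIoc : ∫⁻ s in Ioc t a, ENNReal.ofReal (w s) ≠ ∞ :=
    ne_top_of_le_ne_top (ENNReal.mul_ne_top ENNReal.ofReal_ne_top measure_Ioc_lt_top.ne)
      ((setLIntegral_mono' measurableSet_Ioc fun s hs ↦
        ENNReal.ofReal_le_ofReal (hw ht (ht.trans hs.1) hs.1.le)).trans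
          (setLIntegral_const _ _).le)
  refine ne_top_of_le_ne_top (ENNReal.add_ne_top.2 ⟨hIoc, ha⟩) ?_
  calc ∫⁻ s in Ioi t, ENNReal.ofReal (w s)
      ≤ ∫⁻ s in Ioc t a ∪ Ioi a, ENNReal.ofReal (w s) :=
        lintegral_mono_set Ioi_subset_Ioc_union_Ioi
    _ ≤ _ := lintegral_union_le _ _ _

theorem ofReal_mul_sub_le_setLIntegral_Ioi {w : ℝ → ℝ} {t a m : ℝ} (hm : 0 ≤ m)
    (hw : ∀ s ∈ Ioc t a, m ≤ w s) :
    ENNReal.ofReal (m * (a - t)) ≤ ∫⁻ s in Ioi t, ENNReal.ofReal (w s) :=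
  calc ENNReal.ofReal (m * (a - t)) = ∫⁻ _ in Ioc t a, ENNReal.ofReal m := by
        rw [setLIntegral_const, Real.volume_Ioc, ENNReal.ofReal_mul hm]
    _ ≤ ∫⁻ s in Ioc t a, ENNReal.ofReal (w s) :=
        setLIntegral_mono' measurableSet_Ioc fun s hs ↦ ENNReal.ofReal_le_ofReal (hw s hs)
    _ ≤ ∫⁻ s in Ioi t, ENNReal.ofReal (w s) := lintegral_mono_set Ioc_subset_Ioi_self

theorem ofReal_half_le_iInf_max {w : ℝ → ℝ} {a x : ℝ} (hx : 0 < x)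
    (hw : ∀ s ∈ Ioc 0 a, x⁻¹ ≤ w s) :
    ENNReal.ofReal (a / 2) ≤ ⨅ t : Ioi (0:ℝ),
      max (ENNReal.ofReal t) (ENNReal.ofReal x * ∫⁻ s in Ioi (t : ℝ), ENNReal.ofReal (w s)) := by
  refine le_iInf fun ⟨t, ht⟩ ↦ ?_
  rcases le_or_gt (a / 2) t with hat | hta
  · exact (ENNReal.ofReal_le_ofReal hat).trans (le_max_left _ _)
  refine le_trans ?_ (le_max_right _ _)
  have hlower := ofReal_mul_sub_le_setLIntegral_Ioi (inv_nonneg.2 hx.le)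
    fun s hs ↦ hw s ⟨(mem_Ioi.1 ht).trans hs.1, hs.2⟩
  calc ENNReal.ofReal (a / 2) ≤ ENNReal.ofReal (x * (x⁻¹ * (a - t))) := by
        rw [mul_inv_cancel_left₀ hx.ne']
        exact ENNReal.ofReal_le_ofReal (by linarith)
    _ ≤ _ := by
        rw [ENNReal.ofReal_mul hx.le]
        gcongr

theorem iInf_max_le_max_one_mul {h : ℝ → ℝ≥0∞} {x u K : ℝ} (hx : 0 < x) (hu : 0 < u)
    (hh : h u ≤ ENNReal.ofReal (K * u / x)) :
    ⨅ t : Ioi (0:ℝ), max (ENNReal.ofReal t) (ENNReal.ofReal x * h t) ≤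
      ENNReal.ofReal (max 1 K * u) := by
  refine (iInf_le _ ⟨u, hu⟩).trans (max_le ?_ ?_)
  · exact ENNReal.ofReal_le_ofReal (le_mul_of_one_le_left hu.le (le_max_left _ _))
  · calc ENNReal.ofReal x * h u ≤ ENNReal.ofReal x * ENNReal.ofReal (K * u / x) := by gcongr
      _ = ENNReal.ofReal (K * u) := by rw [← ENNReal.ofReal_mul hx.le, mul_div_cancel₀ _ hx.ne']
      _ ≤ ENNReal.ofReal (max 1 K * u) :=
          ENNReal.ofReal_le_ofReal (mul_le_mul_of_nonneg_right (le_max_right _ _) hu.le)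

theorem antitoneOn_of_eq_one_div {Ginv w : ℝ → ℝ} (hGinv : StrictMonoOn Ginv (Ici 0))
    (hGinv0 : 0 ≤ Ginv 0) (hw : ∀ t : ℝ, 0 < t → w t = 1 / Ginv t) : AntitoneOn w (Ioi 0) := by
  intro a ha b hb hab
  have ha0 : 0 < Ginv a := hGinv0.trans_lt (hGinv self_mem_Ici (mem_Ioi.1 ha).le ha)
  rw [hw a ha, hw b hb]
  exact one_div_le_one_div_of_le ha0 (hGinv.monotoneOn (mem_Ioi.1 ha).le (mem_Ioi.1 hb).le hab)

theorem lintegral_Ioi_ofReal_le_of_growth {G Ginv w : ℝ → ℝ} {d β u : ℝ}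
    (hGinv : MonotoneOn Ginv (Ici 0)) (hinv : RightInvOn Ginv G (Ici 0))
    (hgrowth : ∀ s t : ℝ, 1 ≤ s → s ≤ t → G t / G s ≤ d * (t / s) ^ β)
    (hd : 0 < d) (hβ0 : 0 < β) (hβ1 : β < 1)
    (hw : ∀ t : ℝ, 0 < t → w t = 1 / Ginv t) (hu : 0 < u) (hu1 : 1 ≤ Ginv u) :
    ∫⁻ s in Ioi u, ENNReal.ofReal (w s) ≤
      ENNReal.ofReal (d ^ β⁻¹ / (β⁻¹ - 1) * u / Ginv u) := by
  have hGu : 0 < Ginv u := one_pos.trans_le hu1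
  have hp : 1 < β⁻¹ := (one_lt_inv₀ hβ0).2 hβ1
  refine (lintegral_Ioi_ofReal_le_of_le_mul_rpow_neg (C := (d * u) ^ β⁻¹ / Ginv u) hu
    (by positivity) hp fun s hs ↦ ?_).trans_eq ?_
  · have hs0 : 0 < s := hu.trans hs
    have hus : Ginv u ≤ Ginv s := hGinv hu.le hs0.le (le_of_lt hs)
    rw [hw s hs0, one_div]
    refine inv_le_mul_rpow_neg_of_div_le_mul_rpow hGu (hGu.trans_le hus) hu hs0 hd hβ0 ?_
    simpa only [hinv hu.le, hinv hs0.le] using hgrowth _ _ hu1 hus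
  · have hpow : u ^ β⁻¹ * u ^ (1 - β⁻¹) = u := by
      rw [← Real.rpow_add hu, add_sub_cancel, Real.rpow_one]
    rw [Real.mul_rpow hd.le hu.le]
    congr 1
    calc d ^ β⁻¹ * u ^ β⁻¹ / Ginv u * (u ^ (1 - β⁻¹) / (β⁻¹ - 1))
        = d ^ β⁻¹ / (β⁻¹ - 1) * (u ^ β⁻¹ * u ^ (1 - β⁻¹)) / Ginv u := by ring
      _ = d ^ β⁻¹ / (β⁻¹ - 1) * u / Ginv u := by rw [hpow]

theorem stmt_5_general (c d β : ℝ) (hd : 0 < d) (hβ0 : 0 < β) (hβ1 : β < 1) :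
    ∃ c' d' : ℝ, 0 < c' ∧ 0 < d' ∧
      ∀ (G Ginv w : ℝ → ℝ) (h g : ℝ → ℝ≥0∞),
        StrictMonoOn G (Ici 0) → ContinuousOn G (Ici 0) → BijOn G (Ici 0) (Ici 0) →
        (∀ x ∈ Ici (0:ℝ), Ginv (G x) = x) →
        (∀ y ∈ Ici (0:ℝ), Ginv y ∈ Ici (0:ℝ) ∧ G (Ginv y) = y) →
        (∀ s t : ℝ, 1 ≤ s → s ≤ t → G t / G s ≤ d * (t / s) ^ β) →
        (∀ s : ℝ, 1 ≤ s → Ginv (2 * s) / Ginv s ≤ c) →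
        (∀ t : ℝ, 0 < t → w t = 1 / Ginv t) →
        (∀ t, h t = ∫⁻ s in Ioi t, ENNReal.ofReal (w s)) →
        (∀ s, g s = ⨅ t : Ioi (0:ℝ),
            max (ENNReal.ofReal (t : ℝ)) (ENNReal.ofReal s * h (t : ℝ))) →
        (∀ t : ℝ, 1 ≤ t → h t ≠ ⊤) ∧
        (∀ x : ℝ, 1 ≤ x →
          ENNReal.ofReal c' * g x ≤ ENNReal.ofReal (G x) ∧
          ENNReal.ofReal (G x) ≤ ENNReal.ofReal d' * g x) := by
  set K := d ^ β⁻¹ / (β⁻¹ - 1)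
  have hK : 0 < max 1 K := one_pos.trans_le (le_max_left _ _)
  refine ⟨(max 1 K)⁻¹, 2, inv_pos.2 hK, two_pos, ?_⟩
  intro G Ginv w h g hG _ hGbij hGinvG hGGinv hgrowth _ hw hh hg
  obtain rfl := funext hh
  obtain rfl := funext hg
  have hinv : RightInvOn Ginv G (Ici 0) := fun y hy ↦ (hGGinv y hy).2
  have hGinv_mono := hG.strictMonoOn_of_rightInvOn (fun y hy ↦ (hGGinv y hy).1) hinv
  have hw_anti := antitoneOn_of_eq_one_div hGinv_mono (hGGinv 0 self_mem_Ici).1 hw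
  have htail (u : ℝ) (hu : 0 < u) (hu1 : 1 ≤ Ginv u) :=
    lintegral_Ioi_ofReal_le_of_growth hGinv_mono.monotoneOn hinv hgrowth hd hβ0 hβ1 hw hu hu1
  have hG_pos (x : ℝ) (hx : 1 ≤ x) : 0 < G x :=
    (hGbij.mapsTo self_mem_Ici).trans_lt (hG self_mem_Ici (zero_le_one.trans hx) (by linarith))
  refine ⟨fun t ht ↦ ?_, fun x hx ↦ ?_⟩
  · exact hw_anti.setLIntegral_Ioi_ofReal_ne_top (one_pos.trans_le ht) <|
      ne_top_of_le_ne_top ENNReal.ofReal_ne_top <|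
        htail _ (hG_pos 1 le_rfl) (hGinvG 1 (mem_Ici.2 zero_le_one)).ge
  have hx0 : 0 < x := one_pos.trans_le hx
  have hGx : 0 < G x := hG_pos x hx
  have hGinvGx : Ginv (G x) = x := hGinvG x (mem_Ici.2 hx0.le)
  constructor
  · have htailx := htail (G x) hGx (hx.trans hGinvGx.ge)
    rw [hGinvGx] at htailx
    rw [ENNReal.ofReal_inv_of_pos hK, ENNReal.inv_mul_le_iff (ENNReal.ofReal_pos.2 hK).ne'
      ENNReal.ofReal_ne_top, ← ENNReal.ofReal_mul hK.le]
    exact iInf_max_le_max_one_mul (h := fun t ↦ ∫⁻ s in Ioi t, ENNReal.ofReal (w s))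
      hx0 hGx htailx
  · have hwx : w (G x) = x⁻¹ := by rw [hw _ hGx, hGinvGx, one_div]
    calc ENNReal.ofReal (G x) = ENNReal.ofReal 2 * ENNReal.ofReal (G x / 2) := by
          rw [← ENNReal.ofReal_mul zero_le_two, mul_div_cancel₀ _ two_ne_zero]
      _ ≤ _ := by
          gcongr
          exact ofReal_half_le_iInf_max hx0 fun s hs ↦ hwx ▸ hw_anti hs.1 hGx hs.2

/-- Remark 3.7: if `𝐠` is an increasing continuous bijection of `[0,∞)`
satisfying the regularity condition (3.8), `w = 1/𝐠⁻¹`, `h(t) = ∫_t^∞ w`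
(finite for `t ≥ 1`) and `g(s) = inf_{t>0} max(t, s·h(t))` (computed in
`[0,∞]` so that the convention `max(t, s·h(t)) = ∞` when `h(t) = ∞` holds),
then `g` is equivalent to `𝐠` on `[1,∞)`, with constants depending only on
the constants in (3.8). -/
theorem stmt_5 (c d β : ℝ) (hc : 0 < c) (hd : 0 < d) (hβ0 : 0 < β) (hβ1 : β < 1) :
    ∃ c' d' : ℝ, 0 < c' ∧ 0 < d' ∧
      ∀ (G Ginv w : ℝ → ℝ) (h g : ℝ → ℝ≥0∞),
        StrictMonoOn G (Ici 0) → ContinuousOn G (Ici 0) → BijOn G (Ici 0) (Ici 0) →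
        (∀ x ∈ Ici (0:ℝ), Ginv (G x) = x) →
        (∀ y ∈ Ici (0:ℝ), Ginv y ∈ Ici (0:ℝ) ∧ G (Ginv y) = y) →
        (∀ s t : ℝ, 1 ≤ s → s ≤ t → G t / G s ≤ d * (t / s) ^ β) →
        (∀ s : ℝ, 1 ≤ s → Ginv (2 * s) / Ginv s ≤ c) →
        (∀ t : ℝ, 0 < t → w t = 1 / Ginv t) →
        (∀ t, h t = ∫⁻ s in Ioi t, ENNReal.ofReal (w s)) →
        (∀ s, g s = ⨅ t : Ioi (0:ℝ),
            max (ENNReal.ofReal (t : ℝ)) (ENNReal.ofReal s * h (t : ℝ))) →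
        (∀ t : ℝ, 1 ≤ t → h t ≠ ⊤) ∧
        (∀ x : ℝ, 1 ≤ x →
          ENNReal.ofReal c' * g x ≤ ENNReal.ofReal (G x) ∧
          ENNReal.ofReal (G x) ≤ ENNReal.ofReal d' * g x) :=
  stmt_5_general c d β hd hβ0 hβ1
end

section
/- Let w:(0,∞)→[0,∞) be nonincreasing with ∫_1^∞ w(s) ds < ∞. Define φ:[0,∞)→[0,∞) by φ(0)=0 and φ(t)=t²·∫_{t^{-2}}^∞ w(s) ds for t>0. Then φ is convex on [0,∞) and continuous at 0 (so φ is an Orlicz function). -/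
open MeasureTheory Set Filter Topology

/-!
Write `h u = ∫_u^∞ w` and `K u = h u + u w(u)`, so that `φ t = t² h(t⁻²)`. Since `w` is
nonincreasing, `h u - h v` lies between `(v - u) w(v)` and `(v - u) w(u)` for `u ≤ v`, which pins
the slope of `φ` over `[a, b]` between `(a + b) K(a⁻²)` and `(a + b) K(b⁻²)`. For `x < y < z` the
slopes of `φ` over `[x, y]` and `[y, z]` are therefore separated by `(x + y) K(y⁻²) ≤ (y + z) K(y⁻²)`,
using `K ≥ 0`; this is convexity. Continuity at `0` follows from `0 ≤ φ t ≤ t² h(1)` for `|t| ≤ 1`.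
-/

section AntitoneWeight

variable {w : ℝ → ℝ}

theorem AntitoneOn.integrableOn_Ioi_of_integrableOn_Ioi_one (hw_anti : AntitoneOn w (Ioi 0))
    (hw_int : IntegrableOn w (Ioi 1)) {c : ℝ} (hc : 0 < c) : IntegrableOn w (Ioi c) := by
  rcases le_or_gt 1 c with h1 | h1
  · exact hw_int.mono_set (Ioi_subset_Ioi h1)
  · rw [← Ioc_union_Ioi_eq_Ioi h1.le]
    refine IntegrableOn.union ?_ hw_int
    exact ((hw_anti.mono fun s hs => hc.trans_le hs.1).integrableOn_isCompact
      isCompact_Icc).mono_set Ioc_subset_Icc_self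

theorem AntitoneOn.mul_le_integral_Ioi_sub (hw_anti : AntitoneOn w (Ioi 0)) {u v : ℝ}
    (hint : IntegrableOn w (Ioi u)) (hu : 0 < u) (huv : u ≤ v) :
    (v - u) * w v ≤ (∫ s in Ioi u, w s) - ∫ s in Ioi v, w s := by
  have hmono : AntitoneOn w (Icc u v) := hw_anti.mono fun s hs => hu.trans_le hs.1
  rw [intervalIntegral.integral_Ioi_sub_Ioi hint huv]
  calc (v - u) * w v = ∫ _ in u..v, w v := by simp
    _ ≤ ∫ s in u..v, w s :=
      intervalIntegral.integral_mono_on huv intervalIntegrable_const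
        ((hmono.mono (uIcc_of_le huv).subset).intervalIntegrable)
        fun s hs => hmono hs (right_mem_Icc.2 huv) hs.2

theorem AntitoneOn.integral_Ioi_sub_le_mul (hw_anti : AntitoneOn w (Ioi 0)) {u v : ℝ}
    (hint : IntegrableOn w (Ioi u)) (hu : 0 < u) (huv : u ≤ v) :
    (∫ s in Ioi u, w s) - ∫ s in Ioi v, w s ≤ (v - u) * w u := by
  have hmono : AntitoneOn w (Icc u v) := hw_anti.mono fun s hs => hu.trans_le hs.1
  rw [intervalIntegral.integral_Ioi_sub_Ioi hint huv]
  calc ∫ s in u..v, w s ≤ ∫ _ in u..v, w u :=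
      intervalIntegral.integral_mono_on huv
        ((hmono.mono (uIcc_of_le huv).subset).intervalIntegrable) intervalIntegrable_const
        fun s hs => hmono (left_mem_Icc.2 huv) hs hs.1
    _ = (v - u) * w u := by simp

theorem integral_Ioi_add_mul_nonneg (hw_nonneg : ∀ t ∈ Ioi (0:ℝ), 0 ≤ w t) {u : ℝ} (hu : 0 < u) :
    0 ≤ (∫ s in Ioi u, w s) + u * w u :=
  add_nonneg (setIntegral_nonneg measurableSet_Ioi fun s hs => hw_nonneg s (hu.trans hs))
    (mul_nonneg hu.le (hw_nonneg u hu))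

end AntitoneWeight

noncomputable def weightOrlicz (w : ℝ → ℝ) (t : ℝ) : ℝ := t ^ 2 * ∫ s in Ioi (t ^ 2)⁻¹, w s

section WeightOrlicz

variable {w : ℝ → ℝ}

theorem weightOrlicz_sub_le (hw_nonneg : ∀ t ∈ Ioi (0:ℝ), 0 ≤ w t)
    (hw_anti : AntitoneOn w (Ioi 0)) (hw_int : IntegrableOn w (Ioi 1)) {a b : ℝ} (ha : 0 ≤ a)
    (hab : a < b) :
    weightOrlicz w b - weightOrlicz w a ≤
      (b ^ 2 - a ^ 2) * ((∫ s in Ioi (b ^ 2)⁻¹, w s) + (b ^ 2)⁻¹ * w (b ^ 2)⁻¹) := by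
  have hb : 0 < b := ha.trans_lt hab
  set u := (b ^ 2)⁻¹
  have hu : 0 < u := by positivity
  rcases ha.eq_or_lt with rfl | ha
  · have := mul_nonneg hu.le (hw_nonneg u hu)
    simp only [weightOrlicz]
    nlinarith
  set v := (a ^ 2)⁻¹
  have huv : u ≤ v := inv_anti₀ (by positivity) (pow_le_pow_left₀ ha.le hab.le 2)
  have hdiff := hw_anti.integral_Ioi_sub_le_mul
    (hw_anti.integrableOn_Ioi_of_integrableOn_Ioi_one hw_int hu) hu huv
  have hscale : a ^ 2 * (v - u) = (b ^ 2 - a ^ 2) * u := by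
    simp only [u, v]
    field_simp
  calc weightOrlicz w b - weightOrlicz w a
      = (b ^ 2 - a ^ 2) * (∫ s in Ioi u, w s)
        + a ^ 2 * ((∫ s in Ioi u, w s) - ∫ s in Ioi v, w s) := by
        simp only [weightOrlicz, u, v]
        ring
    _ ≤ (b ^ 2 - a ^ 2) * (∫ s in Ioi u, w s) + a ^ 2 * ((v - u) * w u) := by gcongr
    _ = (b ^ 2 - a ^ 2) * ((∫ s in Ioi u, w s) + u * w u) := by
        rw [← mul_assoc, hscale]
        ring

theorem le_weightOrlicz_sub (hw_anti : AntitoneOn w (Ioi 0)) (hw_int : IntegrableOn w (Ioi 1))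
    {a b : ℝ} (ha : 0 < a) (hab : a < b) :
    (b ^ 2 - a ^ 2) * ((∫ s in Ioi (a ^ 2)⁻¹, w s) + (a ^ 2)⁻¹ * w (a ^ 2)⁻¹) ≤
      weightOrlicz w b - weightOrlicz w a := by
  have hb : 0 < b := ha.trans hab
  set u := (b ^ 2)⁻¹
  set v := (a ^ 2)⁻¹
  have hu : 0 < u := by positivity
  have huv : u ≤ v := inv_anti₀ (by positivity) (pow_le_pow_left₀ ha.le hab.le 2)
  have hdiff := hw_anti.mul_le_integral_Ioi_sub
    (hw_anti.integrableOn_Ioi_of_integrableOn_Ioi_one hw_int hu) hu huv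
  have hscale : b ^ 2 * (v - u) = (b ^ 2 - a ^ 2) * v := by
    simp only [u, v]
    field_simp
  calc (b ^ 2 - a ^ 2) * ((∫ s in Ioi v, w s) + v * w v)
      = (b ^ 2 - a ^ 2) * (∫ s in Ioi v, w s) + b ^ 2 * ((v - u) * w v) := by
        rw [← mul_assoc, hscale]
        ring
    _ ≤ (b ^ 2 - a ^ 2) * (∫ s in Ioi v, w s)
        + b ^ 2 * ((∫ s in Ioi u, w s) - ∫ s in Ioi v, w s) := by gcongr
    _ = weightOrlicz w b - weightOrlicz w a := by
        simp only [weightOrlicz, u, v]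
        ring

theorem convexOn_weightOrlicz (hw_nonneg : ∀ t ∈ Ioi (0:ℝ), 0 ≤ w t)
    (hw_anti : AntitoneOn w (Ioi 0)) (hw_int : IntegrableOn w (Ioi 1)) :
    ConvexOn ℝ (Ici 0) (weightOrlicz w) := by
  refine convexOn_of_slope_mono_adjacent (convex_Ici 0) fun {x y z} (hx : 0 ≤ x) _ hxy hyz => ?_
  have hy : 0 < y := hx.trans_lt hxy
  set K := (∫ s in Ioi (y ^ 2)⁻¹, w s) + (y ^ 2)⁻¹ * w (y ^ 2)⁻¹
  have hK : 0 ≤ K := integral_Ioi_add_mul_nonneg hw_nonneg (by positivity)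
  have hleft := weightOrlicz_sub_le hw_nonneg hw_anti hw_int hx hxy
  have hright := le_weightOrlicz_sub hw_anti hw_int hy hyz
  calc (weightOrlicz w y - weightOrlicz w x) / (y - x) ≤ (x + y) * K := by
        rw [div_le_iff₀ (sub_pos.2 hxy)]
        linarith
    _ ≤ (y + z) * K := by gcongr
    _ ≤ (weightOrlicz w z - weightOrlicz w y) / (z - y) := by
        rw [le_div_iff₀ (sub_pos.2 hyz)]
        linarith

theorem continuousAt_weightOrlicz_zero (hw_nonneg : ∀ t ∈ Ioi (0:ℝ), 0 ≤ w t)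
    (hw_anti : AntitoneOn w (Ioi 0)) (hw_int : IntegrableOn w (Ioi 1)) :
    ContinuousAt (weightOrlicz w) 0 := by
  rw [ContinuousAt, show weightOrlicz w 0 = 0 by simp [weightOrlicz]]
  have hbound : Tendsto (fun t : ℝ => t ^ 2 * ∫ s in Ioi 1, w s) (𝓝 0) (𝓝 0) := by
    simpa using (by fun_prop : Continuous fun t : ℝ => t ^ 2 * ∫ s in Ioi 1, w s).tendsto 0
  refine squeeze_zero' (Eventually.of_forall fun t => ?_) ?_ hbound
  · rcases eq_or_ne t 0 with rfl | ht
    · simp [weightOrlicz]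
    · exact mul_nonneg (sq_nonneg t) (setIntegral_nonneg measurableSet_Ioi fun s hs =>
        hw_nonneg s ((by positivity : (0:ℝ) < (t ^ 2)⁻¹).trans hs))
  filter_upwards [Ioo_mem_nhds neg_one_lt_zero one_pos] with t ht
  rcases eq_or_ne t 0 with rfl | ht0
  · simp [weightOrlicz]
  have h1 : 1 ≤ (t ^ 2)⁻¹ := one_le_inv₀ (by positivity) |>.2 (by nlinarith [ht.1, ht.2])
  have hle := hw_anti.mul_le_integral_Ioi_sub hw_int one_pos h1
  have := mul_nonneg (sub_nonneg.2 h1) (hw_nonneg _ (one_pos.trans_le h1))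
  exact mul_le_mul_of_nonneg_left (by linarith) (sq_nonneg t)

end WeightOrlicz

/-- The convexity claim of Section 3: for a nonincreasing weight `w` on
`(0,∞)` with `∫_1^∞ w < ∞`, the function `φ(t) = t² ∫_{t⁻²}^∞ w(s) ds`
(with `φ(0) = 0`) is convex on `[0,∞)` and continuous at `0`, i.e. an
Orlicz function. -/
theorem stmt_6 (w φ : ℝ → ℝ)
    (hw_nonneg : ∀ t ∈ Ioi (0:ℝ), 0 ≤ w t)
    (hw_anti : AntitoneOn w (Ioi 0))
    (hw_int : IntegrableOn w (Ioi 1))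
    (hφ0 : φ 0 = 0)
    (hφ : ∀ t : ℝ, 0 < t → φ t = t ^ 2 * ∫ s in Ioi ((t ^ 2)⁻¹), w s) :
    ConvexOn ℝ (Ici 0) φ ∧ ContinuousWithinAt φ (Ici 0) 0 := by
  have hEq : EqOn (weightOrlicz w) φ (Ici 0) := by
    intro t (ht : 0 ≤ t)
    rcases ht.eq_or_lt with rfl | ht
    · simp [weightOrlicz, hφ0]
    · exact (hφ t ht).symm
  refine ⟨(convexOn_weightOrlicz hw_nonneg hw_anti hw_int).congr hEq, ?_⟩
  exact (continuousAt_weightOrlicz_zero hw_nonneg hw_anti hw_int).continuousWithinAt.congr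
    (fun t ht => (hEq ht).symm) (hEq self_mem_Ici).symm
end

section
/- Let (w_c,w_r) be a pair of weights on ℝ satisfying condition (3.1). Then h_r(t) ≤ 𝔥(t) for every t ≥ 0, and 𝔥(1+t) ≤ h_r(t) for every t ≥ 0. -/
/-!
For `h_r(t) ≤ 𝔥(t)`: since `w_c = 1` on `(0, ∞)`, an admissible set `A` has Lebesgue measure at
most `t` in `(0, ∞)`, so the part of `A` beyond `t` is no larger than the part of `(0, t]` that `A`
misses. As `w_r` is nonincreasing, trading the former for the latter can only increase the
`w_r`-mass, whence `∫_{(t,∞)} w_r ≤ ∫_{ℝ∖A} w_r`. For `𝔥(1 + t) ≤ h_r(t)`, take `A = (-∞, t]`.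
-/

open MeasureTheory Set
open scoped ENNReal

/-- Condition (3.1) for a pair of strictly positive weights `(w_c, w_r)` on `ℝ`:
`w_c = 1` on `(0,∞)`, `w_c` is nondecreasing and left-continuous with
`∫_{-∞}^0 w_c = 1`; `w_r = 1` on `(-∞,0)`, `w_r` is nonincreasing and
right-continuous with `∫_0^∞ w_r = 1`. -/
structure Weight31 (wc wr : ℝ → ℝ) : Prop where
  wc_pos : ∀ s, 0 < wc s
  wr_pos : ∀ s, 0 < wr s
  wc_one : ∀ s : ℝ, 0 < s → wc s = 1
  wc_mono : Monotone wc
  wc_lc : ∀ t : ℝ, ContinuousWithinAt wc (Iic t) t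
  wc_int : IntegrableOn wc (Iic 0)
  wc_total : (∫ s in Iic (0:ℝ), wc s) = 1
  wr_one : ∀ s : ℝ, s < 0 → wr s = 1
  wr_anti : Antitone wr
  wr_rc : ∀ t : ℝ, ContinuousWithinAt wr (Ici t) t
  wr_int : IntegrableOn wr (Ici 0)
  wr_total : (∫ s in Ici (0:ℝ), wr s) = 1

theorem setLIntegral_le_setLIntegral_of_le_of_le {α : Type*} [MeasurableSpace α]
    {μ : Measure α} {f : α → ℝ≥0∞} {S T : Set α} {c : ℝ≥0∞} (hT : MeasurableSet T)
    (hS_le : ∀ x ∈ S, f x ≤ c) (hT_ge : ∀ x ∈ T, c ≤ f x) (hST : μ S ≤ μ T) :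
    ∫⁻ x in S, f x ∂μ ≤ ∫⁻ x in T, f x ∂μ :=
  calc ∫⁻ x in S, f x ∂μ ≤ ∫⁻ _ in S, c ∂μ := setLIntegral_mono measurable_const hS_le
    _ = c * μ S := setLIntegral_const S c
    _ ≤ c * μ T := mul_le_mul_right hST c
    _ = ∫⁻ _ in T, c ∂μ := (setLIntegral_const T c).symm
    _ ≤ ∫⁻ x in T, f x ∂μ := setLIntegral_mono' hT hT_ge

theorem volume_Ioi_inter_le_volume_Ioc_diff {A : Set ℝ} (hA : MeasurableSet A) {a t : ℝ}
    (hat : a ≤ t) (hAt : volume (Ioi a ∩ A) ≤ ENNReal.ofReal (t - a)) :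
    volume (Ioi t ∩ A) ≤ volume (Ioc a t \ A) := by
  have hfin : volume (Ioc a t ∩ A) ≠ ∞ :=
    ((measure_mono inter_subset_left).trans_lt measure_Ioc_lt_top).ne
  refine (ENNReal.add_le_add_iff_left hfin).mp ?_
  calc volume (Ioc a t ∩ A) + volume (Ioi t ∩ A)
      = volume ((Ioc a t ∪ Ioi t) ∩ A) := by
        rw [union_inter_distrib_right, measure_union
          ((Ioc_disjoint_Ioi le_rfl).mono inter_subset_left inter_subset_left)
          (measurableSet_Ioi.inter hA)]
    _ = volume (Ioi a ∩ A) := by rw [Ioc_union_Ioi_eq_Ioi hat]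
    _ ≤ ENNReal.ofReal (t - a) := hAt
    _ = volume (Ioc a t ∩ A) + volume (Ioc a t \ A) := by
        rw [measure_inter_add_sdiff _ hA, Real.volume_Ioc]

theorem lintegral_Ioi_le_lintegral_compl_of_antitone {f : ℝ → ℝ≥0∞} (hf : Antitone f)
    {A : Set ℝ} (hA : MeasurableSet A) {a t : ℝ} (hat : a ≤ t)
    (hAt : volume (Ioi a ∩ A) ≤ ENNReal.ofReal (t - a)) :
    ∫⁻ s in Ioi t, f s ≤ ∫⁻ s in Aᶜ, f s := by
  have hexchange : ∫⁻ s in Ioi t ∩ A, f s ≤ ∫⁻ s in Ioc a t \ A, f s :=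
    setLIntegral_le_setLIntegral_of_le_of_le (c := f t) (measurableSet_Ioc.diff hA)
      (fun s hs => hf hs.1.le) (fun s hs => hf hs.1.2)
      (volume_Ioi_inter_le_volume_Ioc_diff hA hat hAt)
  calc ∫⁻ s in Ioi t, f s
      = (∫⁻ s in Ioi t ∩ A, f s) + ∫⁻ s in Ioi t \ A, f s :=
        (lintegral_inter_add_sdiff f _ hA).symm
    _ ≤ (∫⁻ s in Ioc a t \ A, f s) + ∫⁻ s in Ioi t \ A, f s := by gcongr
    _ = ∫⁻ s in (Ioc a t \ A) ∪ (Ioi t \ A), f s :=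
        (lintegral_union (measurableSet_Ioi.diff hA)
          ((Ioc_disjoint_Ioi le_rfl).mono sdiff_subset sdiff_subset)).symm
    _ ≤ ∫⁻ s in Aᶜ, f s := lintegral_mono_set (union_subset (fun s hs => hs.2) fun s hs => hs.2)

namespace Weight31

variable {wc wr : ℝ → ℝ}

theorem setLIntegral_wc_eq_volume (hw : Weight31 wc wr) {S : Set ℝ} (hS : MeasurableSet S)
    (hS_pos : S ⊆ Ioi 0) : ∫⁻ s in S, ENNReal.ofReal (wc s) = volume S := by
  rw [setLIntegral_congr_fun hS fun s hs => by rw [hw.wc_one s (hS_pos hs), ENNReal.ofReal_one],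
    setLIntegral_one]

theorem volume_Ioi_zero_inter_le (hw : Weight31 wc wr) {A : Set ℝ} (hA : MeasurableSet A) :
    volume (Ioi 0 ∩ A) ≤ ∫⁻ s in A, ENNReal.ofReal (wc s) := by
  rw [← hw.setLIntegral_wc_eq_volume (measurableSet_Ioi.inter hA) inter_subset_left]
  exact lintegral_mono_set inter_subset_right

theorem setLIntegral_wc_Iic (hw : Weight31 wc wr) {t : ℝ} (ht : 0 ≤ t) :
    ∫⁻ s in Iic t, ENNReal.ofReal (wc s) = ENNReal.ofReal (1 + t) := by
  have hneg : ∫⁻ s in Iic 0, ENNReal.ofReal (wc s) = 1 := by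
    rw [← ofReal_integral_eq_lintegral_ofReal hw.wc_int
      (Filter.Eventually.of_forall fun s => (hw.wc_pos s).le), hw.wc_total, ENNReal.ofReal_one]
  rw [← Iic_union_Ioc_eq_Iic ht, lintegral_union measurableSet_Ioc (Iic_disjoint_Ioc le_rfl),
    hneg, hw.setLIntegral_wc_eq_volume measurableSet_Ioc Ioc_subset_Ioi_self, Real.volume_Ioc,
    sub_zero, ENNReal.ofReal_add zero_le_one ht, ENNReal.ofReal_one]

theorem ofReal_setIntegral_wr_Ioi (hw : Weight31 wc wr) {t : ℝ} (ht : 0 ≤ t) :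
    ENNReal.ofReal (∫ s in Ioi t, wr s) = ∫⁻ s in Ioi t, ENNReal.ofReal (wr s) :=
  ofReal_integral_eq_lintegral_ofReal (hw.wr_int.mono_set (Ioi_subset_Ici ht))
    (Filter.Eventually.of_forall fun s => (hw.wr_pos s).le)

end Weight31

/-- The two inequalities from the start of the proof of Lemma 3.4:
`h_r(t) ≤ 𝔥(t)` and `𝔥(1+t) ≤ h_r(t)` for every `t ≥ 0`, where
`h_r(t) = ∫_t^∞ w_r` and
`𝔥(t) = inf{∫_{ℝ∖A} w_r : A measurable, ∫_A w_c ≤ t}`. -/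
theorem stmt_8 (wc wr : ℝ → ℝ) (hw : Weight31 wc wr)
    (hr : ℝ → ℝ) (hhr : ∀ t, hr t = ∫ s in Ioi t, wr s)
    (H : ℝ → ℝ≥0∞)
    (hH : ∀ t : ℝ, H t = sInf {x : ℝ≥0∞ | ∃ A : Set ℝ, MeasurableSet A ∧
        (∫⁻ s in A, ENNReal.ofReal (wc s)) ≤ ENNReal.ofReal t ∧
        x = ∫⁻ s in Aᶜ, ENNReal.ofReal (wr s)}) :
    ∀ t : ℝ, 0 ≤ t →
      ENNReal.ofReal (hr t) ≤ H t ∧ H (1 + t) ≤ ENNReal.ofReal (hr t) := by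
  intro t ht
  rw [hH, hH, hhr, hw.ofReal_setIntegral_wr_Ioi ht]
  refine ⟨le_sInf ?_,
    sInf_le ⟨Iic t, measurableSet_Iic, (hw.setLIntegral_wc_Iic ht).le, by rw [compl_Iic]⟩⟩
  rintro _ ⟨A, hA, hAt, rfl⟩
  exact lintegral_Ioi_le_lintegral_compl_of_antitone
    (ENNReal.ofReal_mono.comp_antitone hw.wr_anti) hA ht
    ((hw.volume_Ioi_zero_inter_le hA).trans (by rwa [sub_zero]))
end

section
/- Let (w_c,w_r) be a pair of weights on ℝ satisfying condition (3.1). For a finite sequence x=(x_1,…,x_n) of complex numbers define N(x) = inf{ max_{1≤k≤n} ‖a_k‖_{L²(w_c)} + (Σ_{k=1}^n ‖b_k‖²_{L²(w_r)})^{1/2} }, the infimum being over all a_k ∈ L²(ℝ, w_c ds) and b_k ∈ L²(ℝ, w_r ds) with x_k = a_k(s)+b_k(s) for almost every s ∈ ℝ; and define ‖x‖' = inf{ max_{1≤k≤n} |x_k|·(∫_{A_k} w_c ds)^{1/2} + (Σ_{k=1}^n |x_k|²·∫_{ℝ∖A_k} w_r ds)^{1/2} }, the infimum being over all Lebesgue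 measurable sets A_1,…,A_n ⊆ ℝ. Then (1/2)·‖x‖' ≤ N(x) ≤ ‖x‖'. -/
open MeasureTheory Set
open scoped ENNReal

/-!
A decomposition `x_k = a_k + b_k` gives the sets `A_k = {s | |x_k| ≤ 2 |a_k(s)|}`: on `A_k` the
constant `x_k` is at most `2 |a_k|`, and off `A_k` the triangle inequality forces
`|x_k| ≤ 2 |b_k|`, which costs the factor `2`. Conversely, sets `A_k` give the decomposition
`a_k = x_k 1_{A_k}`, `b_k = x_k 1_{A_kᶜ}`, whose cost is exactly that of the sets.
-/

namespace ENNReal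

lemma sq_rpow_half (a : ℝ≥0∞) : (a ^ 2) ^ (1 / 2 : ℝ) = a := by
  rw [← rpow_natCast, ← rpow_mul]
  norm_num

lemma sq_mul_rpow_half (c a : ℝ≥0∞) : (c ^ 2 * a) ^ (1 / 2 : ℝ) = c * a ^ (1 / 2 : ℝ) := by
  rw [mul_rpow_of_nonneg _ _ (by norm_num), sq_rpow_half]

lemma four_mul_rpow_half (a : ℝ≥0∞) : (4 * a) ^ (1 / 2 : ℝ) = 2 * a ^ (1 / 2 : ℝ) := by
  rw [show (4 : ℝ≥0∞) = 2 ^ 2 by norm_num, sq_mul_rpow_half]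

lemma sInf_le_mul_sInf {S T : Set ℝ≥0∞} {c : ℝ≥0∞} (hc₀ : c ≠ 0) (hc : c ≠ ∞)
    (h : ∀ v ∈ S, sInf T ≤ c * v) : sInf T ≤ c * sInf S := by
  rw [sInf_eq_iInf (s := S), mul_iInf_of_ne hc₀ hc]
  refine le_iInf fun v => ?_
  rw [mul_iInf_of_ne hc₀ hc]
  exact le_iInf (h v)

end ENNReal

section WeightedDecomposition

variable {α ι E : Type*} [MeasurableSpace α] [Fintype ι] [NormedAddCommGroup E]

lemma const_sq_mul_setLIntegral_le (μ : Measure α) (w : α → ℝ≥0∞) {A : Set α} {c : E}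
    {f : α → E} (h : ∀ᵐ s ∂μ.restrict A, ‖c‖ ≤ 2 * ‖f s‖) :
    (‖c‖₊ : ℝ≥0∞) ^ 2 * ∫⁻ s in A, w s ∂μ ≤ 4 * ∫⁻ s, (‖f s‖₊ : ℝ≥0∞) ^ 2 * w s ∂μ := by
  rw [← lintegral_const_mul' _ _ (by simp), ← lintegral_const_mul' _ _ (by simp)]
  calc ∫⁻ s in A, (‖c‖₊ : ℝ≥0∞) ^ 2 * w s ∂μ
      ≤ ∫⁻ s in A, 4 * ((‖f s‖₊ : ℝ≥0∞) ^ 2 * w s) ∂μ := by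
        refine lintegral_mono_ae ?_
        filter_upwards [h] with s hs
        have hs' : (‖c‖₊ : ℝ≥0∞) ≤ 2 * ‖f s‖₊ := by
          exact_mod_cast (show ‖c‖₊ ≤ 2 * ‖f s‖₊ by rw [← NNReal.coe_le_coe]; simpa using hs)
        calc (‖c‖₊ : ℝ≥0∞) ^ 2 * w s ≤ (2 * (‖f s‖₊ : ℝ≥0∞)) ^ 2 * w s := by gcongr
          _ = 4 * ((‖f s‖₊ : ℝ≥0∞) ^ 2 * w s) := by ring
    _ ≤ ∫⁻ s, 4 * ((‖f s‖₊ : ℝ≥0∞) ^ 2 * w s) ∂μ := setLIntegral_le_lintegral _ _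

lemma lintegral_nnnorm_indicator_const_sq_mul (μ : Measure α) (w : α → ℝ≥0∞) {B : Set α}
    (hB : MeasurableSet B) (c : E) :
    ∫⁻ s, (‖B.indicator (fun _ => c) s‖₊ : ℝ≥0∞) ^ 2 * w s ∂μ =
      (‖c‖₊ : ℝ≥0∞) ^ 2 * ∫⁻ s in B, w s ∂μ := by
  rw [← lintegral_const_mul' _ _ (by simp), ← lintegral_indicator hB]
  congr 1 with s
  by_cases hs : s ∈ B <;> simp [hs]

variable (μ : Measure α) (wc wr : α → ℝ≥0∞)

noncomputable def decompCost (a b : ι → α → E) : ℝ≥0∞ :=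
  (⨆ k, (∫⁻ s, (‖a k s‖₊ : ℝ≥0∞) ^ 2 * wc s ∂μ) ^ (1 / 2 : ℝ))
    + (∑ k, ∫⁻ s, (‖b k s‖₊ : ℝ≥0∞) ^ 2 * wr s ∂μ) ^ (1 / 2 : ℝ)

noncomputable def setDecompCost (x : ι → E) (A : ι → Set α) : ℝ≥0∞ :=
  (⨆ k, (‖x k‖₊ : ℝ≥0∞) * (∫⁻ s in A k, wc s ∂μ) ^ (1 / 2 : ℝ))
    + (∑ k, (‖x k‖₊ : ℝ≥0∞) ^ 2 * ∫⁻ s in (A k)ᶜ, wr s ∂μ) ^ (1 / 2 : ℝ)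

lemma decompCost_indicator (x : ι → E) {A : ι → Set α} (hA : ∀ k, MeasurableSet (A k)) :
    decompCost μ wc wr (fun k => (A k).indicator fun _ => x k)
      (fun k => (A k)ᶜ.indicator fun _ => x k) = setDecompCost μ wc wr x A := by
  simp only [decompCost, setDecompCost, lintegral_nnnorm_indicator_const_sq_mul _ _ (hA _),
    lintegral_nnnorm_indicator_const_sq_mul _ _ (hA _).compl, ENNReal.sq_mul_rpow_half]

lemma exists_setDecompCost_le_two_mul_decompCost [MeasurableSpace E] [OpensMeasurableSpace E]
    {x : ι → E} {a b : ι → α → E}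
    (ha : ∀ k, Measurable (a k)) (hab : ∀ k, ∀ᵐ s ∂μ, x k = a k s + b k s) :
    ∃ A : ι → Set α, (∀ k, MeasurableSet (A k)) ∧
      setDecompCost μ wc wr x A ≤ 2 * decompCost μ wc wr a b := by
  let A k := {s | ‖x k‖ ≤ 2 * ‖a k s‖}
  have hA k : MeasurableSet (A k) := measurableSet_le measurable_const ((ha k).norm.const_mul 2)
  have hb k : ∀ᵐ s ∂μ.restrict (A k)ᶜ, ‖x k‖ ≤ 2 * ‖b k s‖ := by
    filter_upwards [ae_restrict_mem (hA k).compl, ae_restrict_of_ae (hab k)] with s hs hx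
    have : 2 * ‖a k s‖ < ‖x k‖ := not_le.mp hs
    have : ‖x k‖ ≤ ‖a k s‖ + ‖b k s‖ := hx ▸ norm_add_le _ _
    linarith
  refine ⟨A, hA, ?_⟩
  rw [setDecompCost, decompCost, mul_add]
  refine add_le_add ?_ ?_
  · refine iSup_le fun k => le_trans ?_ (mul_le_mul_right (le_iSup_of_le k le_rfl) 2)
    rw [← ENNReal.sq_mul_rpow_half, ← ENNReal.four_mul_rpow_half]
    exact ENNReal.rpow_le_rpow (const_sq_mul_setLIntegral_le μ wc (ae_restrict_mem (hA k)))
      (by norm_num)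
  · rw [← ENNReal.four_mul_rpow_half, Finset.mul_sum]
    exact ENNReal.rpow_le_rpow
      (Finset.sum_le_sum fun k _ => const_sq_mul_setLIntegral_le μ wr (hb k)) (by norm_num)

end WeightedDecomposition

theorem stmt_9_general (wc wr : ℝ → ℝ)
    (n : ℕ) (x : Fin n → ℂ) (N N' : ℝ≥0∞)
    (hN : N = sInf {v : ℝ≥0∞ | ∃ a b : Fin n → ℝ → ℂ,
        (∀ k, Measurable (a k)) ∧ (∀ k, Measurable (b k)) ∧
        (∀ k, ∀ᵐ s ∂(volume : Measure ℝ), x k = a k s + b k s) ∧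
        v = (⨆ k, (∫⁻ s, (‖a k s‖₊ : ℝ≥0∞) ^ 2 * ENNReal.ofReal (wc s)) ^ (1/2 : ℝ))
          + (∑ k, ∫⁻ s, (‖b k s‖₊ : ℝ≥0∞) ^ 2 * ENNReal.ofReal (wr s)) ^ (1/2 : ℝ)})
    (hN' : N' = sInf {v : ℝ≥0∞ | ∃ A : Fin n → Set ℝ,
        (∀ k, MeasurableSet (A k)) ∧
        v = (⨆ k, (‖x k‖₊ : ℝ≥0∞) * (∫⁻ s in A k, ENNReal.ofReal (wc s)) ^ (1/2 : ℝ))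
          + (∑ k, (‖x k‖₊ : ℝ≥0∞) ^ 2 * ∫⁻ s in (A k)ᶜ, ENNReal.ofReal (wr s)) ^ (1/2 : ℝ)}) :
    N' ≤ 2 * N ∧ N ≤ N' := by
  set w₁ : ℝ → ℝ≥0∞ := fun s => ENNReal.ofReal (wc s)
  set w₂ : ℝ → ℝ≥0∞ := fun s => ENNReal.ofReal (wr s)
  change N = sInf {v | ∃ a b : Fin n → ℝ → ℂ, (∀ k, Measurable (a k)) ∧
    (∀ k, Measurable (b k)) ∧ (∀ k, ∀ᵐ s, x k = a k s + b k s) ∧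
    v = decompCost volume w₁ w₂ a b} at hN
  change N' = sInf {v | ∃ A : Fin n → Set ℝ, (∀ k, MeasurableSet (A k)) ∧
    v = setDecompCost volume w₁ w₂ x A} at hN'
  subst hN hN'
  constructor
  · refine ENNReal.sInf_le_mul_sInf two_ne_zero ENNReal.ofNat_ne_top ?_
    rintro _ ⟨a, b, ha, -, hab, rfl⟩
    obtain ⟨A, hA, hle⟩ := exists_setDecompCost_le_two_mul_decompCost volume w₁ w₂ ha hab
    exact le_trans (sInf_le ⟨A, hA, rfl⟩) hle
  · refine le_sInf ?_
    rintro _ ⟨A, hA, rfl⟩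
    refine sInf_le ?_
    exact ⟨_, _, fun k => measurable_const.indicator (hA k),
      fun k => measurable_const.indicator (hA k).compl,
      fun k => ae_of_all _ fun s => (indicator_self_add_compl_apply (A k) (fun _ => x k) s).symm,
      (decompCost_indicator volume w₁ w₂ x hA).symm⟩

/-- The two-sided comparison from the proof of Lemma 3.4 between the
decomposition functional
`N(x) = inf{ sup_k ‖a_k‖_{L²(w_c)} + (Σ_k ‖b_k‖²_{L²(w_r)})^{1/2} : x_k = a_k + b_k a.e. }`
and the set-decomposition functional
`‖x‖' = inf{ sup_k |x_k| (∫_{A_k} w_c)^{1/2} + (Σ_k |x_k|² ∫_{ℝ∖A_k} w_r)^{1/2} }`: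
one has `(1/2)·‖x‖' ≤ N(x) ≤ ‖x‖'` (stated in `[0,∞]`). -/
theorem stmt_9 (wc wr : ℝ → ℝ) (hw : Weight31 wc wr)
    (n : ℕ) (x : Fin n → ℂ) (N N' : ℝ≥0∞)
    (hN : N = sInf {v : ℝ≥0∞ | ∃ a b : Fin n → ℝ → ℂ,
        (∀ k, Measurable (a k)) ∧ (∀ k, Measurable (b k)) ∧
        (∀ k, ∀ᵐ s ∂(volume : Measure ℝ), x k = a k s + b k s) ∧
        v = (⨆ k, (∫⁻ s, (‖a k s‖₊ : ℝ≥0∞) ^ 2 * ENNReal.ofReal (wc s)) ^ (1/2 : ℝ))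
          + (∑ k, ∫⁻ s, (‖b k s‖₊ : ℝ≥0∞) ^ 2 * ENNReal.ofReal (wr s)) ^ (1/2 : ℝ)})
    (hN' : N' = sInf {v : ℝ≥0∞ | ∃ A : Fin n → Set ℝ,
        (∀ k, MeasurableSet (A k)) ∧
        v = (⨆ k, (‖x k‖₊ : ℝ≥0∞) * (∫⁻ s in A k, ENNReal.ofReal (wc s)) ^ (1/2 : ℝ))
          + (∑ k, (‖x k‖₊ : ℝ≥0∞) ^ 2 * ∫⁻ s in (A k)ᶜ, ENNReal.ofReal (wr s)) ^ (1/2 : ℝ)}) :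
    N' ≤ 2 * N ∧ N ≤ N' :=
  stmt_9_general wc wr n x N N' hN hN'
end

section
/- Let (w_c,w_r) be a pair of weights on ℝ satisfying condition (3.1), and let ϕ(0)=0, ϕ(t)=t²·𝔥(1/t²) ∈ [0,∞] for t>0. For a finite sequence x=(x_1,…,x_n) of complex numbers define its Luxemburg gauge ‖x‖_ϕ = inf{λ>0 : Σ_{k=1}^n ϕ(|x_k|/λ) ≤ 1}, and define ‖x‖' = inf{ max_{1≤k≤n} |x_k|·(∫_{A_k} w_c ds)^{1/2} + (Σ_{k=1}^n |x_k|²·∫_{ℝ∖A_k} w_r ds)^{1/2} }, the infimum being over all Lebesgue measurable sets A_1,…,A_n ⊆ ℝ. Then ‖x‖_ϕ ≤ ‖x‖' ≤ 2‖x‖_ϕ. -/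
/-!
Write `c A = ∫_A w_c` and `r A = ∫_{ℝ∖A} w_r`, so that `𝔥(t)` is the least `r A` over sets with
`c A ≤ t`. For `a, λ > 0` one has `λ² ϕ(a/λ) = a² 𝔥(λ²/a²)`, and `a (c A)^{1/2} ≤ λ` says exactly
`c A ≤ λ²/a²`. So if sets `A_k` give `‖x‖'`-value `M + S^{1/2} ≤ λ`, each `A_k` competes in
`𝔥(λ²/|x_k|²)` and `λ² Σ ϕ(|x_k|/λ) ≤ S ≤ λ²`: `λ` lies in the gauge set. Conversely, for `λ` in
the gauge set, nearly optimal sets for the `𝔥(λ²/|x_k|²)` make both `M` and `S^{1/2}` at most `λ`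
up to `ε`. The weights enter only through `𝔥 ≤ 1` on `[1, ∞)` (take `A = (-∞, 0]`), which gives
`ϕ(t) ≤ t²` on `[0, 1]` and hence a nonempty gauge set.
-/

open MeasureTheory Set
open scoped ENNReal NNReal

theorem le_ofReal_div_sq_iff {a : ℝ≥0} (ha : a ≠ 0) {l : ℝ} (hl : 0 ≤ l) {x : ℝ≥0∞} :
    x ≤ ENNReal.ofReal (l ^ 2 / a ^ 2) ↔ a * x ^ (1 / 2 : ℝ) ≤ ENNReal.ofReal l := by
  rw [← ENNReal.rpow_le_rpow_iff (x := a * _) two_pos, ENNReal.mul_rpow_of_nonneg _ _ zero_le_two,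
    ← ENNReal.rpow_mul, ENNReal.ofReal_rpow_of_nonneg hl zero_le_two,
    one_div_mul_cancel two_ne_zero, ENNReal.rpow_one, ENNReal.rpow_two, Real.rpow_two, mul_comm,
    ENNReal.ofReal_div_of_pos (by positivity), ENNReal.le_div_iff_mul_le (by simp [ha]) (by simp),
    ENNReal.ofReal_pow NNReal.zero_le_coe, ENNReal.ofReal_coe_nnreal]

theorem ENNReal.sq_rpow_half_s10 (x : ℝ≥0∞) : (x ^ 2) ^ (1 / 2 : ℝ) = x := by
  simpa [one_div] using ENNReal.pow_rpow_inv_natCast two_ne_zero x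

theorem ofReal_sInf_le_of_forall {S : Set ℝ} {v : ℝ≥0∞}
    (h : ∀ l, 0 < l → v ≤ ENNReal.ofReal l → l ∈ S) : ENNReal.ofReal (sInf S) ≤ v := by
  by_cases hS : BddBelow S
  swap
  · simp [Real.sInf_of_not_bddBelow hS]
  refine ENNReal.le_of_forall_pos_le_add fun ε hε hv => ?_
  have hl : 0 < v.toReal + ε := by positivity
  have hveq : ENNReal.ofReal (v.toReal + ε) = v + ε := by
    rw [ENNReal.ofReal_add ENNReal.toReal_nonneg ε.coe_nonneg, ENNReal.ofReal_toReal hv.ne,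
      ENNReal.ofReal_coe_nnreal]
  rw [← hveq]
  exact ENNReal.ofReal_le_ofReal (csInf_le hS (h _ hl (hveq ▸ le_self_add)))

theorem le_ofReal_mul_sInf {S : Set ℝ} (hne : S.Nonempty) (hbdd : BddBelow S) {c : ℝ}
    (hc : 0 ≤ c) {v : ℝ≥0∞} (h : ∀ l ∈ S, v ≤ ENNReal.ofReal (c * l)) :
    v ≤ ENNReal.ofReal (c * sInf S) := by
  have hmono : Monotone fun l => ENNReal.ofReal (c * l) := fun _ _ hxy =>
    ENNReal.ofReal_le_ofReal (mul_le_mul_of_nonneg_left hxy hc)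
  have hcont : Continuous fun l => ENNReal.ofReal (c * l) :=
    ENNReal.continuous_ofReal.comp (continuous_const_mul c)
  rw [hmono.map_csInf_of_continuousAt hcont.continuousAt hne hbdd]
  exact le_sInf (forall_mem_image.2 h)

namespace Decomposition

variable {α ι : Type*} {P : α → Prop} {c r : α → ℝ≥0∞} {H φ : ℝ → ℝ≥0∞}

theorem le_of_admissible
    (hH : ∀ t, H t = sInf {y | ∃ A, P A ∧ c A ≤ ENNReal.ofReal t ∧ y = r A})
    {t : ℝ} {A : α} (hA : P A) (hcA : c A ≤ ENNReal.ofReal t) : H t ≤ r A :=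
  (hH t).trans_le (sInf_le ⟨A, hA, hcA, rfl⟩)

theorem exists_admissible_lt
    (hH : ∀ t, H t = sInf {y | ∃ A, P A ∧ c A ≤ ENNReal.ofReal t ∧ y = r A})
    {t : ℝ} {y : ℝ≥0∞} (h : H t < y) : ∃ A, P A ∧ c A ≤ ENNReal.ofReal t ∧ r A < y := by
  rw [hH, sInf_lt_iff] at h
  obtain ⟨_, ⟨A, hA, hcA, rfl⟩, hlt⟩ := h
  exact ⟨A, hA, hcA, hlt⟩

theorem sq_mul_eq_ofReal_sq_mul
    (hφ : ∀ t, 0 < t → φ t = ENNReal.ofReal (t ^ 2) * H (1 / t ^ 2))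
    {a : ℝ≥0} (ha : a ≠ 0) {l : ℝ} (hl : 0 < l) :
    (a : ℝ≥0∞) ^ 2 * H (l ^ 2 / a ^ 2) = ENNReal.ofReal (l ^ 2) * φ (a / l) := by
  have ha' : (0 : ℝ) < a := by positivity
  rw [hφ _ (by positivity), ← mul_assoc, ← ENNReal.ofReal_mul (by positivity)]
  congr 2
  · rw [← ENNReal.ofReal_coe_nnreal, ← ENNReal.ofReal_pow (by positivity)]
    congr 1
    field_simp
  · field_simp

theorem ofReal_sq_mul_le_of_admissible
    (hH : ∀ t, H t = sInf {y | ∃ A, P A ∧ c A ≤ ENNReal.ofReal t ∧ y = r A})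
    (hφ0 : φ 0 = 0) (hφ : ∀ t, 0 < t → φ t = ENNReal.ofReal (t ^ 2) * H (1 / t ^ 2))
    {a : ℝ≥0} {l : ℝ} (hl : 0 < l) {A : α} (hA : P A)
    (hcA : a * c A ^ (1 / 2 : ℝ) ≤ ENNReal.ofReal l) :
    ENNReal.ofReal (l ^ 2) * φ (a / l) ≤ a ^ 2 * r A := by
  rcases eq_or_ne a 0 with rfl | ha
  · simp [hφ0]
  rw [← sq_mul_eq_ofReal_sq_mul hφ ha hl]
  gcongr
  exact le_of_admissible hH hA ((le_ofReal_div_sq_iff ha hl.le).2 hcA)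

theorem exists_admissible_sq_mul_le
    (hH : ∀ t, H t = sInf {y | ∃ A, P A ∧ c A ≤ ENNReal.ofReal t ∧ y = r A})
    (hφ : ∀ t, 0 < t → φ t = ENNReal.ofReal (t ^ 2) * H (1 / t ^ 2)) (hP : ∃ A, P A)
    {a : ℝ≥0} {l : ℝ} (hl : 0 < l) (hφa : φ (a / l) ≠ ⊤) {ε : ℝ≥0∞} (hε : ε ≠ 0) :
    ∃ A, P A ∧ a * c A ^ (1 / 2 : ℝ) ≤ ENNReal.ofReal l ∧
      a ^ 2 * r A ≤ ENNReal.ofReal (l ^ 2) * φ (a / l) + ε := by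
  rcases eq_or_ne a 0 with rfl | ha
  · obtain ⟨A, hA⟩ := hP
    exact ⟨A, hA, by simp, by simp⟩
  have ha2 : (a : ℝ≥0∞) ^ 2 ≠ 0 := by simpa using ha
  have ha2_top : (a : ℝ≥0∞) ^ 2 ≠ ⊤ := by simp
  have hH_top : H (l ^ 2 / a ^ 2) ≠ ⊤ := by
    intro htop
    have := sq_mul_eq_ofReal_sq_mul hφ ha hl
    rw [htop, ENNReal.mul_top ha2, eq_comm, ENNReal.mul_eq_top] at this
    rcases this with ⟨-, h⟩ | ⟨h, -⟩
    exacts [hφa h, ENNReal.ofReal_ne_top h]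
  obtain ⟨A, hA, hcA, hrA⟩ := exists_admissible_lt hH
    (ENNReal.lt_add_right hH_top (ENNReal.div_ne_zero.2 ⟨hε, ha2_top⟩))
  refine ⟨A, hA, (le_ofReal_div_sq_iff ha hl.le).1 hcA, ?_⟩
  calc (a : ℝ≥0∞) ^ 2 * r A ≤ a ^ 2 * (H (l ^ 2 / a ^ 2) + ε / a ^ 2) := by gcongr
    _ = ENNReal.ofReal (l ^ 2) * φ (a / l) + ε := by
      rw [mul_add, ENNReal.mul_div_cancel ha2 ha2_top, sq_mul_eq_ofReal_sq_mul hφ ha hl]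

variable [Fintype ι]

noncomputable def decompositionValue (c r : α → ℝ≥0∞) (a : ι → ℝ≥0) (A : ι → α) : ℝ≥0∞ :=
  (⨆ k, (a k : ℝ≥0∞) * c (A k) ^ (1 / 2 : ℝ)) + (∑ k, (a k : ℝ≥0∞) ^ 2 * r (A k)) ^ (1 / 2 : ℝ)

theorem sum_le_one_of_decompositionValue_le
    (hH : ∀ t, H t = sInf {y | ∃ A, P A ∧ c A ≤ ENNReal.ofReal t ∧ y = r A})
    (hφ0 : φ 0 = 0) (hφ : ∀ t, 0 < t → φ t = ENNReal.ofReal (t ^ 2) * H (1 / t ^ 2))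
    {a : ι → ℝ≥0} {A : ι → α} (hA : ∀ k, P (A k)) {l : ℝ} (hl : 0 < l)
    (h : decompositionValue c r a A ≤ ENNReal.ofReal l) : ∑ k, φ (a k / l) ≤ 1 := by
  have hsup : ∀ k, (a k : ℝ≥0∞) * c (A k) ^ (1 / 2 : ℝ) ≤ ENNReal.ofReal l := fun k =>
    ((le_iSup (fun k => (a k : ℝ≥0∞) * c (A k) ^ (1 / 2 : ℝ)) k).trans le_self_add).trans h
  have hsum : ∑ k, (a k : ℝ≥0∞) ^ 2 * r (A k) ≤ ENNReal.ofReal (l ^ 2) := by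
    have hroot : (∑ k, (a k : ℝ≥0∞) ^ 2 * r (A k)) ^ (2⁻¹ : ℝ) ≤ ENNReal.ofReal l := by
      rw [← one_div]
      exact le_add_self.trans h
    rw [ENNReal.ofReal_pow hl.le, ← ENNReal.rpow_two]
    exact (ENNReal.rpow_inv_le_iff two_pos).1 hroot
  have hl2 : ENNReal.ofReal (l ^ 2) ≠ 0 := by simp [hl.ne']
  rw [← ENNReal.mul_le_mul_iff_right hl2 ENNReal.ofReal_ne_top, mul_one, Finset.mul_sum]
  exact (Finset.sum_le_sum fun k _ =>
    ofReal_sq_mul_le_of_admissible hH hφ0 hφ hl (hA k) (hsup k)).trans hsum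

theorem exists_decompositionValue_le
    (hH : ∀ t, H t = sInf {y | ∃ A, P A ∧ c A ≤ ENNReal.ofReal t ∧ y = r A})
    (hφ : ∀ t, 0 < t → φ t = ENNReal.ofReal (t ^ 2) * H (1 / t ^ 2)) (hP : ∃ A, P A)
    {a : ι → ℝ≥0} {l : ℝ} (hl : 0 < l) (hφa : ∑ k, φ (a k / l) ≤ 1) {δ : ℝ≥0} (hδ : 0 < δ) :
    ∃ A : ι → α, (∀ k, P (A k)) ∧ decompositionValue c r a A ≤ ENNReal.ofReal (2 * l) + δ := by
  have hε : ((δ : ℝ≥0∞) ^ 2 / Fintype.card ι) ≠ 0 := by simp [hδ.ne']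
  choose A hA hcA hrA using fun k => exists_admissible_sq_mul_le hH hφ hP hl
    (ne_top_of_le_ne_top ENNReal.one_ne_top
      ((Finset.single_le_sum (fun j _ => zero_le) (Finset.mem_univ k)).trans hφa)) hε
  refine ⟨A, hA, ?_⟩
  have hsum : ∑ k, (a k : ℝ≥0∞) ^ 2 * r (A k) ≤ ENNReal.ofReal (l ^ 2) + δ ^ 2 :=
    calc ∑ k, (a k : ℝ≥0∞) ^ 2 * r (A k)
        ≤ ∑ k, (ENNReal.ofReal (l ^ 2) * φ (a k / l) + (δ : ℝ≥0∞) ^ 2 / Fintype.card ι) :=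
          Finset.sum_le_sum fun k _ => hrA k
      _ ≤ ENNReal.ofReal (l ^ 2) * 1 + δ ^ 2 := by
          rw [Finset.sum_add_distrib, ← Finset.mul_sum, Finset.sum_const, Finset.card_univ,
            nsmul_eq_mul]
          gcongr
          exact ENNReal.mul_div_le
      _ = ENNReal.ofReal (l ^ 2) + δ ^ 2 := by rw [mul_one]
  calc decompositionValue c r a A
      ≤ ENNReal.ofReal l + (ENNReal.ofReal (l ^ 2) + δ ^ 2) ^ (1 / 2 : ℝ) :=
        add_le_add (iSup_le hcA) (ENNReal.rpow_le_rpow hsum (by norm_num))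
    _ ≤ ENNReal.ofReal l +
          (ENNReal.ofReal (l ^ 2) ^ (1 / 2 : ℝ) + ((δ : ℝ≥0∞) ^ 2) ^ (1 / 2 : ℝ)) := by
        gcongr
        exact ENNReal.rpow_add_le_add_rpow _ _ (by norm_num) (by norm_num)
    _ = ENNReal.ofReal (2 * l) + δ := by
        rw [ENNReal.ofReal_pow hl.le, ENNReal.sq_rpow_half_s10, ENNReal.sq_rpow_half_s10, two_mul,
          ENNReal.ofReal_add hl.le hl.le, add_assoc]

theorem le_ofReal_sq_of_le_one (hφ0 : φ 0 = 0)
    (hφ : ∀ t, 0 < t → φ t = ENNReal.ofReal (t ^ 2) * H (1 / t ^ 2))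
    (hH1 : ∀ t, 1 ≤ t → H t ≤ 1) {t : ℝ} (ht0 : 0 ≤ t) (ht1 : t ≤ 1) :
    φ t ≤ ENNReal.ofReal (t ^ 2) := by
  rcases ht0.eq_or_lt with rfl | ht
  · simp [hφ0]
  rw [hφ t ht]
  exact mul_le_of_le_one_right' (hH1 _ (one_le_one_div (by positivity) (pow_le_one₀ ht0 ht1)))

theorem exists_sum_le_one_of_le_ofReal_sq
    (hφ : ∀ t, 0 ≤ t → t ≤ 1 → φ t ≤ ENNReal.ofReal (t ^ 2)) (a : ι → ℝ≥0) :
    ∃ l : ℝ, 0 < l ∧ ∑ k, φ (a k / l) ≤ 1 := by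
  set s := ∑ k, (a k : ℝ)
  have hs : 0 ≤ s := by positivity
  have hl : 0 < s + 1 := by positivity
  have hak : ∀ k, (a k : ℝ) ≤ s := fun k =>
    Finset.single_le_sum (f := fun k => (a k : ℝ)) (fun _ _ => (a _).2) (Finset.mem_univ k)
  refine ⟨s + 1, hl, ?_⟩
  calc ∑ k, φ (a k / (s + 1)) ≤ ∑ k, ENNReal.ofReal (a k / (s + 1)) := by
        refine Finset.sum_le_sum fun k _ => ?_
        have h0 : 0 ≤ (a k : ℝ) / (s + 1) := by positivity
        have h1 : (a k : ℝ) / (s + 1) ≤ 1 := (div_le_one hl).2 (by linarith [hak k])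
        exact (hφ _ h0 h1).trans (ENNReal.ofReal_le_ofReal (sq_le h0 h1))
    _ = ENNReal.ofReal (s / (s + 1)) := by
        rw [← ENNReal.ofReal_sum_of_nonneg fun k _ => by positivity, Finset.sum_div]
    _ ≤ 1 := ENNReal.ofReal_le_one.2 ((div_le_one hl).2 (by linarith))

end Decomposition

open Decomposition

theorem Weight31.lintegral_wc_Iic {wc wr : ℝ → ℝ} (hw : Weight31 wc wr) :
    ∫⁻ s in Iic 0, ENNReal.ofReal (wc s) = 1 := by
  rw [← ofReal_integral_eq_lintegral_ofReal hw.wc_int (ae_of_all _ fun s => (hw.wc_pos s).le),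
    hw.wc_total, ENNReal.ofReal_one]

theorem Weight31.lintegral_wr_compl_Iic {wc wr : ℝ → ℝ} (hw : Weight31 wc wr) :
    ∫⁻ s in (Iic 0)ᶜ, ENNReal.ofReal (wr s) = 1 := by
  rw [compl_Iic, setLIntegral_congr Ioi_ae_eq_Ici,
    ← ofReal_integral_eq_lintegral_ofReal hw.wr_int (ae_of_all _ fun s => (hw.wr_pos s).le),
    hw.wr_total, ENNReal.ofReal_one]

/-- The equivalence from the proof of Lemma 3.4 between the set-decomposition
functional `‖x‖'` and the Luxemburg gauge of `ϕ(t) = t²·𝔥(1/t²)`, where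
`𝔥(t) = inf{∫_{ℝ∖A} w_r : ∫_A w_c ≤ t}`: one has `‖x‖_ϕ ≤ ‖x‖' ≤ 2‖x‖_ϕ`. -/
theorem stmt_10 (wc wr : ℝ → ℝ) (hw : Weight31 wc wr)
    (H : ℝ → ℝ≥0∞)
    (hH : ∀ t : ℝ, H t = sInf {x : ℝ≥0∞ | ∃ A : Set ℝ, MeasurableSet A ∧
        (∫⁻ s in A, ENNReal.ofReal (wc s)) ≤ ENNReal.ofReal t ∧
        x = ∫⁻ s in Aᶜ, ENNReal.ofReal (wr s)})
    (φ : ℝ → ℝ≥0∞) (hφ0 : φ 0 = 0)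
    (hφ : ∀ t : ℝ, 0 < t → φ t = ENNReal.ofReal (t ^ 2) * H (1 / t ^ 2))
    (n : ℕ) (x : Fin n → ℂ)
    (gauge : ℝ)
    (hgauge : gauge = sInf {lam : ℝ | 0 < lam ∧ (∑ k, φ (‖x k‖ / lam)) ≤ 1})
    (N' : ℝ≥0∞)
    (hN' : N' = sInf {v : ℝ≥0∞ | ∃ A : Fin n → Set ℝ,
        (∀ k, MeasurableSet (A k)) ∧
        v = (⨆ k, (‖x k‖₊ : ℝ≥0∞) * (∫⁻ s in A k, ENNReal.ofReal (wc s)) ^ (1/2 : ℝ))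
          + (∑ k, (‖x k‖₊ : ℝ≥0∞) ^ 2 * ∫⁻ s in (A k)ᶜ, ENNReal.ofReal (wr s)) ^ (1/2 : ℝ)}) :
    ENNReal.ofReal gauge ≤ N' ∧ N' ≤ ENNReal.ofReal (2 * gauge) := by
  set c : Set ℝ → ℝ≥0∞ := fun A => ∫⁻ s in A, ENNReal.ofReal (wc s)
  set r : Set ℝ → ℝ≥0∞ := fun A => ∫⁻ s in Aᶜ, ENNReal.ofReal (wr s)
  have hH' : ∀ t, H t = sInf {y | ∃ A, MeasurableSet A ∧ c A ≤ ENNReal.ofReal t ∧ y = r A} := hH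
  have hH1 : ∀ t, 1 ≤ t → H t ≤ 1 := fun t ht => by
    simpa only [r, hw.lintegral_wr_compl_Iic] using le_of_admissible hH' measurableSet_Iic
      (hw.lintegral_wc_Iic.trans_le (ENNReal.one_le_ofReal.2 ht))
  simp only [← coe_nnnorm] at hgauge
  subst hgauge hN'
  constructor
  · refine le_sInf ?_
    rintro _ ⟨A, hA, rfl⟩
    exact ofReal_sInf_le_of_forall fun l hl hv =>
      ⟨hl, sum_le_one_of_decompositionValue_le hH' hφ0 hφ hA hl hv⟩
  · obtain ⟨l₀, hl₀, hsum₀⟩ := exists_sum_le_one_of_le_ofReal_sq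
      (fun t ht0 ht1 => le_ofReal_sq_of_le_one hφ0 hφ hH1 ht0 ht1) fun k => ‖x k‖₊
    refine le_ofReal_mul_sInf ?_ ⟨0, fun _ hl => hl.1.le⟩ zero_le_two ?_
    · exact ⟨l₀, hl₀, hsum₀⟩
    rintro l ⟨hl, hsum⟩
    refine ENNReal.le_of_forall_pos_le_add fun δ hδ _ => ?_
    obtain ⟨A, hA, hle⟩ := exists_decompositionValue_le hH' hφ ⟨∅, .empty⟩ hl hsum hδ
    exact (sInf_le (by exact ⟨A, hA, rfl⟩)).trans hle
end

section
/- Let (Ω,ν) be a measure space, let u,v:Ω→(0,∞) be measurable, and let f:Ω→ℂ be measurable. Then, as an identity in [0,∞], inf{ ∫_Ω (|g|²·u + |h|²·v) dν : g,h measurable, f = g + h ν-almost everywhere } = ∫_Ω |f|²·(u·v)/(u+v) dν, and the infimum is attained at g = (v/(u+v))·f, h = (u/(u+v))·f. -/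
/-!
Pointwise, `(a + b)² uv ≤ (a²u + b²v)(u + v)` since the difference is `(au - bv)²`, so by the
triangle inequality every splitting `f = g + h` has energy at least `|f|² uv/(u+v)` at each point,
with equality for `g = (v/(u+v)) f`, `h = (u/(u+v)) f`. The infimum is therefore a minimum,
attained at this measurable splitting.
-/

open MeasureTheory
open scoped ENNReal

section Pointwise

variable {E : Type*} {u v : ℝ}

lemma add_sq_mul_div_le (a b : ℝ) (huv : 0 < u + v) :
    (a + b) ^ 2 * (u * v / (u + v)) ≤ a ^ 2 * u + b ^ 2 * v := by
  rw [mul_div_assoc', div_le_iff₀ huv]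
  nlinarith [sq_nonneg (a * u - b * v)]

lemma div_sq_mul_add_div_sq_mul (u v : ℝ) :
    (v / (u + v)) ^ 2 * u + (u / (u + v)) ^ 2 * v = u * v / (u + v) := by
  rcases eq_or_ne (u + v) 0 with huv | huv
  · simp [huv]
  · field_simp
    ring

lemma norm_add_sq_mul_div_le [SeminormedAddCommGroup E] (y z : E) (hu : 0 ≤ u) (hv : 0 ≤ v) :
    ‖y + z‖ ^ 2 * (u * v / (u + v)) ≤ ‖y‖ ^ 2 * u + ‖z‖ ^ 2 * v := by
  rcases (add_nonneg hu hv).eq_or_lt' with huv | huv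
  · rw [huv, div_zero, mul_zero]
    positivity
  · calc ‖y + z‖ ^ 2 * (u * v / (u + v))
        ≤ (‖y‖ + ‖z‖) ^ 2 * (u * v / (u + v)) := by gcongr; exact norm_add_le y z
      _ ≤ ‖y‖ ^ 2 * u + ‖z‖ ^ 2 * v := add_sq_mul_div_le _ _ huv

lemma norm_div_smul_sq_mul_add [SeminormedAddCommGroup E] [NormedSpace ℝ E] (x : E) (u v : ℝ) :
    ‖(v / (u + v)) • x‖ ^ 2 * u + ‖(u / (u + v)) • x‖ ^ 2 * v
      = ‖x‖ ^ 2 * (u * v / (u + v)) := by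
  simp only [norm_smul, mul_pow, Real.norm_eq_abs, sq_abs]
  rw [← div_sq_mul_add_div_sq_mul u v]
  ring

lemma div_smul_add_div_smul [AddCommGroup E] [Module ℝ E] (x : E) (huv : u + v ≠ 0) :
    (v / (u + v)) • x + (u / (u + v)) • x = x := by
  rw [← add_smul, ← add_div, add_comm v, div_self huv, one_smul]

lemma coe_nnnorm_sq_mul_ofReal [SeminormedAddCommGroup E] (x : E) (w : ℝ) :
    (‖x‖₊ : ℝ≥0∞) ^ 2 * ENNReal.ofReal w = ENNReal.ofReal (‖x‖ ^ 2 * w) := by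
  rw [ENNReal.ofReal_mul (by positivity), ENNReal.ofReal_pow (norm_nonneg x), ofReal_norm,
    enorm_eq_nnnorm]

lemma coe_nnnorm_sq_mul_ofReal_add [SeminormedAddCommGroup E] (y z : E) (hu : 0 ≤ u)
    (hv : 0 ≤ v) :
    (‖y‖₊ : ℝ≥0∞) ^ 2 * ENNReal.ofReal u + (‖z‖₊ : ℝ≥0∞) ^ 2 * ENNReal.ofReal v
      = ENNReal.ofReal (‖y‖ ^ 2 * u + ‖z‖ ^ 2 * v) := by
  rw [coe_nnnorm_sq_mul_ofReal, coe_nnnorm_sq_mul_ofReal, ENNReal.ofReal_add (by positivity)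
    (by positivity)]

lemma coe_nnnorm_add_sq_mul_ofReal_le [SeminormedAddCommGroup E] (y z : E) (hu : 0 ≤ u)
    (hv : 0 ≤ v) :
    (‖y + z‖₊ : ℝ≥0∞) ^ 2 * ENNReal.ofReal (u * v / (u + v))
      ≤ (‖y‖₊ : ℝ≥0∞) ^ 2 * ENNReal.ofReal u + (‖z‖₊ : ℝ≥0∞) ^ 2 * ENNReal.ofReal v := by
  rw [coe_nnnorm_sq_mul_ofReal, coe_nnnorm_sq_mul_ofReal_add y z hu hv]
  exact ENNReal.ofReal_le_ofReal (norm_add_sq_mul_div_le y z hu hv)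

lemma coe_nnnorm_div_smul_sq_mul_ofReal_add [SeminormedAddCommGroup E] [NormedSpace ℝ E] (x : E)
    (hu : 0 ≤ u) (hv : 0 ≤ v) :
    (‖(v / (u + v)) • x‖₊ : ℝ≥0∞) ^ 2 * ENNReal.ofReal u
        + (‖(u / (u + v)) • x‖₊ : ℝ≥0∞) ^ 2 * ENNReal.ofReal v
      = (‖x‖₊ : ℝ≥0∞) ^ 2 * ENNReal.ofReal (u * v / (u + v)) := by
  rw [coe_nnnorm_sq_mul_ofReal_add _ _ hu hv, norm_div_smul_sq_mul_add, coe_nnnorm_sq_mul_ofReal]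

end Pointwise

/-- The exact computation from Section 2, based on
`inf_{0≤t≤1}(t²u + (1−t)²v) = uv/(u+v)`: as an identity in `[0,∞]`,
`inf{∫(|g|²u + |h|²v) dν : f = g + h a.e.} = ∫ |f|²·uv/(u+v) dν`, and the
infimum is attained at `g = (v/(u+v))f`, `h = (u/(u+v))f`. -/
theorem stmt_13 {Ω : Type*} [MeasurableSpace Ω] (ν : Measure Ω)
    (u v : Ω → ℝ) (hu : Measurable u) (hv : Measurable v)
    (hu_pos : ∀ ω, 0 < u ω) (hv_pos : ∀ ω, 0 < v ω)
    (f : Ω → ℂ) (hf : Measurable f) :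
    sInf {x : ℝ≥0∞ | ∃ g h : Ω → ℂ, Measurable g ∧ Measurable h ∧
        (∀ᵐ ω ∂ν, f ω = g ω + h ω) ∧
        x = ∫⁻ ω, ((‖g ω‖₊ : ℝ≥0∞) ^ 2 * ENNReal.ofReal (u ω)
              + (‖h ω‖₊ : ℝ≥0∞) ^ 2 * ENNReal.ofReal (v ω)) ∂ν}
      = (∫⁻ ω, (‖f ω‖₊ : ℝ≥0∞) ^ 2
            * ENNReal.ofReal (u ω * v ω / (u ω + v ω)) ∂ν) ∧
    (∫⁻ ω, ((‖((v ω / (u ω + v ω) : ℝ) : ℂ) * f ω‖₊ : ℝ≥0∞) ^ 2 * ENNReal.ofReal (u ω)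
          + (‖((u ω / (u ω + v ω) : ℝ) : ℂ) * f ω‖₊ : ℝ≥0∞) ^ 2 * ENNReal.ofReal (v ω)) ∂ν)
      = (∫⁻ ω, (‖f ω‖₊ : ℝ≥0∞) ^ 2
            * ENNReal.ofReal (u ω * v ω / (u ω + v ω)) ∂ν) := by
  have hattained := lintegral_congr (μ := ν) fun ω => by
    simpa only [Complex.real_smul] using
      coe_nnnorm_div_smul_sq_mul_ofReal_add (f ω) (hu_pos ω).le (hv_pos ω).le
  have hsplit : ∀ ω, f ω = ((v ω / (u ω + v ω) : ℝ) : ℂ) * f ω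
      + ((u ω / (u ω + v ω) : ℝ) : ℂ) * f ω := fun ω => by
    simpa only [Complex.real_smul] using
      (div_smul_add_div_smul (f ω) (add_pos (hu_pos ω) (hv_pos ω)).ne').symm
  refine ⟨IsLeast.csInf_eq ⟨⟨_, _, by fun_prop, by fun_prop, ae_of_all ν hsplit,
    hattained.symm⟩, ?_⟩, hattained⟩
  rintro _ ⟨g, h, -, -, hfgh, rfl⟩
  refine lintegral_mono_ae (hfgh.mono fun ω hω => ?_)
  rw [hω]
  exact coe_nnnorm_add_sq_mul_ofReal_le _ _ (hu_pos ω).le (hv_pos ω).le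
end

section
/- Let ψ:[0,∞)→[0,∞) be defined by ψ(0)=0 and ψ(t)=t²·log(t + 1/t) for t>0, and let ψ⁻¹(t)=sup{s ≥ 0 : ψ(s) ≤ t} be its generalized inverse. Then lim_{t→0⁺} ψ⁻¹(t)·(log(1/t))^{1/2}/(2t)^{1/2} = 1; consequently there exist constants c,C>0 such that c·(n·log(n+1))^{1/2} ≤ 1/ψ⁻¹(1/n) ≤ C·(n·log(n+1))^{1/2} for all integers n ≥ 1. -/
/-!
On `(0, ∞)` the function `ψ` is a strictly increasing bijection, so `ψ⁻¹` is its honest inverse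
there. Put `s = ψ⁻¹(t)` and `ℓ(s) = log (s + 1/s) = log (1/s) + o(1)`, so that `t = s² ℓ(s)`.
Then `log (1/t) = 2 ℓ(s) - log ℓ(s) + o(1) = 2 ℓ(s) (1 + o(1))`, and
`ψ⁻¹(t)² log (1/t) / (2t) = log (1/t) / (2 ℓ(s)) → 1` as `t → 0⁺`.
At `t = 1/n` this says that `(1/ψ⁻¹(1/n)) / √(n log (n+1)) → 1/√2`, and a sequence of positive
reals with a positive limit is bounded above and below by positive constants.
-/

open Set Filter Topology Real

lemma csSup_nonneg_sublevel_eq {f : ℝ → ℝ} (hf : StrictMonoOn f (Ioi 0)) {s : ℝ} (hs : 0 < s) :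
    sSup {x | 0 ≤ x ∧ f x ≤ f s} = s := by
  refine IsGreatest.csSup_eq ⟨⟨hs.le, le_rfl⟩, fun x hx => ?_⟩
  by_contra! hsx
  exact (hf hs (hs.trans hsx) hsx).not_ge hx.2

lemma exists_pos_mul_le_of_tendsto_div {u v : ℕ → ℝ} {l : ℝ} (hu : ∀ n, 1 ≤ n → 0 < u n)
    (hv : ∀ n, 1 ≤ n → 0 < v n) (hl : 0 < l) (h : Tendsto (fun n => u n / v n) atTop (𝓝 l)) :
    ∃ c C : ℝ, 0 < c ∧ 0 < C ∧ ∀ n, 1 ≤ n → c * v n ≤ u n ∧ u n ≤ C * v n := by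
  obtain ⟨C, hC⟩ := h.bddAbove_range
  obtain ⟨M, hM⟩ := (h.inv₀ hl.ne').bddAbove_range
  have hr : ∀ n, 1 ≤ n → 0 < u n / v n := fun n hn => div_pos (hu n hn) (hv n hn)
  have hC0 : 0 < C := (hr 1 le_rfl).trans_le (hC (mem_range_self 1))
  have hM0 : 0 < M := (inv_pos.2 (hr 1 le_rfl)).trans_le (hM (mem_range_self 1))
  refine ⟨M⁻¹, C, inv_pos.2 hM0, hC0, fun n hn => ⟨?_, ?_⟩⟩
  · have h := hM (mem_range_self n)
    rw [inv_div, div_le_iff₀ (hu n hn)] at h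
    rwa [inv_mul_le_iff₀ hM0]
  · have h := hC (mem_range_self n)
    rwa [div_le_iff₀ (hv n hn)] at h

lemma tendsto_log_div_log_add_one : Tendsto (fun n : ℕ => log n / log (n + 1)) atTop (𝓝 1) := by
  have hlog : Tendsto (fun n : ℕ => log (n + 1)) atTop atTop :=
    tendsto_log_atTop.comp (tendsto_atTop_add_const_right _ 1 tendsto_natCast_atTop_atTop)
  have hlow := (tendsto_const_nhds (x := (1 : ℝ))).sub
    ((tendsto_const_nhds (x := log 2)).div_atTop hlog)
  rw [sub_zero] at hlow
  refine tendsto_of_tendsto_of_tendsto_of_le_of_le' hlow tendsto_const_nhds ?_ ?_ <;>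
    filter_upwards [eventually_ge_atTop 1] with n hn
  all_goals
    have hn : (1 : ℝ) ≤ n := by exact_mod_cast hn
    have hpos : 0 < log (n + 1) := log_pos (by linarith)
  · have h : log (n + 1) ≤ log 2 + log n := by
      rw [← log_mul two_ne_zero (by positivity)]
      exact log_le_log (by positivity) (by linarith)
    rw [sub_le_iff_le_add, ← add_div, le_div_iff₀ hpos]
    linarith
  · exact div_le_one_of_le₀ (log_le_log (by positivity) (by linarith)) hpos.le

namespace OrliczLog

noncomputable def logTerm (s : ℝ) : ℝ := log (s + 1 / s)

noncomputable def psi (s : ℝ) : ℝ := s ^ 2 * logTerm s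

lemma two_le_add_one_div {s : ℝ} (hs : 0 < s) : 2 ≤ s + 1 / s := by
  rw [add_div' _ _ _ hs.ne', le_div_iff₀ hs]
  nlinarith [sq_nonneg (s - 1)]

lemma log_two_le_logTerm {s : ℝ} (hs : 0 < s) : log 2 ≤ logTerm s :=
  log_le_log two_pos (two_le_add_one_div hs)

lemma logTerm_pos {s : ℝ} (hs : 0 < s) : 0 < logTerm s :=
  (log_pos one_lt_two).trans_le (log_two_le_logTerm hs)

lemma logTerm_eq {s : ℝ} (hs : 0 < s) : logTerm s = log (s ^ 2 + 1) - log s := by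
  rw [logTerm, ← log_div (by positivity) hs.ne']
  congr 1
  field_simp

lemma tendsto_logTerm_nhdsGT_zero : Tendsto logTerm (𝓝[>] 0) atTop := by
  refine tendsto_atTop_mono' _ ?_ (tendsto_neg_atBot_atTop.comp tendsto_log_nhdsGT_zero)
  filter_upwards [self_mem_nhdsWithin] with s (hs : 0 < s)
  rw [Function.comp_apply, ← log_inv, logTerm]
  exact log_le_log (by positivity) (by rw [one_div]; linarith)

lemma hasDerivAt_psi {s : ℝ} (hs : 0 < s) :
    HasDerivAt psi (2 * s * logTerm s + s * (s ^ 2 - 1) / (s ^ 2 + 1)) s := by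
  have h : HasDerivAt (fun x : ℝ => x + 1 / x) (1 + -(s ^ 2)⁻¹) s := by
    simp only [one_div]
    exact (hasDerivAt_id' s).add (hasDerivAt_inv hs.ne')
  have hsq : HasDerivAt (fun x : ℝ => x ^ 2) (2 * s) s := by simpa using hasDerivAt_pow 2 s
  refine (hsq.mul (h.log (by positivity))).congr_deriv ?_
  rw [logTerm]
  field_simp
  ring

lemma deriv_psi_pos {s : ℝ} (hs : 0 < s) : 0 < deriv psi s := by
  rw [(hasDerivAt_psi hs).deriv]
  have h : -s ≤ s * (s ^ 2 - 1) / (s ^ 2 + 1) := by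
    rw [le_div_iff₀ (by positivity)]
    nlinarith [pow_pos hs 3]
  nlinarith [log_two_le_logTerm hs, log_two_gt_d9]

lemma continuousOn_psi : ContinuousOn psi (Ioi 0) :=
  fun _ hs => (hasDerivAt_psi hs).continuousAt.continuousWithinAt

lemma strictMonoOn_psi : StrictMonoOn psi (Ioi 0) :=
  strictMonoOn_of_deriv_pos (convex_Ioi 0) continuousOn_psi
    fun _ hs => deriv_psi_pos (interior_subset hs)

lemma tendsto_psi_nhdsGT_zero : Tendsto psi (𝓝[>] 0) (𝓝 0) := by
  have h : Tendsto (fun s : ℝ => s ^ 3 + s) (𝓝[>] 0) (𝓝 0) :=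
    (((continuous_pow 3).add continuous_id).tendsto' 0 0 (by simp)).mono_left nhdsWithin_le_nhds
  refine tendsto_of_tendsto_of_tendsto_of_le_of_le' tendsto_const_nhds h ?_ ?_ <;>
    filter_upwards [self_mem_nhdsWithin] with s (hs : 0 < s)
  · exact (mul_pos (by positivity) (logTerm_pos hs)).le
  · calc psi s ≤ s ^ 2 * (s + 1 / s) :=
          mul_le_mul_of_nonneg_left ((log_le_sub_one_of_pos (by positivity)).trans (by linarith))
            (by positivity)
      _ = s ^ 3 + s := by field_simp

lemma tendsto_psi_atTop : Tendsto psi atTop atTop := by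
  refine tendsto_atTop_mono' _ ?_
    ((tendsto_pow_atTop two_ne_zero).atTop_mul_const (log_pos one_lt_two))
  filter_upwards [eventually_gt_atTop 0] with s hs
  exact mul_le_mul_of_nonneg_left (log_two_le_logTerm hs) (by positivity)

lemma exists_psi_eq {t : ℝ} (ht : 0 < t) : ∃ s, 0 < s ∧ psi s = t := by
  obtain ⟨a, hat, ha⟩ :=
    ((tendsto_psi_nhdsGT_zero.eventually (ge_mem_nhds ht)).and self_mem_nhdsWithin).exists
  obtain ⟨b, htb, hab⟩ :=
    ((tendsto_psi_atTop.eventually_ge_atTop t).and (eventually_ge_atTop a)).exists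
  obtain ⟨s, hs, rfl⟩ := intermediate_value_Icc hab
    (continuousOn_psi.mono fun x hx => lt_of_lt_of_le ha hx.1) ⟨hat, htb⟩
  exact ⟨s, lt_of_lt_of_le ha hs.1, rfl⟩

lemma mul_sqrt_log_inv_psi_div {s : ℝ} (hs : 0 < s) :
    s * √(log (1 / psi s)) / √(2 * psi s) = √(log (1 / psi s) / (2 * logTerm s)) := by
  have hL := logTerm_pos hs
  rw [sqrt_div' _ (by positivity), psi,
    show 2 * (s ^ 2 * logTerm s) = s ^ 2 * (2 * logTerm s) by ring,
    sqrt_mul (sq_nonneg s), sqrt_sq hs.le]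
  field_simp

lemma tendsto_log_inv_psi_div_logTerm :
    Tendsto (fun s => log (1 / psi s) / (2 * logTerm s)) (𝓝[>] 0) (𝓝 1) := by
  have hsq : Tendsto (fun s : ℝ => log (s ^ 2 + 1)) (𝓝[>] 0) (𝓝 0) := by
    have hc : Continuous fun s : ℝ => log (s ^ 2 + 1) :=
      (continuous_pow 2).add continuous_const |>.log fun s => by dsimp; positivity
    exact (hc.tendsto' 0 0 (by simp)).mono_left nhdsWithin_le_nhds
  have hlog : Tendsto (fun s => log (logTerm s) / logTerm s) (𝓝[>] 0) (𝓝 0) :=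
    isLittleO_log_id_atTop.tendsto_div_nhds_zero.comp tendsto_logTerm_nhdsGT_zero
  have h := (tendsto_const_nhds (x := (1 : ℝ))).sub (hsq.div_atTop tendsto_logTerm_nhdsGT_zero)
    |>.sub (hlog.div_const 2)
  rw [sub_zero, zero_div, sub_zero] at h
  refine h.congr' ?_
  filter_upwards [self_mem_nhdsWithin] with s (hs : 0 < s)
  have hL := logTerm_pos hs
  have hlog_s : log s = log (s ^ 2 + 1) - logTerm s := by rw [logTerm_eq hs]; ring
  rw [psi, one_div, log_inv, log_mul (by positivity) hL.ne', log_pow, hlog_s]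
  field_simp
  ring

lemma tendsto_nhdsGT_zero_of_psi_rightInverse {φ : ℝ → ℝ}
    (hφ : ∀ t, 0 < t → 0 < φ t ∧ psi (φ t) = t) : Tendsto φ (𝓝[>] 0) (𝓝[>] 0) := by
  have hup : Tendsto (fun t => √(t / log 2)) (𝓝[>] 0) (𝓝 0) := by
    simpa using ((continuous_id.div_const _).sqrt.tendsto 0).mono_left nhdsWithin_le_nhds
  refine tendsto_nhdsWithin_iff.2
    ⟨tendsto_of_tendsto_of_tendsto_of_le_of_le' tendsto_const_nhds hup ?_ ?_, ?_⟩ <;>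
    filter_upwards [self_mem_nhdsWithin] with t (ht : 0 < t)
  · exact (hφ t ht).1.le
  · obtain ⟨hpos, hpsi⟩ := hφ t ht
    rw [le_sqrt' hpos, le_div_iff₀ (log_pos one_lt_two)]
    exact (mul_le_mul_of_nonneg_left (log_two_le_logTerm hpos) (sq_nonneg _)).trans_eq hpsi
  · exact (hφ t ht).1

lemma tendsto_mul_sqrt_log_div_sqrt_of_psi_rightInverse {φ : ℝ → ℝ}
    (hφ : ∀ t, 0 < t → 0 < φ t ∧ psi (φ t) = t) :
    Tendsto (fun t => φ t * √(log (1 / t)) / √(2 * t)) (𝓝[>] 0) (𝓝 1) := by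
  have h := (continuous_sqrt.tendsto 1).comp
    (tendsto_log_inv_psi_div_logTerm.comp (tendsto_nhdsGT_zero_of_psi_rightInverse hφ))
  rw [sqrt_one] at h
  refine h.congr' ?_
  filter_upwards [self_mem_nhdsWithin] with t (ht : 0 < t)
  obtain ⟨hpos, hpsi⟩ := hφ t ht
  rw [Function.comp_apply, Function.comp_apply, ← mul_sqrt_log_inv_psi_div hpos, hpsi]

end OrliczLog

lemma exists_bounds_one_div_of_tendsto {f : ℝ → ℝ} (hf : ∀ t, 0 < t → 0 < f t)
    (h : Tendsto (fun t => f t * √(log (1 / t)) / √(2 * t)) (𝓝[>] 0) (𝓝 1)) :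
    ∃ c C : ℝ, 0 < c ∧ 0 < C ∧ ∀ n : ℕ, 1 ≤ n →
      c * √(n * log (n + 1)) ≤ 1 / f (1 / n) ∧ 1 / f (1 / n) ≤ C * √(n * log (n + 1)) := by
  have hinv : Tendsto (fun n : ℕ => 1 / (n : ℝ)) atTop (𝓝[>] 0) := by
    simpa only [one_div, Function.comp_def] using
      tendsto_inv_atTop_nhdsGT_zero.comp tendsto_natCast_atTop_atTop
  have hratio := tendsto_log_div_log_add_one.sqrt.div ((h.comp hinv).const_mul √2) (by simp)
  rw [sqrt_one, mul_one] at hratio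
  refine exists_pos_mul_le_of_tendsto_div (fun n hn => ?_) (fun n hn => ?_) (by positivity)
    (hratio.congr' ?_)
  · have : (0 : ℝ) < n := by exact_mod_cast hn
    exact one_div_pos.2 (hf _ (by positivity))
  · have : (1 : ℝ) ≤ n := by exact_mod_cast hn
    exact sqrt_pos.2 (mul_pos (by linarith) (log_pos (by linarith)))
  filter_upwards [eventually_ge_atTop 2] with n hn
  have hn : (2 : ℝ) ≤ n := by exact_mod_cast hn
  have hx := hf (1 / n) (by positivity)
  have ha : 0 < log n := log_pos (by linarith)
  have hb : 0 < log (n + 1) := log_pos (by linarith)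
  simp only [Pi.div_apply, Function.comp_apply, one_div_one_div]
  generalize f (1 / n) = x at hx ⊢
  rw [sqrt_div' _ hb.le, sqrt_mul zero_le_two, one_div, sqrt_inv, sqrt_mul (by positivity)]
  field_simp

theorem stmt_16_general (ψ ψinv : ℝ → ℝ)
    (hψ : ∀ t : ℝ, 0 < t → ψ t = t ^ 2 * Real.log (t + 1 / t))
    (hψinv : ∀ t : ℝ, ψinv t = sSup {s : ℝ | 0 ≤ s ∧ ψ s ≤ t}) :
    Filter.Tendsto
      (fun t : ℝ => ψinv t * Real.sqrt (Real.log (1 / t)) / Real.sqrt (2 * t))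
      (nhdsWithin 0 (Ioi 0)) (nhds 1) ∧
    ∃ c C : ℝ, 0 < c ∧ 0 < C ∧ ∀ n : ℕ, 1 ≤ n →
      c * Real.sqrt ((n : ℝ) * Real.log ((n : ℝ) + 1)) ≤ 1 / ψinv (1 / (n : ℝ)) ∧
      1 / ψinv (1 / (n : ℝ)) ≤ C * Real.sqrt ((n : ℝ) * Real.log ((n : ℝ) + 1)) := by
  have hψ_mono : StrictMonoOn ψ (Ioi 0) :=
    OrliczLog.strictMonoOn_psi.congr fun s hs => (hψ s hs).symm
  have hψinv_psi : ∀ t, 0 < t → 0 < ψinv t ∧ OrliczLog.psi (ψinv t) = t := by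
    intro t ht
    obtain ⟨s, hs, rfl⟩ := OrliczLog.exists_psi_eq ht
    have hψs : ψ s = OrliczLog.psi s := hψ s hs
    rw [hψinv, ← hψs, csSup_nonneg_sublevel_eq hψ_mono hs]
    exact ⟨hs, hψs.symm⟩
  have hlim := OrliczLog.tendsto_mul_sqrt_log_div_sqrt_of_psi_rightInverse hψinv_psi
  exact ⟨hlim, exists_bounds_one_div_of_tendsto (fun t ht => (hψinv_psi t ht).1) hlim⟩

/-- The asymptotics from Section 6 for the Orlicz function
`ψ(t) = t² log(t + 1/t)`: its generalized inverse satisfies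
`ψ⁻¹(t)·(log(1/t))^{1/2}/(2t)^{1/2} → 1` as `t → 0⁺`, and consequently the
fundamental sequence satisfies `1/ψ⁻¹(1/n) ∼ √(n log(n+1))`. -/
theorem stmt_16 (ψ ψinv : ℝ → ℝ)
    (hψ0 : ψ 0 = 0)
    (hψ : ∀ t : ℝ, 0 < t → ψ t = t ^ 2 * Real.log (t + 1 / t))
    (hψinv : ∀ t : ℝ, ψinv t = sSup {s : ℝ | 0 ≤ s ∧ ψ s ≤ t}) :
    Filter.Tendsto
      (fun t : ℝ => ψinv t * Real.sqrt (Real.log (1 / t)) / Real.sqrt (2 * t))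
      (nhdsWithin 0 (Ioi 0)) (nhds 1) ∧
    ∃ c C : ℝ, 0 < c ∧ 0 < C ∧ ∀ n : ℕ, 1 ≤ n →
      c * Real.sqrt ((n : ℝ) * Real.log ((n : ℝ) + 1)) ≤ 1 / ψinv (1 / (n : ℝ)) ∧
      1 / ψinv (1 / (n : ℝ)) ≤ C * Real.sqrt ((n : ℝ) * Real.log ((n : ℝ) + 1)) :=
  stmt_16_general ψ ψinv hψ hψinv
end

section
/- Let w:(0,∞)→(0,∞) be nonincreasing, continuous and integrable, satisfying condition (3.6) with constants c₁,d₁>0 and α₁>1, and let h(t)=∫_t^∞ w(s) ds and g(s)=inf_{t>0} max(t, s·h(t)). Then there exist constants C₁,C₂>0 depending only on c₁,d₁,α₁ such that for all real numbers b ≥ a ≥ 1 with a/b ≤ w(1): C₁·a·g(b/a) ≤ ∫_0^∞ min(a, b·w(t)) dt ≤ C₂·a·g(b/a). -/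
open MeasureTheory Set Filter Topology

/-!
Let `t₀ ≥ 1` be the point where `b * w t₀ = a`; it exists by continuity, since (3.6) forces
`w t → 0`. Then `∫ min a (b * w) = a * t₀ + b * h t₀ = a * (t₀ + s * h t₀)` with
`s = b / a = 1 / w t₀`. Beyond `t₀`, (3.6) gives the power decay `w t ≤ w t₀ (t₀ / t) ^ α₁ / c₁`,
hence `h t₀ ≲ t₀ * w t₀`, while doubling gives `t₀ * w t₀ ≲ t₀ * w (2 * t₀) ≤ h t₀`. So `t₀` and
`s * h t₀` are comparable, and `g s` lies between their minimum and maximum because `h` is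
nonincreasing.
-/

lemma le_mul_rpow_neg_of_mul_div_rpow_le_div {c α s t x y : ℝ} (hc : 0 < c) (hs : 0 < s)
    (hst : s ≤ t) (hy : 0 < y) (h : c * (t / s) ^ α ≤ x / y) : y ≤ x * s ^ α / c * t ^ (-α) := by
  have ht : 0 < t := hs.trans_le hst
  have hsα : 0 < s ^ α := Real.rpow_pos_of_pos hs α
  have htα : 0 < t ^ α := Real.rpow_pos_of_pos ht α
  rw [Real.div_rpow ht.le hs.le, le_div_iff₀ hy] at h
  rw [Real.rpow_neg ht.le, ← div_eq_mul_inv, le_div_iff₀ htα, le_div_iff₀ hc]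
  calc y * t ^ α * c = c * (t ^ α / s ^ α) * y * s ^ α := by field_simp
    _ ≤ x * s ^ α := mul_le_mul_of_nonneg_right h hsα.le

lemma exists_mem_Ici_eq_of_tendsto_atTop {w : ℝ → ℝ} {s v y : ℝ} (hcont : ContinuousOn w (Ici s))
    (hlim : Tendsto w atTop (𝓝 v)) (hvy : v < y) (hys : y ≤ w s) : ∃ t ∈ Ici s, w t = y :=
  isPreconnected_Ici.intermediate_value_Ioc self_mem_Ici (le_principal_iff.2 (Ici_mem_atTop s))
    hcont hlim ⟨hvy, hys⟩

section TailBounds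

variable {w : ℝ → ℝ} {c α s : ℝ}

lemma tendsto_atTop_zero_of_mul_div_rpow_le_div (hc : 0 < c) (hα : 0 < α) (hs : 0 < s)
    (hpos : ∀ t ∈ Ici s, 0 < w t) (hreg : ∀ t ∈ Ici s, c * (t / s) ^ α ≤ w s / w t) :
    Tendsto w atTop (𝓝 0) := by
  have hdecay := (tendsto_rpow_neg_atTop hα).const_mul (w s * s ^ α / c)
  rw [mul_zero] at hdecay
  refine tendsto_of_tendsto_of_tendsto_of_le_of_le' tendsto_const_nhds hdecay ?_ ?_
  · filter_upwards [eventually_ge_atTop s] with t ht using (hpos t ht).le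
  · filter_upwards [eventually_ge_atTop s] with t ht using
      le_mul_rpow_neg_of_mul_div_rpow_le_div hc hs ht (hpos t ht) (hreg t ht)

lemma setIntegral_Ioi_le_of_le_rpow_neg {M : ℝ} (hα : 1 < α) (hs : 0 < s)
    (hw : IntegrableOn w (Ioi s)) (hle : ∀ t ∈ Ioi s, w t ≤ M * t ^ (-α)) :
    ∫ t in Ioi s, w t ≤ M * s ^ (1 - α) / (α - 1) := by
  have hα' : -α < -1 := by linarith
  calc ∫ t in Ioi s, w t ≤ ∫ t in Ioi s, M * t ^ (-α) :=
        setIntegral_mono_on hw ((integrableOn_Ioi_rpow_of_lt hα' hs).const_mul M)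
          measurableSet_Ioi hle
    _ = M * s ^ (1 - α) / (α - 1) := by
        rw [integral_const_mul, integral_Ioi_rpow_of_lt hα' hs, neg_add_eq_sub,
          ← neg_sub α 1, div_neg, neg_div, neg_neg, mul_div_assoc]

lemma setIntegral_Ioi_le_of_mul_div_rpow_le_div (hc : 0 < c) (hα : 1 < α) (hs : 0 < s)
    (hpos : ∀ t ∈ Ici s, 0 < w t) (hreg : ∀ t ∈ Ici s, c * (t / s) ^ α ≤ w s / w t)
    (hw : IntegrableOn w (Ioi s)) :
    ∫ t in Ioi s, w t ≤ s * w s / (c * (α - 1)) := by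
  have hpow : s ^ α * s ^ (1 - α) = s := by
    rw [← Real.rpow_add hs, add_sub_cancel, Real.rpow_one]
  calc ∫ t in Ioi s, w t ≤ w s * s ^ α / c * s ^ (1 - α) / (α - 1) :=
        setIntegral_Ioi_le_of_le_rpow_neg hα hs hw fun t ht =>
          le_mul_rpow_neg_of_mul_div_rpow_le_div hc hs ht.le (hpos t (Ioi_subset_Ici_self ht))
            (hreg t (Ioi_subset_Ici_self ht))
    _ = w s * (s ^ α * s ^ (1 - α)) / (c * (α - 1)) := by
        rw [div_mul_eq_mul_div, div_div, mul_assoc]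
    _ = s * w s / (c * (α - 1)) := by rw [hpow, mul_comm]

lemma sub_mul_le_setIntegral_Ioi {u v : ℝ} (huv : u ≤ v) (hanti : AntitoneOn w (Ioi u))
    (hnn : ∀ t ∈ Ioi u, 0 ≤ w t) (hw : IntegrableOn w (Ioi u)) :
    (v - u) * w v ≤ ∫ t in Ioi u, w t := by
  calc (v - u) * w v = ∫ _ in Ioc u v, w v := by
        rw [setIntegral_const, measureReal_def, Real.volume_Ioc,
          ENNReal.toReal_ofReal (sub_nonneg.2 huv), smul_eq_mul]
    _ ≤ ∫ t in Ioc u v, w t :=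
        setIntegral_mono_on (integrableOn_const measure_Ioc_lt_top.ne)
          (hw.mono_set Ioc_subset_Ioi_self) measurableSet_Ioc
          fun t ht => hanti ht.1 (ht.1.trans_le ht.2) ht.2
    _ ≤ ∫ t in Ioi u, w t :=
        setIntegral_mono_set hw (ae_restrict_of_forall_mem measurableSet_Ioi hnn)
          Ioc_subset_Ioi_self.eventuallyLE

lemma mul_le_mul_setIntegral_Ioi_of_div_le {t d : ℝ} (ht : 0 ≤ t) (hpos : ∀ u ∈ Ici t, 0 < w u)
    (hdbl : w t / w (2 * t) ≤ d) (hanti : AntitoneOn w (Ioi t)) (hw : IntegrableOn w (Ioi t)) :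
    t * w t ≤ d * ∫ u in Ioi t, w u := by
  have hw₂ : 0 < w (2 * t) := hpos _ (mem_Ici.2 (by linarith))
  have hd : 0 ≤ d := (div_pos (hpos t self_mem_Ici) hw₂).le.trans hdbl
  calc t * w t ≤ t * (d * w (2 * t)) := by gcongr; exact (div_le_iff₀ hw₂).1 hdbl
    _ = d * ((2 * t - t) * w (2 * t)) := by ring
    _ ≤ d * ∫ u in Ioi t, w u := by
      gcongr
      exact sub_mul_le_setIntegral_Ioi (by linarith) hanti
        (fun u hu => (hpos u (Ioi_subset_Ici_self hu)).le) hw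

lemma antitoneOn_setIntegral_Ioi {a : ℝ} (hnn : ∀ t ∈ Ioi a, 0 ≤ w t)
    (hw : IntegrableOn w (Ioi a)) : AntitoneOn (fun u => ∫ t in Ioi u, w t) (Ici a) :=
  fun _ hu _ _ huv =>
    setIntegral_mono_set (hw.mono_set (Ioi_subset_Ioi hu))
      (ae_restrict_of_forall_mem measurableSet_Ioi fun t ht => hnn t (mem_Ioi.2 (hu.trans_lt ht)))
      (Ioi_subset_Ioi huv).eventuallyLE

lemma setIntegral_Ioi_min_eq {a b t₀ : ℝ} (hanti : AntitoneOn w (Ioi 0))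
    (hw : IntegrableOn w (Ioi 0)) (hb : 0 ≤ b) (ht₀ : 0 < t₀) (hcross : b * w t₀ = a) :
    ∫ t in Ioi 0, min a (b * w t) = a * t₀ + b * ∫ t in Ioi t₀, w t := by
  have hleft : EqOn (fun t => min a (b * w t)) (fun _ => a) (Ioc 0 t₀) := fun t ht =>
    min_eq_left (hcross ▸ mul_le_mul_of_nonneg_left (hanti ht.1 ht₀ ht.2) hb)
  have hright : EqOn (fun t => min a (b * w t)) (fun t => b * w t) (Ioi t₀) := fun t ht =>
    min_eq_right (hcross ▸ mul_le_mul_of_nonneg_left (hanti ht₀ (ht₀.trans ht) ht.le) hb)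
  have hw₀ : IntegrableOn w (Ioi t₀) := hw.mono_set (Ioi_subset_Ioi ht₀.le)
  rw [← Ioc_union_Ioi_eq_Ioi ht₀.le, setIntegral_union (Ioc_disjoint_Ioi le_rfl) measurableSet_Ioi
      ((integrableOn_const measure_Ioc_lt_top.ne).congr_fun hleft.symm measurableSet_Ioc)
      (IntegrableOn.congr_fun (hw₀.const_mul b) hright.symm measurableSet_Ioi),
    setIntegral_congr_fun measurableSet_Ioc hleft, setIntegral_congr_fun measurableSet_Ioi hright,
    setIntegral_const, integral_const_mul, measureReal_def, Real.volume_Ioc, sub_zero,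
    ENNReal.toReal_ofReal ht₀.le, smul_eq_mul, mul_comm]

end TailBounds

section InfMax

variable {F : ℝ → ℝ} {s t₀ : ℝ}

lemma ciInf_max_le (ht₀ : 0 < t₀) :
    ⨅ t : Ioi (0 : ℝ), max (t : ℝ) (s * F t) ≤ max t₀ (s * F t₀) :=
  ciInf_le ⟨0, by rintro _ ⟨t, rfl⟩; exact t.2.le.trans (le_max_left _ _)⟩ (⟨t₀, ht₀⟩ : Ioi (0 : ℝ))

lemma min_le_ciInf_max (hs : 0 ≤ s) (hF : AntitoneOn F (Ioi 0)) (ht₀ : 0 < t₀) :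
    min t₀ (s * F t₀) ≤ ⨅ t : Ioi (0 : ℝ), max (t : ℝ) (s * F t) := by
  refine le_ciInf fun ⟨t, ht⟩ => ?_
  rcases le_total t t₀ with htt₀ | ht₀t
  · exact (min_le_right _ _).trans
      ((mul_le_mul_of_nonneg_left (hF ht ht₀ htt₀) hs).trans (le_max_right _ _))
  · exact (min_le_left _ _).trans (ht₀t.trans (le_max_left _ _))

end InfMax

lemma add_le_one_add_max_mul_min {x y K d : ℝ} (hx : 0 ≤ x) (hy : 0 ≤ y) (hyx : y ≤ K * x)
    (hxy : x ≤ d * y) : x + y ≤ (1 + max K d) * min x y := by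
  rcases min_cases x y with ⟨hm, -⟩ | ⟨hm, -⟩ <;> rw [hm]
  · nlinarith [le_max_left K d]
  · nlinarith [le_max_right K d]

theorem stmt_18_general (c₁ d₁ α₁ : ℝ) (hc₁ : 0 < c₁) (hα₁ : 1 < α₁) :
    ∃ C₁ C₂ : ℝ, 0 < C₁ ∧ 0 < C₂ ∧
      ∀ w h g : ℝ → ℝ,
        (∀ t ∈ Ioi (0:ℝ), 0 < w t) →
        AntitoneOn w (Ioi 0) →
        ContinuousOn w (Ioi 0) →
        IntegrableOn w (Ioi 0) →
        (∀ t, h t = ∫ s in Ioi t, w s) →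
        (∀ s, g s = ⨅ t : Ioi (0:ℝ), max (t : ℝ) (s * h (t : ℝ))) →
        (∀ s t : ℝ, 1 ≤ s → s ≤ t → c₁ * (t / s) ^ α₁ ≤ w s / w t) →
        (∀ s : ℝ, 1 ≤ s → w s / w (2 * s) ≤ d₁) →
        ∀ a b : ℝ, 1 ≤ a → a ≤ b → a / b ≤ w 1 →
          C₁ * (a * g (b / a)) ≤ (∫ t in Ioi (0:ℝ), min a (b * w t)) ∧
          (∫ t in Ioi (0:ℝ), min a (b * w t)) ≤ C₂ * (a * g (b / a)) := by
  refine ⟨1, 1 + max (c₁ * (α₁ - 1))⁻¹ d₁, one_pos, by positivity, ?_⟩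
  intro w h g hpos hanti hcont hw hh hg hreg hdbl a b ha hab haw
  obtain rfl : h = fun t => ∫ s in Ioi t, w s := funext hh
  obtain rfl : g = fun s => ⨅ t : Ioi (0:ℝ), max (t : ℝ) (s * ∫ u in Ioi (t : ℝ), w u) := funext hg
  have ha₀ : 0 < a := zero_lt_one.trans_le ha
  have hb₀ : 0 < b := ha₀.trans_le hab
  obtain ⟨t₀, ht₀ : 1 ≤ t₀, hwt₀⟩ : ∃ t₀ ∈ Ici (1 : ℝ), w t₀ = a / b :=
    exists_mem_Ici_eq_of_tendsto_atTop (hcont.mono (Ici_subset_Ioi.2 zero_lt_one))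
      (tendsto_atTop_zero_of_mul_div_rpow_le_div hc₁ (by linarith) one_pos
        (fun t ht => hpos t (mem_Ioi.2 (zero_lt_one.trans_le ht))) (fun t ht => hreg 1 t le_rfl ht))
      (div_pos ha₀ hb₀) haw
  have ht₀₀ : 0 < t₀ := zero_lt_one.trans_le ht₀
  have hpos₀ : ∀ t ∈ Ici t₀, 0 < w t := fun t ht => hpos t (mem_Ioi.2 (ht₀₀.trans_le ht))
  have hw₀ : IntegrableOn w (Ioi t₀) := hw.mono_set (Ioi_subset_Ioi ht₀₀.le)
  have hsw : b / a * w t₀ = 1 := by rw [hwt₀]; field_simp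
  set s := b / a
  set H := ∫ u in Ioi t₀, w u
  have hs : 0 ≤ s := (div_pos hb₀ ha₀).le
  have hsH : 0 ≤ s * H := mul_nonneg hs
    (setIntegral_nonneg measurableSet_Ioi fun t ht => (hpos₀ t (Ioi_subset_Ici_self ht)).le)
  have hupper : s * H ≤ (c₁ * (α₁ - 1))⁻¹ * t₀ := calc
    s * H ≤ s * (t₀ * w t₀ / (c₁ * (α₁ - 1))) := by
      gcongr
      exact setIntegral_Ioi_le_of_mul_div_rpow_le_div hc₁ hα₁ ht₀₀ hpos₀
        (fun t ht => hreg t₀ t ht₀ ht) hw₀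
    _ = (s * w t₀) * ((c₁ * (α₁ - 1))⁻¹ * t₀) := by ring
    _ = (c₁ * (α₁ - 1))⁻¹ * t₀ := by rw [hsw, one_mul]
  have hlower : t₀ ≤ d₁ * (s * H) := calc
    t₀ = s * (t₀ * w t₀) := by rw [mul_left_comm, hsw, mul_one]
    _ ≤ s * (d₁ * H) := mul_le_mul_of_nonneg_left
      (mul_le_mul_setIntegral_Ioi_of_div_le ht₀₀.le hpos₀ (hdbl t₀ ht₀)
        (hanti.mono (Ioi_subset_Ioi ht₀₀.le)) hw₀) hs
    _ = d₁ * (s * H) := mul_left_comm _ _ _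
  have hmin := min_le_ciInf_max hs
    ((antitoneOn_setIntegral_Ioi (fun t ht => (hpos t ht).le) hw).mono Ioi_subset_Ici_self) ht₀₀
  have hmax := ciInf_max_le (s := s) (F := fun t => ∫ u in Ioi t, w u) ht₀₀
  rw [setIntegral_Ioi_min_eq hanti hw hb₀.le ht₀₀ (by rw [hwt₀]; field_simp),
    show a * t₀ + b * H = a * (t₀ + s * H) by rw [mul_add, ← mul_assoc, mul_div_cancel₀ b ha₀.ne']]
  constructor
  · rw [one_mul]
    gcongr
    exact hmax.trans (max_le_add_of_nonneg ht₀₀.le hsH)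
  · rw [mul_left_comm]
    gcongr
    exact (add_le_one_add_max_mul_min ht₀₀.le hsH hupper hlower).trans (by gcongr)

/-- The one-dimensional integral estimate underlying the proof of Theorem 0.2:
for a regular (condition (3.6)) nonincreasing continuous integrable weight `w`
and `b ≥ a ≥ 1` with `a/b ≤ w(1)`, one has
`∫_0^∞ min(a, b·w(t)) dt ∼ a·g(b/a)`, with constants depending only on the
regularity constants. -/
theorem stmt_18 (c₁ d₁ α₁ : ℝ) (hc₁ : 0 < c₁) (hd₁ : 0 < d₁) (hα₁ : 1 < α₁) :
    ∃ C₁ C₂ : ℝ, 0 < C₁ ∧ 0 < C₂ ∧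
      ∀ w h g : ℝ → ℝ,
        (∀ t ∈ Ioi (0:ℝ), 0 < w t) →
        AntitoneOn w (Ioi 0) →
        ContinuousOn w (Ioi 0) →
        IntegrableOn w (Ioi 0) →
        (∀ t, h t = ∫ s in Ioi t, w s) →
        (∀ s, g s = ⨅ t : Ioi (0:ℝ), max (t : ℝ) (s * h (t : ℝ))) →
        (∀ s t : ℝ, 1 ≤ s → s ≤ t → c₁ * (t / s) ^ α₁ ≤ w s / w t) →
        (∀ s : ℝ, 1 ≤ s → w s / w (2 * s) ≤ d₁) →
        ∀ a b : ℝ, 1 ≤ a → a ≤ b → a / b ≤ w 1 →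
          C₁ * (a * g (b / a)) ≤ (∫ t in Ioi (0:ℝ), min a (b * w t)) ∧
          (∫ t in Ioi (0:ℝ), min a (b * w t)) ≤ C₂ * (a * g (b / a)) :=
  stmt_18_general c₁ d₁ α₁ hc₁ hα₁
end

section
/- Let g₁,g₂:[0,∞)→[0,∞) be increasing continuous bijections with g₁(1)=g₂(1)=1, each satisfying the two-sided regularity condition: c·(y/x)^α ≤ g_i(y)/g_i(x) ≤ d·(y/x)^β for all y ≥ x ≥ 1, where c,d>0 and 0<α≤β<1. Set w_i(t)=min(1, 1/g_i⁻¹(t)) for t>0. Then there exist constants C₁,C₂>0 depending only on c,d,α,β such that for all integers n ≥ 1: C₁·S_n ≤ ∫_0^∞ ∫_0^∞ min( n·w₁(s), n·w₂(t), n²·w₁(s)·w₂(t) ) ds dt ≤ C₂·S_n, where S_n = g₁(n)·g₂(n) + n·∫_1^{g₁(n)} g₂(g₁⁻¹(s))/g₁⁻¹(s) ds + n·∫_1^{g₂(n)} g₁(g₂⁻¹(t))/g₂⁻¹(t) dt. -/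
/-!
For fixed `s` put `m = min (max 1 (g₁⁻¹ s)) n`. Then the integrand equals
`n w₁(s) · min (1, m / max (1, g₂⁻¹ t))`, and the upper regularity of `g₂`
(`1 / g₂⁻¹ t ≲ t ^ (-1/β)`, integrable at infinity as `β < 1`) makes its `t`-integral comparable
to `n w₁(s) g₂(m)`. Integrating over `s` in `(0, 1]`, `(1, g₁ n]` and `(g₁ n, ∞)` gives `n`,
`n ∫₁^{g₁ n} g₂(g₁⁻¹ s) / g₁⁻¹ s ds` and a tail which the lower regularity of `g₁`
(`g₁ (K x) ≥ 2 g₁ x` for a constant `K`) makes comparable to `g₁(n) g₂(n)`. Fubini gives the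
same with `g₁` and `g₂` exchanged. The extra term `n` is dominated by `S_n`: either `g₁ n < 2`
and `n` is bounded, or `∫₁² g₂(g₁⁻¹ s) / g₁⁻¹ s ds` is bounded below.
-/

open MeasureTheory Set

noncomputable def growthConst (c α : ℝ) : ℝ := max 2 ((2 / c) ^ (1 / α))

noncomputable def tailConst (d β : ℝ) : ℝ := d ^ (1 / β) / (1 / β - 1)

lemma two_le_growthConst (c α : ℝ) : 2 ≤ growthConst c α := le_max_left _ _

lemma growthConst_pos (c α : ℝ) : 0 < growthConst c α :=
  two_pos.trans_le (two_le_growthConst c α)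

lemma tailConst_pos {d β : ℝ} (hd : 0 < d) (hβ₀ : 0 < β) (hβ : β < 1) :
    0 < tailConst d β := by
  have : 1 < 1 / β := by rw [lt_div_iff₀ hβ₀]; linarith
  exact div_pos (Real.rpow_pos_of_pos hd _) (by linarith)

lemma integral_Ioi_eq_integral_Ioc_add_integral_Ioi {f : ℝ → ℝ} {a b : ℝ} (hab : a ≤ b)
    (hf : IntegrableOn f (Ioi a)) :
    ∫ t in Ioi a, f t = (∫ t in Ioc a b, f t) + ∫ t in Ioi b, f t := by
  rw [← setIntegral_union (Ioc_disjoint_Ioi le_rfl) measurableSet_Ioi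
    (hf.mono_set Ioc_subset_Ioi_self) (hf.mono_set (Ioi_subset_Ioi hab)),
    Ioc_union_Ioi_eq_Ioi hab]

lemma min_div_min_div_mul_div {n u m : ℝ} (hn : 0 < n) (hu : 0 < u) (hm : 0 < m) :
    min (n / u) (min (n / m) (n / u * (n / m))) = n / u * min 1 (min u n / m) := by
  rw [mul_min_of_nonneg _ _ (by positivity), mul_one]
  rcases le_total u n with h | h
  · have : n / m ≤ n / u * (n / m) :=
      le_mul_of_one_le_left (by positivity) ((one_le_div hu).2 h)
    rw [min_eq_left this, min_eq_left h]
    field_simp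
  · have : n / u * (n / m) ≤ n / m :=
      mul_le_of_le_one_left (by positivity) ((div_le_one hu).2 h)
    rw [min_eq_right this, min_eq_right h]

structure RegularFun (c d α β : ℝ) where
  g : ℝ → ℝ
  ginv : ℝ → ℝ
  strictMonoOn : StrictMonoOn g (Ici 0)
  mapsTo : MapsTo g (Ici 0) (Ici 0)
  g_one : g 1 = 1
  ginv_g : ∀ x ∈ Ici (0:ℝ), ginv (g x) = x
  ginv_mem_g_ginv : ∀ y ∈ Ici (0:ℝ), ginv y ∈ Ici (0:ℝ) ∧ g (ginv y) = y
  regular : ∀ x y : ℝ, 1 ≤ x → x ≤ y →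
    c * (y / x) ^ α ≤ g y / g x ∧ g y / g x ≤ d * (y / x) ^ β

namespace RegularFun

variable {c d α β : ℝ} (R : RegularFun c d α β)

/-- `ginv` extended by `ginv 0` to `(-∞, 0)`, which makes it monotone, hence measurable. -/
noncomputable def invFun (t : ℝ) : ℝ := R.ginv (max t 0)

lemma g_nonneg {x : ℝ} (hx : 0 ≤ x) : 0 ≤ R.g x := R.mapsTo hx

lemma monotoneOn_g : MonotoneOn R.g (Ici 0) := R.strictMonoOn.monotoneOn

lemma g_zero : R.g 0 = 0 := by
  obtain ⟨hx, hgx⟩ := R.ginv_mem_g_ginv 0 (mem_Ici.2 le_rfl)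
  rcases (mem_Ici.1 hx).eq_or_lt with h | h
  · rwa [← h] at hgx
  · have := R.strictMonoOn (mem_Ici.2 le_rfl) hx h
    linarith [R.g_nonneg le_rfl]

lemma one_le_g {x : ℝ} (hx : 1 ≤ x) : 1 ≤ R.g x := by
  simpa [R.g_one] using R.monotoneOn_g (mem_Ici.2 zero_le_one) (mem_Ici.2 (zero_le_one.trans hx)) hx

lemma g_pos {x : ℝ} (hx : 1 ≤ x) : 0 < R.g x := one_pos.trans_le (R.one_le_g hx)

lemma invFun_nonneg (t : ℝ) : 0 ≤ R.invFun t := (R.ginv_mem_g_ginv _ (le_max_right t 0)).1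

lemma g_invFun {t : ℝ} (ht : 0 ≤ t) : R.g (R.invFun t) = t := by
  simpa [invFun, max_eq_left ht] using (R.ginv_mem_g_ginv t ht).2

lemma invFun_g {x : ℝ} (hx : 0 ≤ x) : R.invFun (R.g x) = x := by
  rw [invFun, max_eq_left (R.g_nonneg hx)]; exact R.ginv_g x hx

lemma invFun_of_pos {t : ℝ} (ht : 0 < t) : R.invFun t = R.ginv t := by
  rw [invFun, max_eq_left ht.le]

lemma monotone_invFun : Monotone R.invFun := by
  intro t t' htt'
  by_contra! hlt
  have := R.strictMonoOn (R.invFun_nonneg t') (R.invFun_nonneg t) hlt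
  rw [invFun, invFun, (R.ginv_mem_g_ginv _ (le_max_right t' 0)).2,
    (R.ginv_mem_g_ginv _ (le_max_right t 0)).2] at this
  exact this.not_ge (max_le_max htt' le_rfl)

lemma invFun_le_of_le_g {t x : ℝ} (hx : 0 ≤ x) (ht : t ≤ R.g x) : R.invFun t ≤ x :=
  R.invFun_g hx ▸ R.monotone_invFun ht

lemma le_invFun_of_g_le {t x : ℝ} (hx : 0 ≤ x) (ht : R.g x ≤ t) : x ≤ R.invFun t :=
  R.invFun_g hx ▸ R.monotone_invFun ht

lemma invFun_one : R.invFun 1 = 1 := by simpa [R.g_one] using R.invFun_g zero_le_one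

lemma one_le_invFun {t : ℝ} (ht : 1 ≤ t) : 1 ≤ R.invFun t := R.invFun_one ▸ R.monotone_invFun ht

lemma invFun_le_one {t : ℝ} (ht : t ≤ 1) : R.invFun t ≤ 1 := R.invFun_one ▸ R.monotone_invFun ht

lemma invFun_pos {t : ℝ} (ht : 0 < t) : 0 < R.invFun t := by
  refine (R.invFun_nonneg t).lt_of_ne fun h => ht.ne' ?_
  rw [← R.g_invFun ht.le, ← h, R.g_zero]

lemma measurable_invFun : Measurable R.invFun := R.monotone_invFun.measurable

lemma monotone_g_comp {f : ℝ → ℝ} (hf : Monotone f) (hf₀ : ∀ s, 0 ≤ f s) :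
    Monotone fun s => R.g (f s) :=
  fun _ _ h => R.monotoneOn_g (hf₀ _) (hf₀ _) (hf h)

lemma mul_rpow_mul_g_le {x y : ℝ} (hx : 1 ≤ x) (hxy : x ≤ y) :
    c * (y / x) ^ α * R.g x ≤ R.g y :=
  (le_div_iff₀ (R.g_pos hx)).1 (R.regular x y hx hxy).1

lemma g_le_mul_rpow_mul {x y : ℝ} (hx : 1 ≤ x) (hxy : x ≤ y) :
    R.g y ≤ d * (y / x) ^ β * R.g x :=
  (div_le_iff₀ (R.g_pos hx)).1 (R.regular x y hx hxy).2

lemma le_rpow_of_g_le (hc : 0 < c) (hα : 0 < α) {x t : ℝ} (hx : 1 ≤ x)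
    (hxt : R.g x ≤ t) : x ≤ (t / c) ^ (1 / α) := by
  have h := R.mul_rpow_mul_g_le le_rfl hx
  rw [div_one, R.g_one, mul_one] at h
  have hxα : x ^ α ≤ t / c := by rw [le_div_iff₀ hc]; linarith
  calc x = (x ^ α) ^ (1 / α) := by
        rw [← Real.rpow_mul (by linarith), mul_one_div_cancel hα.ne', Real.rpow_one]
    _ ≤ (t / c) ^ (1 / α) := by gcongr

lemma two_mul_g_le_g_growthConst_mul (hc : 0 < c) (hα : 0 < α) {x : ℝ} (hx : 1 ≤ x) :
    2 * R.g x ≤ R.g (growthConst c α * x) := by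
  set K := growthConst c α
  have hK : 2 ≤ K := two_le_growthConst c α
  have hKα : 2 / c ≤ K ^ α := by
    calc 2 / c = ((2 / c) ^ (1 / α)) ^ α := by
          rw [← Real.rpow_mul (by positivity), one_div_mul_cancel hα.ne', Real.rpow_one]
      _ ≤ K ^ α := by gcongr; exact le_max_right _ _
  have h := R.mul_rpow_mul_g_le hx (le_mul_of_one_le_left (by linarith) (by linarith) :
    x ≤ K * x)
  rw [mul_div_cancel_right₀ _ (by positivity : x ≠ 0)] at h
  calc 2 * R.g x ≤ c * K ^ α * R.g x := by
        gcongr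
        · exact R.g_nonneg (by linarith)
        · rwa [← div_le_iff₀' hc]
    _ ≤ _ := h

section Tail

variable (hd : 0 < d) (hβ₀ : 0 < β) (hβ : β < 1)
include hd hβ₀

lemma one_div_invFun_le_mul_rpow {x t : ℝ} (hx : 1 ≤ x) (ht : R.g x < t) :
    1 / R.invFun t ≤ (d * R.g x) ^ (1 / β) / x * t ^ (-(1 / β)) := by
  have hgx := R.g_pos hx
  have ht₀ : 0 < t := hgx.trans ht
  have hxu : x ≤ R.invFun t := R.le_invFun_of_g_le (by linarith) ht.le
  have hu : 0 < R.invFun t := by linarith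
  have h := R.g_le_mul_rpow_mul hx hxu
  rw [R.g_invFun ht₀.le] at h
  have hβt : t / (d * R.g x) ≤ (R.invFun t / x) ^ β := by
    rw [div_le_iff₀ (by positivity)]; linarith
  have key : x * (t / (d * R.g x)) ^ (1 / β) ≤ R.invFun t := by
    rw [← le_div_iff₀' (by linarith)]
    calc (t / (d * R.g x)) ^ (1 / β) ≤ ((R.invFun t / x) ^ β) ^ (1 / β) := by gcongr
      _ = R.invFun t / x := by
        rw [← Real.rpow_mul (by positivity), mul_one_div_cancel hβ₀.ne', Real.rpow_one]
  calc 1 / R.invFun t ≤ 1 / (x * (t / (d * R.g x)) ^ (1 / β)) :=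
        one_div_le_one_div_of_le (by positivity) key
    _ = _ := by
      rw [Real.div_rpow ht₀.le (by positivity), Real.rpow_neg ht₀.le]
      have : 0 < t ^ (1 / β) := by positivity
      field_simp

include hβ

lemma integrableOn_one_div_invFun_Ioi {x : ℝ} (hx : 1 ≤ x) :
    IntegrableOn (fun t => 1 / R.invFun t) (Ioi (R.g x)) := by
  have hexp : -(1 / β) < -1 := by
    have : 1 < 1 / β := by rw [lt_div_iff₀ hβ₀]; linarith
    linarith
  refine Integrable.mono' ((integrableOn_Ioi_rpow_of_lt hexp (R.g_pos hx)).const_mul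
    ((d * R.g x) ^ (1 / β) / x)) (measurable_const.div R.measurable_invFun).aestronglyMeasurable
    ((ae_restrict_iff' measurableSet_Ioi).2 (.of_forall fun t ht => ?_))
  rw [Real.norm_of_nonneg (one_div_nonneg.2 (R.invFun_nonneg t))]
  exact R.one_div_invFun_le_mul_rpow hd hβ₀ hx ht

lemma integral_one_div_invFun_Ioi_le {x : ℝ} (hx : 1 ≤ x) :
    ∫ t in Ioi (R.g x), 1 / R.invFun t ≤ tailConst d β * (R.g x / x) := by
  have hβ' : 1 < 1 / β := by rw [lt_div_iff₀ hβ₀]; linarith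
  have hgx := R.g_pos hx
  have hexp : -(1 / β) < -1 := by linarith
  calc ∫ t in Ioi (R.g x), 1 / R.invFun t
      ≤ ∫ t in Ioi (R.g x), (d * R.g x) ^ (1 / β) / x * t ^ (-(1 / β)) :=
        setIntegral_mono_on (R.integrableOn_one_div_invFun_Ioi hd hβ₀ hβ hx)
          ((integrableOn_Ioi_rpow_of_lt hexp hgx).const_mul _) measurableSet_Ioi
          fun t ht => R.one_div_invFun_le_mul_rpow hd hβ₀ hx ht
    _ = (d * R.g x) ^ (1 / β) / x * (-(R.g x) ^ (-(1 / β) + 1) / (-(1 / β) + 1)) := by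
        rw [integral_const_mul, integral_Ioi_rpow_of_lt hexp hgx]
    _ = tailConst d β * (R.g x / x) := by
        have hsplit : R.g x = R.g x ^ (1 / β) * R.g x ^ (-(1 / β - 1)) := by
          rw [← Real.rpow_add hgx]; norm_num
        have : 1 / β - 1 ≠ 0 := by linarith
        rw [Real.mul_rpow hd.le hgx.le, tailConst, show -(1 / β) + 1 = -(1 / β - 1) by ring,
          neg_div_neg_eq]
        conv_rhs => rw [hsplit]
        field_simp

lemma div_growthConst_mul_le_integral_one_div_invFun_Ioi (hc : 0 < c) (hα : 0 < α) {x : ℝ}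
    (hx : 1 ≤ x) :
    R.g x / (growthConst c α * x) ≤ ∫ t in Ioi (R.g x), 1 / R.invFun t := by
  set K := growthConst c α
  have hK : 2 ≤ K := two_le_growthConst c α
  have hgrow : 2 * R.g x ≤ R.g (K * x) := R.two_mul_g_le_g_growthConst_mul hc hα hx
  have hinv : ∀ t ∈ Ioc (R.g x) (R.g (K * x)), 1 / (K * x) ≤ 1 / R.invFun t := fun t ht =>
    one_div_le_one_div_of_le (R.invFun_pos ((R.g_pos hx).trans ht.1))
      (R.invFun_le_of_le_g (by positivity) ht.2)
  have hint := R.integrableOn_one_div_invFun_Ioi hd hβ₀ hβ hx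
  have hgx := R.g_pos hx
  calc R.g x / (K * x) ≤ (R.g (K * x) - R.g x) * (1 / (K * x)) := by
        rw [div_eq_mul_one_div]; gcongr; linarith
    _ = ∫ t in Ioc (R.g x) (R.g (K * x)), 1 / (K * x) := by
        rw [setIntegral_const, Real.volume_real_Ioc_of_le (by linarith), smul_eq_mul]
    _ ≤ ∫ t in Ioc (R.g x) (R.g (K * x)), 1 / R.invFun t :=
        setIntegral_mono_on (integrableOn_const measure_Ioc_lt_top.ne)
          (hint.mono_set Ioc_subset_Ioi_self) measurableSet_Ioc hinv
    _ ≤ ∫ t in Ioi (R.g x), 1 / R.invFun t :=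
        setIntegral_mono_set hint (.of_forall fun t => one_div_nonneg.2 (R.invFun_nonneg t))
          Ioc_subset_Ioi_self.eventuallyLE

end Tail

noncomputable def weight (n s : ℝ) : ℝ := n / max 1 (R.invFun s)

lemma mul_min_one_one_div_ginv (n : ℝ) {s : ℝ} (hs : 0 < s) :
    n * min 1 (1 / R.ginv s) = R.weight n s := by
  have hpos := R.invFun_pos hs
  rw [weight, ← R.invFun_of_pos hs, div_eq_mul_one_div n]
  congr 1
  rcases le_total (R.invFun s) 1 with h | h
  · rw [max_eq_left h, min_eq_left (by rw [le_div_iff₀ hpos]; linarith), div_one]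
  · rw [max_eq_right h, min_eq_right (by rw [div_le_one hpos]; linarith)]

lemma weight_nonneg {n : ℝ} (hn : 0 ≤ n) (s : ℝ) : 0 ≤ R.weight n s :=
  div_nonneg hn (zero_le_one.trans (le_max_left _ _))

lemma weight_le {n : ℝ} (hn : 0 ≤ n) (s : ℝ) : R.weight n s ≤ n :=
  div_le_self hn (le_max_left _ _)

lemma measurable_weight (n : ℝ) : Measurable (R.weight n) :=
  measurable_const.div (measurable_const.max R.measurable_invFun)

lemma weight_of_one_le_invFun {n s : ℝ} (hs : 1 ≤ R.invFun s) :
    R.weight n s = n * (1 / R.invFun s) := by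
  rw [weight, max_eq_right hs, mul_one_div]

lemma integrableOn_weight (hd : 0 < d) (hβ₀ : 0 < β) (hβ : β < 1) {n : ℝ} (hn : 0 ≤ n) :
    IntegrableOn (R.weight n) (Ioi 0) := by
  rw [← Ioc_union_Ioi_eq_Ioi zero_le_one]
  refine IntegrableOn.union ?_ ?_
  · refine Measure.integrableOn_of_bounded (M := n) measure_Ioc_lt_top.ne
      (R.measurable_weight n).aestronglyMeasurable (.of_forall fun s => ?_)
    rw [Real.norm_of_nonneg (R.weight_nonneg hn s)]
    exact R.weight_le hn s
  · have h := ((R.integrableOn_one_div_invFun_Ioi hd hβ₀ hβ le_rfl).const_mul n)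
    rw [R.g_one] at h
    exact IntegrableOn.congr_fun h (fun s hs =>
      (R.weight_of_one_le_invFun (R.one_le_invFun (le_of_lt hs))).symm) measurableSet_Ioi

lemma integral_min_one_div_max_invFun_mem_Icc (hd : 0 < d) (hβ₀ : 0 < β) (hβ : β < 1)
    {v : ℝ} (hv : 1 ≤ v) :
    ∫ t in Ioi 0, min 1 (v / max 1 (R.invFun t)) ∈
      Icc (R.g v) ((1 + tailConst d β) * R.g v) := by
  set X := R.g v
  have hX : 1 ≤ X := R.one_le_g hv
  have hhead : EqOn (fun t => min 1 (v / max 1 (R.invFun t))) 1 (Ioc 0 X) := fun t ht => by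
    have : max 1 (R.invFun t) ≤ v := max_le hv (R.invFun_le_of_le_g (by linarith) ht.2)
    exact min_eq_left ((one_le_div (by positivity)).2 this)
  have htail : EqOn (fun t => min 1 (v / max 1 (R.invFun t))) (fun t => v * (1 / R.invFun t))
      (Ioi X) := fun t ht => by
    have hvt : v ≤ R.invFun t := R.le_invFun_of_g_le (by linarith) ht.le
    dsimp only
    rw [max_eq_right (hv.trans hvt), min_eq_right ((div_le_one (by linarith)).2 hvt),
      mul_one_div]
  have hint : IntegrableOn (fun t => min 1 (v / max 1 (R.invFun t))) (Ioi 0) := by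
    rw [← Ioc_union_Ioi_eq_Ioi (by linarith : (0:ℝ) ≤ X)]
    exact (IntegrableOn.congr_fun (integrableOn_const measure_Ioc_lt_top.ne) hhead.symm
      measurableSet_Ioc).union (IntegrableOn.congr_fun
      ((R.integrableOn_one_div_invFun_Ioi hd hβ₀ hβ hv).const_mul v) htail.symm
      measurableSet_Ioi)
  rw [integral_Ioi_eq_integral_Ioc_add_integral_Ioi (by linarith) hint,
    setIntegral_congr_fun measurableSet_Ioc hhead, setIntegral_congr_fun measurableSet_Ioi htail,
    integral_const_mul]
  simp only [Pi.one_apply, setIntegral_const,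
    Real.volume_real_Ioc_of_le (by linarith : (0:ℝ) ≤ X), sub_zero, smul_eq_mul, mul_one]
  have htail_nonneg : 0 ≤ ∫ t in Ioi X, 1 / R.invFun t :=
    setIntegral_nonneg measurableSet_Ioi fun t _ => one_div_nonneg.2 (R.invFun_nonneg t)
  refine ⟨by nlinarith, ?_⟩
  calc X + v * ∫ t in Ioi X, 1 / R.invFun t ≤ X + v * (tailConst d β * (X / v)) := by
        gcongr; exact R.integral_one_div_invFun_Ioi_le hd hβ₀ hβ hv
    _ = (1 + tailConst d β) * X := by field_simp

variable (R' : RegularFun c d α β)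

/-- The integrand `min (n w₁(s), n w₂(t), n² w₁(s) w₂(t))`. -/
noncomputable def minWeight (n s t : ℝ) : ℝ :=
  min (R.weight n s) (min (R'.weight n t) (R.weight n s * R'.weight n t))

lemma minWeight_comm (n s t : ℝ) : R.minWeight R' n s t = R'.minWeight R n t s := by
  rw [minWeight, minWeight, mul_comm (R.weight n s), ← min_assoc, min_comm (R.weight n s),
    min_assoc]

noncomputable def sliceMass (n s : ℝ) : ℝ :=
  R.weight n s * R'.g (min (max 1 (R.invFun s)) n)

noncomputable def crossIntegral (n : ℝ) : ℝ :=
  ∫ s in Ioc 1 (R.g n), R'.g (R.invFun s) / R.invFun s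

lemma integral_minWeight_mem_Icc (hd : 0 < d) (hβ₀ : 0 < β) (hβ : β < 1) {n : ℝ}
    (hn : 1 ≤ n) (s : ℝ) :
    ∫ t in Ioi 0, R.minWeight R' n s t ∈
      Icc (R.sliceMass R' n s) ((1 + tailConst d β) * R.sliceMass R' n s) := by
  set v := min (max 1 (R.invFun s)) n
  have hv : 1 ≤ v := le_min (le_max_left _ _) hn
  have heq : ∫ t in Ioi 0, R.minWeight R' n s t =
      R.weight n s * ∫ t in Ioi 0, min 1 (v / max 1 (R'.invFun t)) := by
    rw [← integral_const_mul]
    congr 1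
    funext t
    exact min_div_min_div_mul_div (by linarith) (by positivity) (by positivity)
  obtain ⟨hlo, hhi⟩ := R'.integral_min_one_div_max_invFun_mem_Icc hd hβ₀ hβ hv
  have ha := R.weight_nonneg (by linarith : (0:ℝ) ≤ n) s
  rw [heq, sliceMass]
  refine ⟨by gcongr, ?_⟩
  calc R.weight n s * ∫ t in Ioi 0, min 1 (v / max 1 (R'.invFun t))
      ≤ R.weight n s * ((1 + tailConst d β) * R'.g v) := by gcongr
    _ = _ := by ring

lemma intervalIntegral_eq_crossIntegral {n : ℝ} (hn : 1 ≤ n) :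
    ∫ s in (1:ℝ)..R.g n, R'.g (R.ginv s) / R.ginv s = R.crossIntegral R' n := by
  rw [intervalIntegral.integral_of_le (R.one_le_g hn), crossIntegral]
  exact setIntegral_congr_fun measurableSet_Ioc fun s hs => by
    rw [R.invFun_of_pos (zero_lt_one.trans hs.1)]

lemma crossIntegral_nonneg (n : ℝ) : 0 ≤ R.crossIntegral R' n :=
  setIntegral_nonneg measurableSet_Ioc fun s _ =>
    div_nonneg (R'.g_nonneg (R.invFun_nonneg s)) (R.invFun_nonneg s)

lemma integrableOn_crossIntegrand (X : ℝ) :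
    IntegrableOn (fun s => R'.g (R.invFun s) / R.invFun s) (Ioc 1 X) := by
  refine Measure.integrableOn_of_bounded (M := R'.g (R.invFun X)) measure_Ioc_lt_top.ne
    (((R'.monotone_g_comp R.monotone_invFun R.invFun_nonneg).measurable.div
      R.measurable_invFun).aestronglyMeasurable)
    ((ae_restrict_iff' measurableSet_Ioc).2 (.of_forall fun s hs => ?_))
  have h1 : 1 ≤ R.invFun s := R.one_le_invFun hs.1.le
  have hg : 0 ≤ R'.g (R.invFun s) := R'.g_nonneg (R.invFun_nonneg s)
  rw [Real.norm_of_nonneg (div_nonneg hg (R.invFun_nonneg s))]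
  calc R'.g (R.invFun s) / R.invFun s ≤ R'.g (R.invFun s) := div_le_self hg h1
    _ ≤ R'.g (R.invFun X) :=
        R'.monotoneOn_g (R.invFun_nonneg s) (R.invFun_nonneg X) (R.monotone_invFun hs.2)

variable {n : ℝ} (hn : 1 ≤ n)
include hn

lemma sliceMass_of_le_one {s : ℝ} (hs : s ≤ 1) : R.sliceMass R' n s = n := by
  rw [sliceMass, weight, max_eq_left (R.invFun_le_one hs), min_eq_left hn, R'.g_one, div_one,
    mul_one]

lemma sliceMass_of_le_g {s : ℝ} (hs : 1 ≤ s) (hsn : s ≤ R.g n) :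
    R.sliceMass R' n s = n * (R'.g (R.invFun s) / R.invFun s) := by
  rw [sliceMass, weight, max_eq_right (R.one_le_invFun hs),
    min_eq_left (R.invFun_le_of_le_g (by linarith) hsn)]
  ring

lemma sliceMass_of_g_le {s : ℝ} (hs : R.g n ≤ s) :
    R.sliceMass R' n s = n * R'.g n * (1 / R.invFun s) := by
  have hns : n ≤ R.invFun s := R.le_invFun_of_g_le (by linarith) hs
  rw [sliceMass, weight, max_eq_right (hn.trans hns), min_eq_right hns]
  ring

lemma le_growthConst_mul (hc : 0 < c) (hα : 0 < α) :
    n ≤ growthConst c α * (R.g n * R'.g n + n * R.crossIntegral R' n) := by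
  set K := growthConst c α
  have hK : 2 ≤ K := two_le_growthConst c α
  have hcross := R.crossIntegral_nonneg R' n
  have hgg : 1 ≤ R.g n * R'.g n := one_le_mul_of_one_le_of_one_le (R.one_le_g hn) (R'.one_le_g hn)
  rcases lt_or_ge (R.g n) 2 with h2 | h2
  · have : n ≤ K := (R.le_rpow_of_g_le hc hα hn h2.le).trans (le_max_right _ _)
    nlinarith [mul_nonneg (zero_le_one.trans hn) hcross]
  · have hinv2 : R.invFun 2 ≤ K := (R.le_rpow_of_g_le hc hα (R.one_le_invFun one_le_two)
      (R.g_invFun zero_le_two).le).trans (le_max_right _ _)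
    have hlow : ∀ s ∈ Ioc (1:ℝ) 2, 1 / K ≤ R'.g (R.invFun s) / R.invFun s := fun s hs =>
      div_le_div₀ (R'.g_nonneg (R.invFun_nonneg s)) (R'.one_le_g (R.one_le_invFun hs.1.le))
        (zero_lt_one.trans_le (R.one_le_invFun hs.1.le)) ((R.monotone_invFun hs.2).trans hinv2)
    have hint := R.integrableOn_crossIntegrand R' (R.g n)
    have hcross_ge : 1 / K ≤ R.crossIntegral R' n :=
      calc 1 / K = ∫ _ in Ioc (1:ℝ) 2, 1 / K := by
            rw [setIntegral_const, Real.volume_real_Ioc_of_le one_le_two]; norm_num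
        _ ≤ ∫ s in Ioc (1:ℝ) 2, R'.g (R.invFun s) / R.invFun s :=
            setIntegral_mono_on (integrableOn_const measure_Ioc_lt_top.ne)
              (hint.mono_set (Ioc_subset_Ioc_right h2)) measurableSet_Ioc hlow
        _ ≤ R.crossIntegral R' n :=
            setIntegral_mono_set hint (.of_forall fun s =>
              div_nonneg (R'.g_nonneg (R.invFun_nonneg s)) (R.invFun_nonneg s))
              (Ioc_subset_Ioc_right h2).eventuallyLE
    have hK0 : 0 < K := by linarith
    calc n = K * (n * (1 / K)) := by field_simp
      _ ≤ K * (R.g n * R'.g n + n * R.crossIntegral R' n) := by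
          gcongr; nlinarith [mul_le_mul_of_nonneg_left hcross_ge (zero_le_one.trans hn)]

variable (hd : 0 < d) (hβ₀ : 0 < β) (hβ : β < 1)
include hd hβ₀ hβ

lemma integrableOn_sliceMass : IntegrableOn (R.sliceMass R' n) (Ioi 0) := by
  have hv : ∀ s, 1 ≤ min (max 1 (R.invFun s)) n := fun s => le_min (le_max_left _ _) hn
  refine Integrable.mono' ((R.integrableOn_weight hd hβ₀ hβ (zero_le_one.trans hn)).const_mul
    (R'.g n)) ((R.measurable_weight n).mul (R'.monotone_g_comp
      ((monotone_const.max R.monotone_invFun).min monotone_const)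
      fun s => zero_le_one.trans (hv s)).measurable).aestronglyMeasurable
    (.of_forall fun s => ?_)
  have hw := R.weight_nonneg (by linarith : (0:ℝ) ≤ n) s
  have hg : 0 ≤ R'.g (min (max 1 (R.invFun s)) n) := R'.g_nonneg (zero_le_one.trans (hv s))
  rw [sliceMass, Real.norm_of_nonneg (by positivity), mul_comm (R'.g n)]
  exact mul_le_mul_of_nonneg_left (R'.monotoneOn_g (zero_le_one.trans (hv s))
    (zero_le_one.trans hn) (min_le_right _ _)) hw

lemma integral_sliceMass_mem_Icc (hc : 0 < c) (hα : 0 < α) :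
    ∫ s in Ioi 0, R.sliceMass R' n s ∈
      Icc (n + n * R.crossIntegral R' n + R.g n * R'.g n / growthConst c α)
        (n + n * R.crossIntegral R' n + tailConst d β * (R.g n * R'.g n)) := by
  have hgn : 1 ≤ R.g n := R.one_le_g hn
  have hint := R.integrableOn_sliceMass R' hn hd hβ₀ hβ
  have hhead : ∫ s in Ioc 0 1, R.sliceMass R' n s = n := by
    rw [setIntegral_congr_fun measurableSet_Ioc fun s hs => R.sliceMass_of_le_one R' hn hs.2,
      setIntegral_const, Real.volume_real_Ioc_of_le zero_le_one]
    simp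
  have hmid : ∫ s in Ioc 1 (R.g n), R.sliceMass R' n s = n * R.crossIntegral R' n := by
    rw [setIntegral_congr_fun measurableSet_Ioc fun s hs =>
      R.sliceMass_of_le_g R' hn hs.1.le hs.2, integral_const_mul, crossIntegral]
  have htail : ∫ s in Ioi (R.g n), R.sliceMass R' n s =
      n * R'.g n * ∫ s in Ioi (R.g n), 1 / R.invFun s := by
    rw [setIntegral_congr_fun measurableSet_Ioi fun s hs => R.sliceMass_of_g_le R' hn hs.le,
      integral_const_mul]
  rw [integral_Ioi_eq_integral_Ioc_add_integral_Ioi zero_le_one hint,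
    integral_Ioi_eq_integral_Ioc_add_integral_Ioi hgn (hint.mono_set (Ioi_subset_Ioi zero_le_one)),
    hhead, hmid, htail, ← add_assoc]
  have hpos : 0 ≤ n * R'.g n := mul_nonneg (by linarith) (R'.g_nonneg (by linarith))
  constructor
  · have h := mul_le_mul_of_nonneg_left
      (R.div_growthConst_mul_le_integral_one_div_invFun_Ioi hd hβ₀ hβ hc hα hn) hpos
    have : n * R'.g n * (R.g n / (growthConst c α * n)) = R.g n * R'.g n / growthConst c α := by
      field_simp
    linarith
  · have h := mul_le_mul_of_nonneg_left (R.integral_one_div_invFun_Ioi_le hd hβ₀ hβ hn) hpos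
    have : n * R'.g n * (tailConst d β * (R.g n / n)) = tailConst d β * (R.g n * R'.g n) := by
      field_simp
    linarith

lemma integral_integral_minWeight_mem_Icc_crossIntegral (hc : 0 < c) (hα : 0 < α)
    (hJ : IntegrableOn (fun s => ∫ t in Ioi 0, R.minWeight R' n s t) (Ioi 0)) :
    ∫ s in Ioi 0, ∫ t in Ioi 0, R.minWeight R' n s t ∈
      Icc ((R.g n * R'.g n + n + n * R.crossIntegral R' n) / growthConst c α)
        ((1 + tailConst d β) ^ 2 * (R.g n * R'.g n + n + n * R.crossIntegral R' n)) := by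
  have hK : 2 ≤ growthConst c α := two_le_growthConst c α
  have hC : 0 < tailConst d β := tailConst_pos hd hβ₀ hβ
  have hslice := R.integral_minWeight_mem_Icc R' hd hβ₀ hβ hn
  have hint := R.integrableOn_sliceMass R' hn hd hβ₀ hβ
  obtain ⟨hlo, hhi⟩ := R.integral_sliceMass_mem_Icc R' hn hd hβ₀ hβ hc hα
  have hgg : 0 ≤ R.g n * R'.g n := mul_nonneg (R.g_nonneg (by linarith)) (R'.g_nonneg (by linarith))
  have hrest : 0 ≤ n + n * R.crossIntegral R' n :=
    add_nonneg (by linarith) (mul_nonneg (by linarith) (R.crossIntegral_nonneg R' n))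
  constructor
  · calc (R.g n * R'.g n + n + n * R.crossIntegral R' n) / growthConst c α
        ≤ n + n * R.crossIntegral R' n + R.g n * R'.g n / growthConst c α := by
          rw [add_assoc, add_div, add_comm]
          gcongr
          exact div_le_self hrest (by linarith)
      _ ≤ ∫ s in Ioi 0, R.sliceMass R' n s := hlo
      _ ≤ _ := setIntegral_mono_on hint hJ measurableSet_Ioi fun s _ => (hslice s).1
  · calc _ ≤ ∫ s in Ioi 0, (1 + tailConst d β) * R.sliceMass R' n s :=
          setIntegral_mono_on hJ (hint.const_mul _) measurableSet_Ioi fun s _ => (hslice s).2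
      _ = (1 + tailConst d β) * ∫ s in Ioi 0, R.sliceMass R' n s := integral_const_mul _ _
      _ ≤ (1 + tailConst d β) *
            (n + n * R.crossIntegral R' n + tailConst d β * (R.g n * R'.g n)) := by
          gcongr
      _ ≤ _ := by nlinarith [mul_nonneg hC.le hrest, mul_nonneg hC.le hgg,
          mul_nonneg (mul_nonneg hC.le hC.le) hrest]

lemma integrable_minWeight_prod :
    Integrable (Function.uncurry (R.minWeight R' n))
      ((volume.restrict (Ioi 0)).prod (volume.restrict (Ioi 0))) := by
  have hn₀ : (0:ℝ) ≤ n := by linarith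
  have hw := fun s => R.weight_nonneg hn₀ s
  have hw' := fun t => R'.weight_nonneg hn₀ t
  refine Integrable.mono' ((R.integrableOn_weight hd hβ₀ hβ hn₀).mul_prod
    (R'.integrableOn_weight hd hβ₀ hβ hn₀)) ?_ (.of_forall fun p => ?_)
  · exact (((R.measurable_weight n).comp measurable_fst).min
      (((R'.measurable_weight n).comp measurable_snd).min
        (((R.measurable_weight n).comp measurable_fst).mul
          ((R'.measurable_weight n).comp measurable_snd)))).aestronglyMeasurable
  · simp only [Function.uncurry, minWeight]
    rw [Real.norm_of_nonneg (le_min (hw _) (le_min (hw' _) (mul_nonneg (hw _) (hw' _))))]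
    exact (min_le_right _ _).trans (min_le_right _ _)

theorem integral_integral_minWeight_mem_Icc (hc : 0 < c) (hα : 0 < α) :
    ∫ s in Ioi 0, ∫ t in Ioi 0, R.minWeight R' n s t ∈
      Icc ((R.g n * R'.g n + n * R.crossIntegral R' n + n * R'.crossIntegral R n) /
          (2 * growthConst c α))
        ((1 + tailConst d β) ^ 2 * (1 + growthConst c α) *
          (R.g n * R'.g n + n * R.crossIntegral R' n + n * R'.crossIntegral R n)) := by
  have hprod := R.integrable_minWeight_prod R' hn hd hβ₀ hβ
  have hprod' := R'.integrable_minWeight_prod R hn hd hβ₀ hβ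
  have hswap : ∫ s in Ioi 0, ∫ t in Ioi 0, R.minWeight R' n s t =
      ∫ t in Ioi 0, ∫ s in Ioi 0, R'.minWeight R n t s := by
    simp_rw [integral_integral_swap hprod, R.minWeight_comm R']
  obtain ⟨hlo, hhi⟩ := R.integral_integral_minWeight_mem_Icc_crossIntegral R' hn hd hβ₀ hβ hc hα
    hprod.integral_prod_left
  obtain ⟨hlo', -⟩ := R'.integral_integral_minWeight_mem_Icc_crossIntegral R hn hd hβ₀ hβ hc hα
    hprod'.integral_prod_left
  rw [← hswap, mul_comm (R'.g n)] at hlo'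
  have hnS := R.le_growthConst_mul R' hn hc hα
  have hK : 2 ≤ growthConst c α := two_le_growthConst c α
  have hC : 0 < tailConst d β := tailConst_pos hd hβ₀ hβ
  have hgg : 0 ≤ R.g n * R'.g n := mul_nonneg (R.g_nonneg (by linarith)) (R'.g_nonneg (by linarith))
  have ht₁ := mul_nonneg (by linarith : (0:ℝ) ≤ n) (R.crossIntegral_nonneg R' n)
  have ht₂ := mul_nonneg (by linarith : (0:ℝ) ≤ n) (R'.crossIntegral_nonneg R n)
  rw [div_le_iff₀ (by linarith)] at hlo hlo'
  constructor
  · rw [div_le_iff₀ (by linarith)]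
    linarith
  · refine hhi.trans ?_
    rw [mul_assoc]
    gcongr
    nlinarith

end RegularFun

/-- The two-dimensional integral estimate (4.8)-(4.9) from the proof of
Theorem 0.4: for increasing continuous bijections `g₁, g₂` of `[0,∞)` with
`gᵢ(1) = 1` satisfying the two-sided regularity condition, and
`wᵢ(t) = min(1, 1/gᵢ⁻¹(t))`, the integral
`∫∫ min(n w₁(s), n w₂(t), n² w₁(s) w₂(t)) ds dt` is comparable to
`S_n = g₁(n)g₂(n) + n∫_1^{g₁(n)} g₂(g₁⁻¹(s))/g₁⁻¹(s) ds
     + n∫_1^{g₂(n)} g₁(g₂⁻¹(t))/g₂⁻¹(t) dt`,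
with constants depending only on the regularity constants. -/
theorem stmt_19 (c d α β : ℝ)
    (hc : 0 < c) (hd : 0 < d) (hα : 0 < α) (hαβ : α ≤ β) (hβ : β < 1) :
    ∃ C₁ C₂ : ℝ, 0 < C₁ ∧ 0 < C₂ ∧
      ∀ g₁ g₂ ginv₁ ginv₂ w₁ w₂ : ℝ → ℝ,
        StrictMonoOn g₁ (Ici 0) → ContinuousOn g₁ (Ici 0) →
        BijOn g₁ (Ici 0) (Ici 0) → g₁ 1 = 1 →
        StrictMonoOn g₂ (Ici 0) → ContinuousOn g₂ (Ici 0) →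
        BijOn g₂ (Ici 0) (Ici 0) → g₂ 1 = 1 →
        (∀ x ∈ Ici (0:ℝ), ginv₁ (g₁ x) = x) →
        (∀ y ∈ Ici (0:ℝ), ginv₁ y ∈ Ici (0:ℝ) ∧ g₁ (ginv₁ y) = y) →
        (∀ x ∈ Ici (0:ℝ), ginv₂ (g₂ x) = x) →
        (∀ y ∈ Ici (0:ℝ), ginv₂ y ∈ Ici (0:ℝ) ∧ g₂ (ginv₂ y) = y) →
        (∀ x y : ℝ, 1 ≤ x → x ≤ y →
          c * (y / x) ^ α ≤ g₁ y / g₁ x ∧ g₁ y / g₁ x ≤ d * (y / x) ^ β) →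
        (∀ x y : ℝ, 1 ≤ x → x ≤ y →
          c * (y / x) ^ α ≤ g₂ y / g₂ x ∧ g₂ y / g₂ x ≤ d * (y / x) ^ β) →
        (∀ t : ℝ, 0 < t → w₁ t = min 1 (1 / ginv₁ t)) →
        (∀ t : ℝ, 0 < t → w₂ t = min 1 (1 / ginv₂ t)) →
        ∀ n : ℕ, 1 ≤ n → ∀ I S : ℝ,
          I = (∫ s in Ioi (0:ℝ), ∫ t in Ioi (0:ℝ),
                min ((n : ℝ) * w₁ s) (min ((n : ℝ) * w₂ t)
                  ((n : ℝ) ^ 2 * (w₁ s * w₂ t)))) →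
          S = g₁ (n : ℝ) * g₂ (n : ℝ)
              + (n : ℝ) * (∫ s in (1:ℝ)..(g₁ (n : ℝ)), g₂ (ginv₁ s) / ginv₁ s)
              + (n : ℝ) * (∫ t in (1:ℝ)..(g₂ (n : ℝ)), g₁ (ginv₂ t) / ginv₂ t) →
          C₁ * S ≤ I ∧ I ≤ C₂ * S := by
  have hβ₀ : 0 < β := hα.trans_le hαβ
  have hK := growthConst_pos c α
  have hC := tailConst_pos hd hβ₀ hβ
  refine ⟨1 / (2 * growthConst c α), (1 + tailConst d β) ^ 2 * (1 + growthConst c α),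
    by positivity, by positivity, ?_⟩
  intro g₁ g₂ ginv₁ ginv₂ w₁ w₂ mono₁ _ bij₁ one₁ mono₂ _ bij₂ one₂ linv₁ rinv₁ linv₂ rinv₂
    reg₁ reg₂ hw₁ hw₂ n hn I S hI hS
  let R₁ : RegularFun c d α β := ⟨g₁, ginv₁, mono₁, bij₁.mapsTo, one₁, linv₁, rinv₁, reg₁⟩
  let R₂ : RegularFun c d α β := ⟨g₂, ginv₂, mono₂, bij₂.mapsTo, one₂, linv₂, rinv₂, reg₂⟩
  have hn' : (1:ℝ) ≤ n := by exact_mod_cast hn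
  have hI' : I = ∫ s in Ioi 0, ∫ t in Ioi 0, R₁.minWeight R₂ n s t := by
    refine hI.trans (setIntegral_congr_fun measurableSet_Ioi fun s hs =>
      setIntegral_congr_fun measurableSet_Ioi fun t ht => ?_)
    have e₁ : (n:ℝ) * w₁ s = R₁.weight n s := (hw₁ s hs).symm ▸ R₁.mul_min_one_one_div_ginv n hs
    have e₂ : (n:ℝ) * w₂ t = R₂.weight n t := (hw₂ t ht).symm ▸ R₂.mul_min_one_one_div_ginv n ht
    rw [RegularFun.minWeight, ← e₁, ← e₂]
    congr 2
    ring
  have hS' : S = R₁.g n * R₂.g n + n * R₁.crossIntegral R₂ n + n * R₂.crossIntegral R₁ n := by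
    rw [hS, ← R₁.intervalIntegral_eq_crossIntegral R₂ hn',
      ← R₂.intervalIntegral_eq_crossIntegral R₁ hn']
  obtain ⟨hlo, hhi⟩ := R₁.integral_integral_minWeight_mem_Icc R₂ hn' hd hβ₀ hβ hc hα
  rw [hI', hS', one_div_mul_eq_div]
  exact ⟨hlo, hhi⟩
end
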